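/- arXiv:2404.06585 — 4 statements merged into one kernel-verified Lean document; each statement's English description precedes it below -/
import Mathlib

section
/- Let k ≥ 2, let ι_k = 12⋯k ∈ S_k be the increasing pattern, and let 21 = (2,1) ∈ S_2. Then the conditional expectation of the number of further draws needed to see ι_k after the first occurrence of 21, given that 21 occurs before ι_k, satisfies (1/μ(T_{21} < T_{ι_k})) ∫_{{T_{21} < T_{ι_k}}} (T_{ι_k} − T_{21}) dμ = (k!/(k!−1))·(Σ_{n≥0} α_n(ι_k)/n! − Σ_{i=0}^{k−1} 1/i!). -/
open MeasureTheory ProbabilityTheory Real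
open scoped ENNReal NNReal

noncomputable section

/-- The window of `x` of length `k` starting at position `i` (0-indexed) is a consecutive
occurrence of the pattern `σ`, i.e., its standardization is `σ` (relative orders agree). -/
def OccursAt {k : ℕ} (σ : Equiv.Perm (Fin k)) (x : ℕ → ℝ) (i : ℕ) : Prop :=
  ∀ a b : Fin k, x (i + a) < x (i + b) ↔ σ a < σ b

/-- `hitTime σ x` is the number of draws until the first consecutive occurrence of `σ`,
i.e., the least `j ≥ k` such that the window `x_{j-k}, …, x_{j-1}` is an occurrence of `σ`. -/
def hitTime {k : ℕ} (σ : Equiv.Perm (Fin k)) (x : ℕ → ℝ) : ℕ :=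
  sInf {j | k ≤ j ∧ OccursAt σ x (j - k)}

/-- `μ` is the law of an i.i.d. sequence of uniform random variables on `[0,1]`:
a probability measure on `ℕ → ℝ` whose finite-dimensional marginals are products of
the uniform measure on `[0,1]`. -/
def IsIIDUniform (μ : Measure (ℕ → ℝ)) : Prop :=
  IsProbabilityMeasure μ ∧
  ∀ n : ℕ, μ.map (fun x (i : Fin n) => x i) =
    Measure.pi (fun _ : Fin n => (volume : Measure ℝ).restrict (Set.Icc 0 1))

/-- The pattern `σ ∈ S_k` occurs consecutively at position `i` (0-indexed) in the
permutation `p ∈ S_n`, written in one-line notation. -/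
def PermOccursAt {k n : ℕ} (σ : Equiv.Perm (Fin k)) (p : Equiv.Perm (Fin n)) (i : ℕ) : Prop :=
  ∃ h : i + k ≤ n, ∀ a b : Fin k,
    p ⟨i + a, Nat.lt_of_lt_of_le (Nat.add_lt_add_left a.isLt i) h⟩ <
      p ⟨i + b, Nat.lt_of_lt_of_le (Nat.add_lt_add_left b.isLt i) h⟩ ↔ σ a < σ b

/-- `avoidCount σ n` is the number `α_n(σ)` of permutations in `S_n` avoiding `σ`
as a consecutive pattern. -/
def avoidCount {k : ℕ} (σ : Equiv.Perm (Fin k)) (n : ℕ) : ℕ :=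
  Nat.card {p : Equiv.Perm (Fin n) // ∀ i, ¬ PermOccursAt σ p i}

/-- Neither of the patterns `σ`, `τ` contains a consecutive occurrence of the other. -/
def Incomparable {k l : ℕ} (σ : Equiv.Perm (Fin k)) (τ : Equiv.Perm (Fin l)) : Prop :=
  (∀ i, ¬ PermOccursAt σ τ i) ∧ (∀ i, ¬ PermOccursAt τ σ i)


namespace CondExpAux

variable {n k : ℕ}

/-- The order region of a permutation: tuples realizing the pattern `p`. -/
def ordRegion (p : Equiv.Perm (Fin n)) : Set (Fin n → ℝ) :=
  {y | ∀ a b : Fin n, y a < y b ↔ p a < p b}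

theorem perm_eq_of_order {p q : Equiv.Perm (Fin n)}
    (h : ∀ a b : Fin n, p a < p b ↔ q a < q b) : p = q := by
  have hsm : StrictMono (fun i => q (p.symm i)) := by
    intro i j hij
    have : p (p.symm i) < p (p.symm j) := by simpa using hij
    exact (h _ _).mp this
  have hid : StrictMono (id : Fin n → Fin n) := strictMono_id
  have hr : Set.range (fun i => q (p.symm i)) = Set.range (id : Fin n → Fin n) := by
    simp [Set.range_eq_univ]
    intro b
    exact ⟨p (q.symm b), by simp⟩
  have := (hsm.range_inj hid).mp hr
  ext a
  have h2 := congrFun this (p a)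
  simp only [Equiv.symm_apply_apply, id_eq] at h2
  rw [h2]

theorem ordRegion_disjoint : Pairwise (Function.onFun Disjoint (fun p : Equiv.Perm (Fin n) => ordRegion p)) := by
  intro p q hpq
  rw [Function.onFun, Set.disjoint_left]
  intro y hyp hyq
  exact hpq (perm_eq_of_order (fun a b => ((hyp a b).symm.trans (hyq a b))))

theorem exists_ordRegion_of_injective {y : Fin n → ℝ} (hy : Function.Injective y) :
    ∃ p : Equiv.Perm (Fin n), y ∈ ordRegion p := by
  classical
  set s := Tuple.sort y with hs
  have hmono : Monotone (y ∘ s) := Tuple.monotone_sort y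
  have hinj : Function.Injective (y ∘ s) := hy.comp s.injective
  have hsm : StrictMono (y ∘ s) := hmono.strictMono_of_injective hinj
  refine ⟨s⁻¹, fun a b => ?_⟩
  have ha : y a = (y ∘ s) (s⁻¹ a) := by simp
  have hb : y b = (y ∘ s) (s⁻¹ b) := by simp
  rw [ha, hb, hsm.lt_iff_lt]

theorem injective_of_mem_ordRegion {y : Fin n → ℝ} {p : Equiv.Perm (Fin n)}
    (hy : y ∈ ordRegion p) : Function.Injective y := by
  intro a b hab
  by_contra hne
  rcases lt_or_gt_of_ne (fun h : p a = p b => hne (p.injective h)) with h | h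
  · exact absurd ((hy a b).mpr h) (by simp [hab])
  · exact absurd ((hy b a).mpr h) (by simp [hab])

theorem iUnion_ordRegion :
    (⋃ p : Equiv.Perm (Fin n), ordRegion p) = {y : Fin n → ℝ | Function.Injective y} := by
  ext y
  simp only [Set.mem_iUnion, Set.mem_setOf_eq]
  exact ⟨fun ⟨p, hp⟩ => injective_of_mem_ordRegion hp, exists_ordRegion_of_injective⟩

theorem measurableSet_ordRegion (p : Equiv.Perm (Fin n)) : MeasurableSet (ordRegion p) := by
  have : ordRegion p = ⋂ (a : Fin n) (b : Fin n),
      {y : Fin n → ℝ | y a < y b ↔ p a < p b} := by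
    ext y; simp [ordRegion, Set.mem_iInter]
  rw [this]
  refine MeasurableSet.iInter fun a => MeasurableSet.iInter fun b => ?_
  by_cases h : p a < p b
  · have : {y : Fin n → ℝ | y a < y b ↔ p a < p b} = {y | y a < y b} := by
      ext y; simp [h]
    rw [this]; exact measurableSet_lt (measurable_pi_apply a) (measurable_pi_apply b)
  · have : {y : Fin n → ℝ | y a < y b ↔ p a < p b} = {y | y a < y b}ᶜ := by
      ext y; simp [h]
    rw [this]
    exact (measurableSet_lt (measurable_pi_apply a) (measurable_pi_apply b)).compl



/-- uniform measure on [0,1] -/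
def unif : Measure ℝ := (volume : Measure ℝ).restrict (Set.Icc 0 1)

instance : IsProbabilityMeasure unif :=
  ⟨by rw [unif, Measure.restrict_apply_univ, Real.volume_Icc]; norm_num⟩

instance : NullSingletonClass unif := by unfold unif; infer_instance

/-- product of `n` uniforms -/
def Pn (n : ℕ) : Measure (Fin n → ℝ) := Measure.pi (fun _ => unif)

instance (n : ℕ) : IsProbabilityMeasure (Pn n) := by unfold Pn; infer_instance

variable {n k : ℕ}

theorem measurePreserving_comp_perm (p : Equiv.Perm (Fin n)) :
    MeasurePreserving (fun (y : Fin n → ℝ) (b : Fin n) => y (p b)) (Pn n) (Pn n) := by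
  have h := measurePreserving_piCongrLeft (fun _ : Fin n => unif) (p.symm : Fin n ≃ Fin n)
  have : (fun (y : Fin n → ℝ) (b : Fin n) => y (p b))
      = ⇑(MeasurableEquiv.piCongrLeft (fun _ : Fin n => ℝ) (p.symm : Fin n ≃ Fin n)) := by
    funext y
    ext b
    rw [MeasurableEquiv.coe_piCongrLeft]
    conv_rhs => rw [show b = (p.symm : Fin n ≃ Fin n) (p b) by simp]
    rw [Equiv.piCongrLeft_apply_apply]
  rw [this] at *
  exact h

theorem comp_perm_preimage_ordRegion (p : Equiv.Perm (Fin n)) :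
    (fun (y : Fin n → ℝ) (b : Fin n) => y (p b)) ⁻¹' (ordRegion p) = ordRegion 1 := by
  ext y
  simp only [Set.mem_preimage, ordRegion, Set.mem_setOf_eq]
  constructor
  · intro h u v
    have := h (p.symm u) (p.symm v)
    simpa using this
  · intro h a b
    have := h (p a) (p b)
    simpa using this

theorem Pn_ordRegion_eq (p : Equiv.Perm (Fin n)) :
    Pn n (ordRegion p) = Pn n (ordRegion (1 : Equiv.Perm (Fin n))) := by
  rw [← comp_perm_preimage_ordRegion p]
  exact ((measurePreserving_comp_perm p).measure_preimage
    (measurableSet_ordRegion p).nullMeasurableSet).symm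

/-- the diagonal coordinates set is null -/
theorem Pn_eq_coords_null {a b : Fin n} (hab : a ≠ b) :
    Pn n {y : Fin n → ℝ | y a = y b} = 0 := by
  classical
  -- map to pair
  set Φ : (Fin n → ℝ) → ℝ × ℝ := fun y => (y a, y b) with hΦ
  have hΦm : Measurable Φ := (measurable_pi_apply a).prodMk (measurable_pi_apply b)
  have hmap : (Pn n).map Φ = unif.prod unif := by
    refine (Measure.prod_eq (μ := unif) (ν := unif) fun s t hs ht => ?_).symm
    rw [Measure.map_apply hΦm (hs.prod ht)]
    have hset : Φ ⁻¹' (s ×ˢ t) =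
        Set.pi Set.univ (Function.update (Function.update (fun _ : Fin n => (Set.univ : Set ℝ)) a s) b t) := by
      ext y
      simp only [Set.mem_preimage, Set.mem_prod, Set.mem_pi, Set.mem_univ, true_implies, hΦ]
      constructor
      · rintro ⟨h1, h2⟩ i
        rcases eq_or_ne i b with rfl | hib
        · simp [Function.update_self, h2]
        rcases eq_or_ne i a with rfl | hia
        · simp [Function.update_of_ne hib, Function.update_self, h1]
        · simp [Function.update_of_ne hib, Function.update_of_ne hia]
      · intro h
        constructor
        · have := h a
          simpa [Function.update_of_ne hab, Function.update_self] using this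
        · have := h b
          simpa [Function.update_self] using this
    rw [hset, Pn, Measure.pi_pi]
    have hcomp : (fun i => unif (Function.update (Function.update
          (fun _ : Fin n => (Set.univ : Set ℝ)) a s) b t i))
        = Function.update (Function.update (fun _ : Fin n => unif Set.univ) a (unif s)) b
            (unif t) := by
      funext i
      rcases eq_or_ne i b with rfl | hib
      · simp
      rcases eq_or_ne i a with rfl | hia
      · simp [Function.update_of_ne hib]
      · simp [Function.update_of_ne hib, Function.update_of_ne hia]
    rw [Finset.prod_congr rfl (fun i _ => congrFun hcomp i),
      Finset.prod_update_of_mem (Finset.mem_univ b),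
      Finset.prod_update_of_mem (by simp [hab] : a ∈ Finset.univ \ {b})]
    simp [measure_univ, mul_comm]
  have hdiag : MeasurableSet {p : ℝ × ℝ | p.1 = p.2} := measurableSet_eq_fun measurable_fst measurable_snd
  have : {y : Fin n → ℝ | y a = y b} = Φ ⁻¹' {p : ℝ × ℝ | p.1 = p.2} := rfl
  rw [this, ← Measure.map_apply hΦm hdiag, hmap]
  rw [Measure.prod_apply hdiag]
  have : ∀ x : ℝ, unif (Prod.mk x ⁻¹' {p : ℝ × ℝ | p.1 = p.2}) = 0 := by
    intro x
    have : (Prod.mk x ⁻¹' {p : ℝ × ℝ | p.1 = p.2}) = {x} := by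
      ext z; simp [eq_comm]
    rw [this]
    exact measure_singleton x
  simp [this]

theorem Pn_noninjective_null :
    Pn n {y : Fin n → ℝ | ¬ Function.Injective y} = 0 := by
  have hsub : {y : Fin n → ℝ | ¬ Function.Injective y} ⊆
      ⋃ (c : Fin n × Fin n) (_ : c.1 ≠ c.2), {y : Fin n → ℝ | y c.1 = y c.2} := by
    intro y hy
    simp only [Set.mem_setOf_eq, Function.Injective, not_forall] at hy
    obtain ⟨a, b, hab, hne⟩ := hy
    exact Set.mem_iUnion.mpr ⟨(a, b), Set.mem_iUnion.mpr ⟨hne, hab⟩⟩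
  refine measure_mono_null hsub ?_
  refine measure_iUnion_null fun c => ?_
  by_cases h : c.1 ≠ c.2
  · simp only [Set.iUnion_eq_if, if_pos h]
    exact Pn_eq_coords_null h
  · simp only [Set.iUnion_eq_if, if_neg h]
    simp

theorem Pn_injective_one : Pn n {y : Fin n → ℝ | Function.Injective y} = 1 := by
  refine le_antisymm prob_le_one ?_
  calc (1:ℝ≥0∞) = Pn n Set.univ := measure_univ.symm
    _ ≤ Pn n ({y : Fin n → ℝ | Function.Injective y} ∪ {y | ¬ Function.Injective y}) := by
        refine measure_mono fun y _ => ?_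
        by_cases h : Function.Injective y
        · exact Or.inl h
        · exact Or.inr h
    _ ≤ Pn n {y : Fin n → ℝ | Function.Injective y} + Pn n {y | ¬ Function.Injective y} :=
        measure_union_le _ _
    _ = Pn n {y : Fin n → ℝ | Function.Injective y} := by rw [Pn_noninjective_null, add_zero]

theorem sum_Pn_ordRegion :
    ∑ p : Equiv.Perm (Fin n), Pn n (ordRegion p) = 1 := by
  rw [← tsum_fintype (L := .unconditional _), ← measure_iUnion ordRegion_disjoint measurableSet_ordRegion,
    iUnion_ordRegion, Pn_injective_one]

theorem Pn_ordRegion (p : Equiv.Perm (Fin n)) :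
    Pn n (ordRegion p) = ((n.factorial : ℝ≥0∞))⁻¹ := by
  classical
  have hsum := sum_Pn_ordRegion (n := n)
  have hall : ∀ q : Equiv.Perm (Fin n), Pn n (ordRegion q) = Pn n (ordRegion (1 : Equiv.Perm (Fin n))) :=
    fun q => Pn_ordRegion_eq q
  rw [Finset.sum_congr rfl (fun q _ => hall q), Finset.sum_const, Finset.card_univ,
    Fintype.card_perm, Fintype.card_fin, nsmul_eq_mul] at hsum
  have hfac0 : ((n.factorial : ℝ≥0∞)) ≠ 0 := by
    simp [Nat.factorial_ne_zero]
  have hfact : ((n.factorial : ℝ≥0∞)) ≠ ⊤ := by simp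
  rw [Pn_ordRegion_eq p]
  calc Pn n (ordRegion (1 : Equiv.Perm (Fin n)))
      = ((n.factorial : ℝ≥0∞))⁻¹ * ((n.factorial : ℝ≥0∞) * Pn n (ordRegion (1 : Equiv.Perm (Fin n)))) := by
        rw [← mul_assoc, ENNReal.inv_mul_cancel hfac0 hfact, one_mul]
    _ = ((n.factorial : ℝ≥0∞))⁻¹ := by rw [hsum, mul_one]


/-! ### Occurrence sets in finite windows -/

def FOcc (σ : Equiv.Perm (Fin k)) (y : Fin n → ℝ) (i : ℕ) : Prop :=
  ∃ h : i + k ≤ n, ∀ a b : Fin k,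
    y ⟨i + a, Nat.lt_of_lt_of_le (Nat.add_lt_add_left a.isLt i) h⟩ <
      y ⟨i + b, Nat.lt_of_lt_of_le (Nat.add_lt_add_left b.isLt i) h⟩ ↔ σ a < σ b

def avoidSet (σ : Equiv.Perm (Fin k)) (n : ℕ) : Set (Fin n → ℝ) := {y | ∀ i, ¬ FOcc σ y i}

theorem msIff (u v : Fin n) (c : Prop) : MeasurableSet {y : Fin n → ℝ | y u < y v ↔ c} := by
  by_cases h : c
  · simp only [h, iff_true]
    exact measurableSet_lt (measurable_pi_apply u) (measurable_pi_apply v)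
  · simp only [h, iff_false, not_lt]
    exact measurableSet_le (measurable_pi_apply v) (measurable_pi_apply u)

theorem measurableSet_FOcc (σ : Equiv.Perm (Fin k)) (i : ℕ) :
    MeasurableSet {y : Fin n → ℝ | FOcc σ y i} := by
  by_cases h : i + k ≤ n
  · have : {y : Fin n → ℝ | FOcc σ y i} = ⋂ (a : Fin k) (b : Fin k),
        {y : Fin n → ℝ | y ⟨i + a, Nat.lt_of_lt_of_le (Nat.add_lt_add_left a.isLt i) h⟩ <
          y ⟨i + b, Nat.lt_of_lt_of_le (Nat.add_lt_add_left b.isLt i) h⟩ ↔ σ a < σ b} := by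
      ext y
      simp only [Set.mem_setOf_eq, Set.mem_iInter, FOcc, h, exists_true_left]
    rw [this]
    exact MeasurableSet.iInter fun a => MeasurableSet.iInter fun b => msIff _ _ _
  · have : {y : Fin n → ℝ | FOcc σ y i} = ∅ := by
      ext y; simp only [Set.mem_setOf_eq, Set.mem_empty_iff_false, iff_false, FOcc]
      rintro ⟨h', -⟩; exact h h'
    rw [this]; exact MeasurableSet.empty

theorem measurableSet_avoidSet (σ : Equiv.Perm (Fin k)) (n : ℕ) :
    MeasurableSet (avoidSet σ n) := by
  have : avoidSet σ n = ⋂ i : ℕ, {y : Fin n → ℝ | FOcc σ y i}ᶜ := by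
    ext y; simp [avoidSet]
  rw [this]
  exact MeasurableSet.iInter fun i => (measurableSet_FOcc σ i).compl

theorem FOcc_iff_permOccursAt {σ : Equiv.Perm (Fin k)} {p : Equiv.Perm (Fin n)}
    {y : Fin n → ℝ} (hy : y ∈ ordRegion p) (i : ℕ) :
    FOcc σ y i ↔ PermOccursAt σ p i := by
  constructor
  · rintro ⟨h, H⟩
    exact ⟨h, fun a b => ((hy _ _).symm.trans (H a b))⟩
  · rintro ⟨h, H⟩
    exact ⟨h, fun a b => ((hy _ _).trans (H a b))⟩

theorem Pn_avoidSet (σ : Equiv.Perm (Fin k)) (n : ℕ) :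
    Pn n (avoidSet σ n) = (avoidCount σ n : ℝ≥0∞) * ((n.factorial : ℝ≥0∞))⁻¹ := by
  classical
  -- reduce to the injective part
  have hinj := Pn_noninjective_null (n := n)
  have h1 : Pn n (avoidSet σ n) = Pn n (avoidSet σ n ∩ {y | Function.Injective y}) := by
    refine le_antisymm ?_ (measure_mono Set.inter_subset_left)
    calc Pn n (avoidSet σ n)
        ≤ Pn n ((avoidSet σ n ∩ {y | Function.Injective y}) ∪ {y | ¬ Function.Injective y}) := by
          refine measure_mono fun y hy => ?_
          by_cases h : Function.Injective y
          · exact Or.inl ⟨hy, h⟩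
          · exact Or.inr h
      _ ≤ Pn n (avoidSet σ n ∩ {y | Function.Injective y}) + Pn n {y | ¬ Function.Injective y} :=
          measure_union_le _ _
      _ = Pn n (avoidSet σ n ∩ {y | Function.Injective y}) := by rw [hinj, add_zero]
  have h2 : avoidSet σ n ∩ {y | Function.Injective y}
      = ⋃ p : Equiv.Perm (Fin n), avoidSet σ n ∩ ordRegion p := by
    rw [← Set.inter_iUnion, iUnion_ordRegion]
  have h3 : ∀ p : Equiv.Perm (Fin n), avoidSet σ n ∩ ordRegion p
      = if (∀ i, ¬ PermOccursAt σ p i) then ordRegion p else ∅ := by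
    intro p
    by_cases hp : ∀ i, ¬ PermOccursAt σ p i
    · rw [if_pos hp]
      refine le_antisymm Set.inter_subset_right fun y hy => ⟨fun i hF => hp i ?_, hy⟩
      exact (FOcc_iff_permOccursAt hy i).mp hF
    · rw [if_neg hp]
      push_neg at hp
      obtain ⟨i, hi⟩ := hp
      ext y
      simp only [Set.mem_inter_iff, Set.mem_empty_iff_false, iff_false, not_and]
      intro hy hyr
      exact hy i ((FOcc_iff_permOccursAt hyr i).mpr hi)
  have hdisj : Pairwise (Function.onFun Disjoint
      (fun p : Equiv.Perm (Fin n) => avoidSet σ n ∩ ordRegion p)) := by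
    intro p q hpq
    exact (ordRegion_disjoint hpq).mono Set.inter_subset_right Set.inter_subset_right
  rw [h1, h2, measure_iUnion hdisj (fun p => (measurableSet_avoidSet σ n).inter (measurableSet_ordRegion p)),
    tsum_fintype]
  have : ∀ p : Equiv.Perm (Fin n), Pn n (avoidSet σ n ∩ ordRegion p)
      = if (∀ i, ¬ PermOccursAt σ p i) then ((n.factorial : ℝ≥0∞))⁻¹ else 0 := by
    intro p
    rw [h3 p]
    by_cases hp : ∀ i, ¬ PermOccursAt σ p i
    · rw [if_pos hp, if_pos hp, Pn_ordRegion]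
    · rw [if_neg hp, if_neg hp, measure_empty]
  rw [Finset.sum_congr rfl fun p _ => this p, Finset.sum_ite, Finset.sum_const,
    Finset.sum_const_zero, add_zero, nsmul_eq_mul]
  congr 1
  rw [avoidCount, Nat.card_eq_fintype_card, Fintype.card_subtype]

/-! ### Splitting off the last `k` coordinates -/

def restr1 (n k : ℕ) (y : Fin (n + k) → ℝ) : Fin n → ℝ := fun i => y (Fin.castAdd k i)
def restr2 (n k : ℕ) (y : Fin (n + k) → ℝ) : Fin k → ℝ := fun j => y (Fin.natAdd n j)

theorem measurable_restr1 : Measurable (restr1 n k) :=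
  measurable_pi_lambda _ fun i => measurable_pi_apply _
theorem measurable_restr2 : Measurable (restr2 n k) :=
  measurable_pi_lambda _ fun j => measurable_pi_apply _

theorem Pn_split (B : Set (Fin n → ℝ)) (C : Set (Fin k → ℝ))
    (hB : MeasurableSet B) (hC : MeasurableSet C) :
    Pn (n + k) (restr1 n k ⁻¹' B ∩ restr2 n k ⁻¹' C) = Pn n B * Pn k C := by
  classical
  set e : Fin n ⊕ Fin k ≃ Fin (n + k) := finSumFinEquiv with he
  have h1 := measurePreserving_piCongrLeft (fun _ : Fin (n + k) => unif) e
  have h2 := measurePreserving_sumPiEquivProdPi (fun _ : Fin n ⊕ Fin k => unif)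
  set T := MeasurableEquiv.piCongrLeft (fun _ : Fin (n + k) => ℝ) e with hT
  set s := MeasurableEquiv.sumPiEquivProdPi (fun _ : Fin n ⊕ Fin k => ℝ) with hs
  have hS : MeasurableSet (restr1 n k ⁻¹' B ∩ restr2 n k ⁻¹' C) :=
    (measurable_restr1 hB).inter (measurable_restr2 hC)
  have key : ⇑T ⁻¹' (restr1 n k ⁻¹' B ∩ restr2 n k ⁻¹' C) = ⇑s ⁻¹' (B ×ˢ C) := by
    ext z
    have hr1 : restr1 n k (T z) = fun i => z (Sum.inl i) := by
      funext i
      show T z (Fin.castAdd k i) = z (Sum.inl i)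
      have : Fin.castAdd k i = e (Sum.inl i) := by simp [he]
      rw [this, hT, MeasurableEquiv.coe_piCongrLeft, Equiv.piCongrLeft_apply_apply]
    have hr2 : restr2 n k (T z) = fun j => z (Sum.inr j) := by
      funext j
      show T z (Fin.natAdd n j) = z (Sum.inr j)
      have : Fin.natAdd n j = e (Sum.inr j) := by simp [he]
      rw [this, hT, MeasurableEquiv.coe_piCongrLeft, Equiv.piCongrLeft_apply_apply]
    simp only [Set.mem_preimage, Set.mem_inter_iff, hr1, hr2, hs,
      MeasurableEquiv.coe_sumPiEquivProdPi, Equiv.sumPiEquivProdPi_apply, Set.mem_prod]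
  calc Pn (n + k) (restr1 n k ⁻¹' B ∩ restr2 n k ⁻¹' C)
      = Measure.pi (fun _ : Fin n ⊕ Fin k => unif)
          (⇑T ⁻¹' (restr1 n k ⁻¹' B ∩ restr2 n k ⁻¹' C)) :=
        (h1.measure_preimage hS.nullMeasurableSet).symm
    _ = Measure.pi (fun _ : Fin n ⊕ Fin k => unif) (⇑s ⁻¹' (B ×ˢ C)) := by rw [key]
    _ = ((Pn n).prod (Pn k)) (B ×ˢ C) := h2.measure_preimage (hB.prod hC).nullMeasurableSet
    _ = Pn n B * Pn k C := by rw [Measure.prod_prod]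

/-! ### transfer between finite windows and infinite sequences -/

theorem FOcc_restr1 {σ : Equiv.Perm (Fin k)} {y : Fin (n + k) → ℝ} {i : ℕ} (h : i + k ≤ n) :
    FOcc σ (restr1 n k y) i ↔ FOcc σ y i := by
  constructor
  · rintro ⟨h', H⟩
    exact ⟨by omega, fun a b => H a b⟩
  · rintro ⟨h', H⟩
    exact ⟨h, fun a b => H a b⟩

theorem FOcc_last {σ : Equiv.Perm (Fin k)} {y : Fin (n + k) → ℝ} :
    FOcc σ y n ↔ restr2 n k y ∈ ordRegion σ := by
  constructor
  · rintro ⟨h', H⟩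
    exact fun a b => H a b
  · intro H
    exact ⟨le_refl _, fun a b => H a b⟩

theorem avoidSet_subset_split (σ : Equiv.Perm (Fin k)) :
    avoidSet σ (n + k) ⊆ restr1 n k ⁻¹' avoidSet σ n ∩ restr2 n k ⁻¹' (ordRegion σ)ᶜ := by
  intro y hy
  refine ⟨fun i hF => ?_, fun hr => ?_⟩
  · rcases hF with ⟨h, H⟩
    exact hy i ((FOcc_restr1 h).mp ⟨h, H⟩)
  · exact hy n (FOcc_last.mpr hr)

section IID

variable {μ : Measure (ℕ → ℝ)}

def proj (n : ℕ) : (ℕ → ℝ) → (Fin n → ℝ) := fun x i => x i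

theorem measurable_proj (n : ℕ) : Measurable (proj n) :=
  measurable_pi_lambda _ fun i => measurable_pi_apply _

theorem map_proj (hμ : IsIIDUniform μ) (n : ℕ) {B : Set (Fin n → ℝ)} (hB : MeasurableSet B) :
    μ (proj n ⁻¹' B) = Pn n B := by
  have h2 := hμ.2 n
  have : Pn n = Measure.pi (fun _ : Fin n => (volume : Measure ℝ).restrict (Set.Icc 0 1)) := rfl
  rw [this, ← h2]
  exact (Measure.map_apply (measurable_proj n) hB).symm

theorem FOcc_proj {σ : Equiv.Perm (Fin k)} {x : ℕ → ℝ} {i n : ℕ} :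
    FOcc σ (proj n x) i ↔ (i + k ≤ n ∧ OccursAt σ x i) := by
  constructor
  · rintro ⟨h, H⟩
    exact ⟨h, fun a b => H a b⟩
  · rintro ⟨h, H⟩
    exact ⟨h, fun a b => H a b⟩

def noOccFirst (σ : Equiv.Perm (Fin k)) (n : ℕ) : Set (ℕ → ℝ) :=
  {x | ∀ i, i + k ≤ n → ¬ OccursAt σ x i}

theorem noOccFirst_eq (σ : Equiv.Perm (Fin k)) (n : ℕ) :
    noOccFirst σ n = proj n ⁻¹' avoidSet σ n := by
  ext x
  simp only [noOccFirst, Set.mem_setOf_eq, Set.mem_preimage, avoidSet, FOcc_proj, not_and]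

theorem meas_noOccFirst (hμ : IsIIDUniform μ) (σ : Equiv.Perm (Fin k)) (n : ℕ) :
    μ (noOccFirst σ n) = (avoidCount σ n : ℝ≥0∞) * ((n.factorial : ℝ≥0∞))⁻¹ := by
  rw [noOccFirst_eq, map_proj hμ n (measurableSet_avoidSet σ n), Pn_avoidSet]

theorem noOccFirst_anti (σ : Equiv.Perm (Fin k)) {m n : ℕ} (h : m ≤ n) :
    noOccFirst σ n ⊆ noOccFirst σ m :=
  fun x hx i hik => hx i (le_trans hik h)

theorem meas_noOccFirst_le_pow (hμ : IsIIDUniform μ) (σ : Equiv.Perm (Fin k)) (hk : 0 < k)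
    (n : ℕ) : μ (noOccFirst σ n) ≤ (1 - ((k.factorial : ℝ≥0∞))⁻¹) ^ (n / k) := by
  haveI := hμ.1
  set r := (1 : ℝ≥0∞) - ((k.factorial : ℝ≥0∞))⁻¹ with hr
  have hstep : ∀ m : ℕ, μ (noOccFirst σ (m + k)) ≤ μ (noOccFirst σ m) * r := by
    intro m
    have hsub := avoidSet_subset_split (n := m) σ
    calc μ (noOccFirst σ (m + k)) = Pn (m + k) (avoidSet σ (m + k)) := by
          rw [noOccFirst_eq, map_proj hμ _ (measurableSet_avoidSet σ _)]
      _ ≤ Pn (m + k) (restr1 m k ⁻¹' avoidSet σ m ∩ restr2 m k ⁻¹' (ordRegion σ)ᶜ) :=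
          measure_mono hsub
      _ = Pn m (avoidSet σ m) * Pn k (ordRegion σ)ᶜ :=
          Pn_split _ _ (measurableSet_avoidSet σ m) (measurableSet_ordRegion σ).compl
      _ = μ (noOccFirst σ m) * r := by
          rw [noOccFirst_eq, map_proj hμ _ (measurableSet_avoidSet σ _),
            measure_compl (measurableSet_ordRegion σ) (measure_ne_top _ _), Pn_ordRegion,
            measure_univ]
  have hM : ∀ M : ℕ, μ (noOccFirst σ (M * k)) ≤ r ^ M := by
    intro M
    induction M with
    | zero => simpa using prob_le_one
    | succ M ih =>
        calc μ (noOccFirst σ ((M + 1) * k)) = μ (noOccFirst σ (M * k + k)) := by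
              rw [Nat.succ_mul]
          _ ≤ μ (noOccFirst σ (M * k)) * r := hstep _
          _ ≤ r ^ M * r := mul_le_mul_left ih r
          _ = r ^ (M + 1) := (pow_succ r M).symm
  calc μ (noOccFirst σ n) ≤ μ (noOccFirst σ (n / k * k)) :=
        measure_mono (noOccFirst_anti σ (Nat.div_mul_le_self n k))
    _ ≤ r ^ (n / k) := by
        have := hM (n / k)
        simpa [Nat.mul_div_cancel _ hk] using this

theorem sub_inv_fact_lt_one (hk : 0 < k) :
    (1 : ℝ≥0∞) - ((k.factorial : ℝ≥0∞))⁻¹ < 1 := by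
  refine ENNReal.sub_lt_self ENNReal.one_ne_top one_ne_zero ?_
  simp [ENNReal.inv_ne_zero]

theorem noOccEver_null (hμ : IsIIDUniform μ) (σ : Equiv.Perm (Fin k)) (hk : 0 < k) :
    μ {x | ∀ i, ¬ OccursAt σ x i} = 0 := by
  set r := (1 : ℝ≥0∞) - ((k.factorial : ℝ≥0∞))⁻¹ with hr
  have hrlt : r < 1 := sub_inv_fact_lt_one hk
  have hb : ∀ M : ℕ, μ {x | ∀ i, ¬ OccursAt σ x i} ≤ r ^ M := by
    intro M
    calc μ {x | ∀ i, ¬ OccursAt σ x i} ≤ μ (noOccFirst σ (M * k)) :=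
          measure_mono (fun x hx i _ => hx i)
      _ ≤ r ^ (M * k / k) := meas_noOccFirst_le_pow hμ σ hk _
      _ = r ^ M := by rw [Nat.mul_div_cancel _ hk]
  have htend := ENNReal.tendsto_pow_atTop_nhds_zero_of_lt_one hrlt
  have hle := ge_of_tendsto' htend hb
  simpa using hle

/-! ### hitTime -/

theorem occSet_nonempty {σ : Equiv.Perm (Fin k)} {x : ℕ → ℝ} (hx : ∃ i, OccursAt σ x i) :
    {j | k ≤ j ∧ OccursAt σ x (j - k)}.Nonempty := by
  obtain ⟨i, hi⟩ := hx
  exact ⟨i + k, Nat.le_add_left _ _, by simpa [Nat.add_sub_cancel] using hi⟩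

theorem hitTime_mem {σ : Equiv.Perm (Fin k)} {x : ℕ → ℝ} (hx : ∃ i, OccursAt σ x i) :
    k ≤ hitTime σ x ∧ OccursAt σ x (hitTime σ x - k) :=
  Nat.sInf_mem (occSet_nonempty hx)

theorem hitTime_le {σ : Equiv.Perm (Fin k)} {x : ℕ → ℝ} {j : ℕ} (hj : k ≤ j)
    (hocc : OccursAt σ x (j - k)) : hitTime σ x ≤ j :=
  Nat.sInf_le ⟨hj, hocc⟩

theorem hitTime_gt_iff {σ : Equiv.Perm (Fin k)} {x : ℕ → ℝ} (hx : ∃ i, OccursAt σ x i)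
    {n : ℕ} : n < hitTime σ x ↔ x ∈ noOccFirst σ n := by
  constructor
  · intro h i hik hocc
    have : hitTime σ x ≤ i + k :=
      hitTime_le (Nat.le_add_left _ _) (by simpa [Nat.add_sub_cancel] using hocc)
    omega
  · intro h
    by_contra hn
    push_neg at hn
    obtain ⟨hk1, hocc⟩ := hitTime_mem hx
    have h1 : hitTime σ x - k + k ≤ n := by omega
    exact h _ h1 hocc

theorem measurableSet_occursAt (σ : Equiv.Perm (Fin k)) (i : ℕ) :
    MeasurableSet {x : ℕ → ℝ | OccursAt σ x i} := by
  have : {x : ℕ → ℝ | OccursAt σ x i} = ⋂ (a : Fin k) (b : Fin k),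
      {x : ℕ → ℝ | x (i + a) < x (i + b) ↔ σ a < σ b} := by
    ext x; simp [OccursAt, Set.mem_iInter]
  rw [this]
  refine MeasurableSet.iInter fun a => MeasurableSet.iInter fun b => ?_
  by_cases h : σ a < σ b
  · simp only [h, iff_true]
    exact measurableSet_lt (measurable_pi_apply _) (measurable_pi_apply _)
  · simp only [h, iff_false, not_lt]
    exact measurableSet_le (measurable_pi_apply _) (measurable_pi_apply _)

theorem measurableSet_occEvent (σ : Equiv.Perm (Fin k)) (j : ℕ) :
    MeasurableSet {x : ℕ → ℝ | k ≤ j ∧ OccursAt σ x (j - k)} := by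
  by_cases h : k ≤ j
  · have : {x : ℕ → ℝ | k ≤ j ∧ OccursAt σ x (j - k)} = {x | OccursAt σ x (j - k)} := by
      ext x; simp [h]
    rw [this]; exact measurableSet_occursAt σ _
  · have : {x : ℕ → ℝ | k ≤ j ∧ OccursAt σ x (j - k)} = ∅ := by
      ext x; simp [h]
    rw [this]; exact MeasurableSet.empty

theorem measurable_hitTime (σ : Equiv.Perm (Fin k)) : Measurable (hitTime σ) := by
  apply measurable_to_countable'
  intro m
  match m with
  | 0 =>
      have : hitTime σ ⁻¹' {0} = {x : ℕ → ℝ | k ≤ 0 ∧ OccursAt σ x (0 - k)} ∪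
          ⋂ j : ℕ, {x : ℕ → ℝ | k ≤ j ∧ OccursAt σ x (j - k)}ᶜ := by
        ext x
        simp only [Set.mem_preimage, Set.mem_singleton_iff, hitTime, Set.mem_union,
          Set.mem_iInter, Set.mem_compl_iff, Set.mem_setOf_eq]
        rw [Nat.sInf_eq_zero]
        constructor
        · rintro (h | h)
          · exact Or.inl h
          · refine Or.inr fun j hj => ?_
            have : j ∈ {j | k ≤ j ∧ OccursAt σ x (j - k)} := hj
            rw [h] at this
            exact this
        · rintro (h | h)
          · exact Or.inl h
          · refine Or.inr (Set.eq_empty_iff_forall_notMem.mpr fun j hj => h j hj)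
      rw [this]
      exact (measurableSet_occEvent σ 0).union
        (MeasurableSet.iInter fun j => (measurableSet_occEvent σ j).compl)
  | m + 1 =>
      have : hitTime σ ⁻¹' {m + 1} = {x : ℕ → ℝ | k ≤ m + 1 ∧ OccursAt σ x (m + 1 - k)} ∩
          ⋂ (j : ℕ) (_ : j < m + 1), {x : ℕ → ℝ | k ≤ j ∧ OccursAt σ x (j - k)}ᶜ := by
        ext x
        simp only [Set.mem_preimage, Set.mem_singleton_iff, hitTime, Set.mem_inter_iff,
          Set.mem_iInter, Set.mem_compl_iff, Set.mem_setOf_eq]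
        constructor
        · intro h
          have hne : {j | k ≤ j ∧ OccursAt σ x (j - k)}.Nonempty := by
            by_contra hne
            rw [Set.not_nonempty_iff_eq_empty] at hne
            rw [hne] at h
            simp [Nat.sInf_empty] at h
          have hmem := Nat.sInf_mem hne
          rw [h] at hmem
          refine ⟨hmem, fun j hj hmem' => ?_⟩
          have := Nat.sInf_le (s := {j | k ≤ j ∧ OccursAt σ x (j - k)}) hmem'
          omega
        · rintro ⟨hmem, hlt⟩
          refine le_antisymm (Nat.sInf_le hmem) ?_
          by_contra hn
          push_neg at hn
          have hne : {j | k ≤ j ∧ OccursAt σ x (j - k)}.Nonempty := ⟨m + 1, hmem⟩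
          have := Nat.sInf_mem hne
          exact hlt _ hn this
      rw [this]
      refine (measurableSet_occEvent σ (m + 1)).inter ?_
      exact MeasurableSet.iInter fun j => MeasurableSet.iInter fun _ =>
        (measurableSet_occEvent σ j).compl

theorem meas_hitTime_gt (hμ : IsIIDUniform μ) (σ : Equiv.Perm (Fin k)) (hk : 0 < k) (n : ℕ) :
    μ {x | n < hitTime σ x} = (avoidCount σ n : ℝ≥0∞) * ((n.factorial : ℝ≥0∞))⁻¹ := by
  haveI := hμ.1
  set N := {x : ℕ → ℝ | ∀ i, ¬ OccursAt σ x i} with hN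
  have hN0 : μ N = 0 := noOccEver_null hμ σ hk
  have h1 : {x | n < hitTime σ x} ⊆ noOccFirst σ n ∪ N := by
    intro x hx
    by_cases hxN : x ∈ N
    · exact Or.inr hxN
    · simp only [hN, Set.mem_setOf_eq, not_forall, not_not] at hxN
      exact Or.inl ((hitTime_gt_iff hxN).mp hx)
  have h2 : noOccFirst σ n ⊆ {x | n < hitTime σ x} ∪ N := by
    intro x hx
    by_cases hxN : x ∈ N
    · exact Or.inr hxN
    · simp only [hN, Set.mem_setOf_eq, not_forall, not_not] at hxN
      exact Or.inl ((hitTime_gt_iff hxN).mpr hx)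
  have le1 : μ {x | n < hitTime σ x} ≤ μ (noOccFirst σ n) := by
    calc μ {x | n < hitTime σ x} ≤ μ (noOccFirst σ n ∪ N) := measure_mono h1
      _ ≤ μ (noOccFirst σ n) + μ N := measure_union_le _ _
      _ = μ (noOccFirst σ n) := by rw [hN0, add_zero]
  have le2 : μ (noOccFirst σ n) ≤ μ {x | n < hitTime σ x} := by
    calc μ (noOccFirst σ n) ≤ μ ({x | n < hitTime σ x} ∪ N) := measure_mono h2
      _ ≤ μ {x | n < hitTime σ x} + μ N := measure_union_le _ _
      _ = μ {x | n < hitTime σ x} := by rw [hN0, add_zero]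
  rw [le_antisymm le1 le2, meas_noOccFirst hμ]

end IID

/-! ### layer cake for ℕ-valued functions -/

section LayerCake

variable {α : Type*} [MeasurableSpace α] {m : Measure α}

theorem tsum_ite_lt (j : ℕ) : (∑' n : ℕ, if n < j then (1 : ℝ≥0∞) else 0) = j := by
  rw [tsum_eq_sum (s := Finset.range j) (fun n hn => by
    simp only [Finset.mem_range] at hn
    simp [hn]),
    Finset.sum_congr rfl (fun n hn => if_pos (Finset.mem_range.mp hn))]
  simp

theorem lintegral_nat (f : α → ℕ) (hf : Measurable f) :
    ∫⁻ a, (f a : ℝ≥0∞) ∂m = ∑' n : ℕ, m {a | n < f a} := by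
  have hset : ∀ n : ℕ, MeasurableSet {a | n < f a} := by
    intro n
    exact hf (MeasurableSet.of_discrete)
  have hpt : ∀ a, (f a : ℝ≥0∞) = ∑' n : ℕ, Set.indicator {a | n < f a} (fun _ => (1:ℝ≥0∞)) a := by
    intro a
    rw [show (∑' n : ℕ, Set.indicator {a | n < f a} (fun _ => (1:ℝ≥0∞)) a)
        = ∑' n : ℕ, if n < f a then (1:ℝ≥0∞) else 0 from
      tsum_congr fun n => by rw [Set.indicator_apply]; rfl]
    rw [tsum_ite_lt]
  calc ∫⁻ a, (f a : ℝ≥0∞) ∂m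
      = ∫⁻ a, ∑' n : ℕ, Set.indicator {a | n < f a} (fun _ => (1:ℝ≥0∞)) a ∂m := by
        exact lintegral_congr hpt
    _ = ∑' n : ℕ, ∫⁻ a, Set.indicator {a | n < f a} (fun _ => (1:ℝ≥0∞)) a ∂m :=
        lintegral_tsum fun n => ((measurable_const.indicator (hset n))).aemeasurable
    _ = ∑' n : ℕ, m {a | n < f a} := by
        refine tsum_congr fun n => ?_
        exact lintegral_indicator_one (hset n)

theorem integrable_nat [IsProbabilityMeasure m] (f : α → ℕ) (hf : Measurable f)
    (hfin : (∑' n : ℕ, m {a | n < f a}) ≠ ⊤) :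
    Integrable (fun a => (f a : ℝ)) m := by
  have hmeas : Measurable (fun a => (f a : ℝ)) := Measurable.of_discrete.comp hf
  refine ⟨hmeas.aestronglyMeasurable, ?_⟩
  show (∫⁻ a, (‖(f a : ℝ)‖₊ : ℝ≥0∞) ∂m) < ⊤
  have : ∀ a, (‖(f a : ℝ)‖₊ : ℝ≥0∞) = ((f a : ℕ) : ℝ≥0∞) := by
    intro a
    simp [Real.nnnorm_natCast]
  rw [lintegral_congr this, lintegral_nat f hf]
  exact hfin.lt_top

theorem integral_nat [IsProbabilityMeasure m] (f : α → ℕ) (hf : Measurable f) :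
    ∫ a, (f a : ℝ) ∂m = ∑' n : ℕ, (m {a | n < f a}).toReal := by
  have hmeas : Measurable (fun a => (f a : ℝ)) := Measurable.of_discrete.comp hf
  rw [integral_eq_lintegral_of_nonneg_ae (Filter.Eventually.of_forall fun a => by positivity)
    hmeas.aestronglyMeasurable]
  rw [show (∫⁻ a, ENNReal.ofReal ((f a : ℝ)) ∂m) = ∫⁻ a, (f a : ℝ≥0∞) ∂m from
    lintegral_congr fun a => ENNReal.ofReal_natCast _]
  rw [lintegral_nat f hf]
  exact ENNReal.tsum_toReal_eq fun n => measure_ne_top m _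

end LayerCake

section IID2

variable {μ : Measure (ℕ → ℝ)} {k : ℕ}

theorem tsum_meas_hitTime_ne_top (hμ : IsIIDUniform μ) (σ : Equiv.Perm (Fin k)) (hk : 0 < k) :
    (∑' n : ℕ, μ {x | n < hitTime σ x}) ≠ ⊤ := by
  haveI := hμ.1
  haveI : NeZero k := ⟨hk.ne'⟩
  set r := (1 : ℝ≥0∞) - ((k.factorial : ℝ≥0∞))⁻¹ with hr
  have hterm : ∀ n : ℕ, μ {x | n < hitTime σ x} ≤ r ^ (n / k) := by
    intro n
    rw [meas_hitTime_gt hμ σ hk n, ← Pn_avoidSet, ← map_proj hμ n (measurableSet_avoidSet σ n),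
      ← noOccFirst_eq]
    exact meas_noOccFirst_le_pow hμ σ hk n
  have hb : (∑' n : ℕ, μ {x | n < hitTime σ x}) ≤ ∑' n : ℕ, r ^ (n / k) :=
    ENNReal.tsum_le_tsum hterm
  refine ne_top_of_le_ne_top ?_ hb
  have heq : (∑' n : ℕ, r ^ (n / k)) = ∑' p : ℕ × Fin k, r ^ ((p.1 * k + (p.2 : ℕ)) / k) := by
    rw [← Equiv.tsum_eq (Nat.divModEquiv k).symm (fun n => r ^ (n / k))]
    rfl
  rw [heq]
  have hdiv : ∀ p : ℕ × Fin k, ((p.1 * k + (p.2 : ℕ)) / k) = p.1 := by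
    intro p
    rw [mul_comm, Nat.mul_add_div hk, Nat.div_eq_of_lt p.2.isLt, add_zero]
  have hfin : (∑' p : ℕ × Fin k, r ^ ((p.1 * k + (p.2 : ℕ)) / k)) ≠ ⊤ := by
    have h1 : (∑' p : ℕ × Fin k, r ^ ((p.1 * k + (p.2 : ℕ)) / k))
        = ∑' p : ℕ × Fin k, r ^ p.1 := tsum_congr fun p => by rw [hdiv p]
    have h2 : (∑' p : ℕ × Fin k, r ^ p.1) = ∑' M : ℕ, ∑' j : Fin k, r ^ M :=
      ENNReal.tsum_prod (f := fun M (_ : Fin k) => r ^ M)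
    have h3 : (∑' M : ℕ, ∑' j : Fin k, r ^ M) = ∑' M : ℕ, (k : ℝ≥0∞) * r ^ M := by
      refine tsum_congr fun M => ?_
      rw [tsum_fintype, Finset.sum_const, Finset.card_univ, Fintype.card_fin, nsmul_eq_mul]
    rw [h1, h2, h3, ENNReal.tsum_mul_left, ENNReal.tsum_geometric]
    refine ENNReal.mul_ne_top (ENNReal.natCast_ne_top k) ?_
    rw [hr, ENNReal.sub_sub_cancel ENNReal.one_ne_top (ENNReal.inv_le_one.mpr (by
      exact_mod_cast Nat.one_le_iff_ne_zero.mpr (Nat.factorial_ne_zero k)))]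
    simp [Nat.factorial_ne_zero]
  exact hfin

end IID2

/-! ### chains and the descent pattern -/

theorem chain_fin {α : Type*} [Preorder α] {n : ℕ} {f : Fin n → α}
    (h : ∀ i : ℕ, (hi : i + 1 < n) → f ⟨i, by omega⟩ < f ⟨i + 1, hi⟩) :
    ∀ a b : Fin n, a < b → f a < f b := by
  suffices H : ∀ m (hm : m < n) l (hl : l < m), f ⟨l, by omega⟩ < f ⟨m, hm⟩ by
    intro a b hab
    have := H b.val b.isLt a.val hab
    simpa using this
  intro m
  induction m with
  | zero => intro _ l hl; omega
  | succ m ih =>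
      intro hm l hl
      rcases Nat.lt_succ_iff_lt_or_eq.mp hl with hlm | rfl
      · exact (ih (by omega) l hlm).trans (h m hm)
      · exact h l hm

theorem occ0_of_adj {k : ℕ} (hk : 0 < k) {x : ℕ → ℝ}
    (h : ∀ i, i + 1 < k → x i < x (i + 1)) :
    OccursAt (1 : Equiv.Perm (Fin k)) x 0 := by
  have hchain : ∀ a b : Fin k, a < b → x a < x b := by
    have := chain_fin (n := k) (f := fun a : Fin k => x a) (fun i hi => h i hi)
    exact this
  intro a b
  simp only [zero_add, Equiv.Perm.coe_one, id_eq]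
  constructor
  · intro hx
    rcases lt_trichotomy a b with h' | h' | h'
    · exact h'
    · exact absurd hx (by rw [h']; exact lt_irrefl _)
    · exact absurd (hchain b a h') (not_lt.mpr hx.le)
  · exact hchain a b

theorem not_occ0_adj {k : ℕ} (hk : 0 < k) {x : ℕ → ℝ}
    (h : ¬ OccursAt (1 : Equiv.Perm (Fin k)) x 0) :
    ∃ i, i + 1 < k ∧ ¬ (x i < x (i + 1)) := by
  by_contra hc
  push_neg at hc
  exact h (occ0_of_adj hk hc)

theorem occτ_iff {τ : Equiv.Perm (Fin 2)} (hτ : τ 0 = 1 ∧ τ 1 = 0) {x : ℕ → ℝ} {i : ℕ} :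
    OccursAt τ x i ↔ x (i + 1) < x i := by
  constructor
  · intro H
    have h01 : τ 1 < τ 0 := by rw [hτ.1, hτ.2]; norm_num
    have := (H 1 0).mpr h01
    simpa using this
  · intro h a b
    fin_cases a <;> fin_cases b <;>
      simp [hτ.1, hτ.2, h, not_lt.mpr h.le, lt_irrefl]

theorem permOccτ_iff {τ : Equiv.Perm (Fin 2)} (hτ : τ 0 = 1 ∧ τ 1 = 0) {n : ℕ}
    {p : Equiv.Perm (Fin n)} {i : ℕ} (hi : i + 2 ≤ n) :
    PermOccursAt τ p i ↔ p ⟨i + 1, by omega⟩ < p ⟨i, by omega⟩ := by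
  constructor
  · rintro ⟨h, H⟩
    have h01 : τ 1 < τ 0 := by rw [hτ.1, hτ.2]; norm_num
    have := (H 1 0).mpr h01
    simpa using this
  · intro h
    refine ⟨hi, fun a b => ?_⟩
    fin_cases a <;> fin_cases b <;>
      simp [hτ.1, hτ.2, h, not_lt.mpr h.le, lt_irrefl]

theorem avoid_τ_iff_one {τ : Equiv.Perm (Fin 2)} (hτ : τ 0 = 1 ∧ τ 1 = 0) {n : ℕ}
    (p : Equiv.Perm (Fin n)) : (∀ i, ¬ PermOccursAt τ p i) ↔ p = 1 := by
  constructor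
  · intro hp
    have hadj : ∀ i : ℕ, (hi : i + 1 < n) → p ⟨i, by omega⟩ < p ⟨i + 1, hi⟩ := by
      intro i hi
      have h2 : i + 2 ≤ n := by omega
      have := hp i
      rw [permOccτ_iff hτ h2] at this
      push_neg at this
      rcases lt_or_eq_of_le this with h | h
      · exact h
      · exfalso
        have h2 := p.injective h
        rw [Fin.ext_iff] at h2
        simp only [] at h2
        omega
    have hchain := chain_fin hadj
    refine perm_eq_of_order fun a b => ?_
    simp only [Equiv.Perm.coe_one, id_eq]
    constructor
    · intro hx
      rcases lt_trichotomy a b with h' | h' | h'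
      · exact h'
      · exact absurd hx (by rw [h']; exact lt_irrefl _)
      · exact absurd (hchain b a h') (not_lt.mpr hx.le)
    · exact hchain a b
  · rintro rfl i ⟨h, H⟩
    have h01 : τ 1 < τ 0 := by rw [hτ.1, hτ.2]; norm_num
    have := (H 1 0).mpr h01
    simp only [Equiv.Perm.coe_one, id_eq] at this
    simpa [Fin.lt_def] using this

theorem avoidCount_τ {τ : Equiv.Perm (Fin 2)} (hτ : τ 0 = 1 ∧ τ 1 = 0) (n : ℕ) :
    avoidCount τ n = 1 := by
  classical
  rw [avoidCount, Nat.card_eq_fintype_card, Fintype.card_eq_one_iff]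
  refine ⟨⟨1, (avoid_τ_iff_one hτ 1).mpr rfl⟩, ?_⟩
  rintro ⟨p, hp⟩
  exact Subtype.ext ((avoid_τ_iff_one hτ p).mp hp)

/-! ### the dichotomy -/

theorem dichotomy {k : ℕ} (hk : 2 ≤ k) {τ : Equiv.Perm (Fin 2)} (hτ : τ 0 = 1 ∧ τ 1 = 0)
    {x : ℕ → ℝ} (hι : ∃ i, OccursAt (1 : Equiv.Perm (Fin k)) x i)
    (hτx : ∃ i, OccursAt τ x i) (hd : ∀ i, x i ≠ x (i + 1)) :
    (OccursAt (1 : Equiv.Perm (Fin k)) x 0 ∧ hitTime (1 : Equiv.Perm (Fin k)) x = k ∧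
      k < hitTime τ x)
    ∨ (¬ OccursAt (1 : Equiv.Perm (Fin k)) x 0 ∧ hitTime τ x ≤ k ∧
      k < hitTime (1 : Equiv.Perm (Fin k)) x) := by
  obtain ⟨hιk, hιocc⟩ := hitTime_mem hι
  obtain ⟨hτ2, hτocc⟩ := hitTime_mem hτx
  by_cases h0 : OccursAt (1 : Equiv.Perm (Fin k)) x 0
  · left
    have hle : hitTime (1 : Equiv.Perm (Fin k)) x ≤ k :=
      hitTime_le (le_refl k) (by rw [Nat.sub_self]; exact h0)
    refine ⟨h0, le_antisymm hle hιk, ?_⟩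
    by_contra hn
    push_neg at hn
    set t := hitTime τ x with ht
    have hdesc : x (t - 2 + 1) < x (t - 2) := (occτ_iff hτ).mp hτocc
    have h1 : t - 2 + 1 < k := by omega
    have h2 := h0 ⟨t - 2, by omega⟩ ⟨t - 2 + 1, h1⟩
    simp only [zero_add, Equiv.Perm.coe_one, id_eq] at h2
    have hlt : x (t - 2) < x (t - 2 + 1) := by
      exact h2.mpr (Fin.mk_lt_mk.mpr (by omega))
    exact absurd hdesc (not_lt.mpr hlt.le)
  · right
    refine ⟨h0, ?_, ?_⟩
    · obtain ⟨i, hik, hni⟩ := not_occ0_adj (by omega) h0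
      have hdesc : x (i + 1) < x i :=
        lt_of_le_of_ne (not_lt.mp hni) (fun h => hd i h.symm)
      have hocc : OccursAt τ x i := (occτ_iff hτ).mpr hdesc
      have := hitTime_le (σ := τ) (x := x) (j := i + 2) (by omega)
        (by rw [Nat.add_sub_cancel]; exact hocc)
      omega
    · rcases lt_or_eq_of_le hιk with h | h
      · exact h
      · exfalso
        apply h0
        rw [← h, Nat.sub_self] at hιocc
        exact hιocc

section IID3

variable {μ : Measure (ℕ → ℝ)} {k : ℕ}

theorem occ0_eq (k : ℕ) : {x : ℕ → ℝ | OccursAt (1 : Equiv.Perm (Fin k)) x 0}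
    = proj k ⁻¹' ordRegion (1 : Equiv.Perm (Fin k)) := by
  ext x
  constructor
  · intro H a b
    have := H a b
    simpa [proj] using this
  · intro H a b
    have := H a b
    simpa [proj] using this

theorem adj_eq_null (hμ : IsIIDUniform μ) (i : ℕ) : μ {x : ℕ → ℝ | x i = x (i + 1)} = 0 := by
  have hab : (⟨i, by omega⟩ : Fin (i + 2)) ≠ ⟨i + 1, by omega⟩ := by
    simp [Fin.ext_iff]
  have hset : {x : ℕ → ℝ | x i = x (i + 1)}
      = proj (i + 2) ⁻¹' {y : Fin (i + 2) → ℝ | y ⟨i, by omega⟩ = y ⟨i + 1, by omega⟩} := rfl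
  rw [hset, map_proj hμ _ (measurableSet_eq_fun (measurable_pi_apply _) (measurable_pi_apply _))]
  exact Pn_eq_coords_null hab

theorem good_ae (hμ : IsIIDUniform μ) (hk : 0 < k) (τ : Equiv.Perm (Fin 2)) :
    ∀ᵐ x ∂μ, (∃ i, OccursAt (1 : Equiv.Perm (Fin k)) x i) ∧ (∃ i, OccursAt τ x i) ∧
      (∀ i, x i ≠ x (i + 1)) := by
  have h1 : ∀ᵐ x ∂μ, ∃ i, OccursAt (1 : Equiv.Perm (Fin k)) x i := by
    rw [Filter.Eventually]
    rw [mem_ae_iff]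
    have : {x : ℕ → ℝ | ∃ i, OccursAt (1 : Equiv.Perm (Fin k)) x i}ᶜ
        = {x | ∀ i, ¬ OccursAt (1 : Equiv.Perm (Fin k)) x i} := by
      ext x; simp
    rw [this]
    exact noOccEver_null hμ _ hk
  have h2 : ∀ᵐ x ∂μ, ∃ i, OccursAt τ x i := by
    rw [Filter.Eventually, mem_ae_iff]
    have : {x : ℕ → ℝ | ∃ i, OccursAt τ x i}ᶜ = {x | ∀ i, ¬ OccursAt τ x i} := by
      ext x; simp
    rw [this]
    exact noOccEver_null hμ _ (by norm_num)
  have h3 : ∀ᵐ x ∂μ, ∀ i, x i ≠ x (i + 1) := by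
    rw [Filter.Eventually, mem_ae_iff]
    have : {x : ℕ → ℝ | ∀ i, x i ≠ x (i + 1)}ᶜ = ⋃ i : ℕ, {x : ℕ → ℝ | x i = x (i + 1)} := by
      ext x; simp
    rw [this]
    exact measure_iUnion_null fun i => adj_eq_null hμ i
  exact h1.and (h2.and h3)

end IID3

end CondExpAux

open CondExpAux

theorem cond_exp_F_21_to_iota (μ : Measure (ℕ → ℝ)) (hμ : IsIIDUniform μ)
    (k : ℕ) (hk : 2 ≤ k) (τ : Equiv.Perm (Fin 2)) (hτ : τ 0 = 1 ∧ τ 1 = 0) :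
    (1 / (μ {x | hitTime τ x < hitTime (1 : Equiv.Perm (Fin k)) x}).toReal) *
        ∫ x in {x | hitTime τ x < hitTime (1 : Equiv.Perm (Fin k)) x},
          ((hitTime (1 : Equiv.Perm (Fin k)) x : ℝ) - (hitTime τ x : ℝ)) ∂μ =
      ((k.factorial : ℝ) / ((k.factorial : ℝ) - 1)) *
        ((∑' n : ℕ, (avoidCount (1 : Equiv.Perm (Fin k)) n : ℝ) / n.factorial)
          - ∑ i ∈ Finset.range k, 1 / (i.factorial : ℝ)) := by
  classical
  haveI := hμ.1
  have hk0 : 0 < k := by omega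
  set A := {x : ℕ → ℝ | hitTime τ x < hitTime (1 : Equiv.Perm (Fin k)) x} with hA
  have hAmeas : MeasurableSet A := by
    have : A = ⋃ m : ℕ, (hitTime τ ⁻¹' {m}) ∩ {x | m < hitTime (1 : Equiv.Perm (Fin k)) x} := by
      ext x
      simp only [hA, Set.mem_setOf_eq, Set.mem_iUnion, Set.mem_inter_iff, Set.mem_preimage,
        Set.mem_singleton_iff]
      constructor
      · intro h; exact ⟨hitTime τ x, rfl, h⟩
      · rintro ⟨m, hm, h⟩; omega
    rw [this]
    exact MeasurableSet.iUnion fun m =>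
      (measurable_hitTime τ (measurableSet_singleton m)).inter
        (measurable_hitTime _ MeasurableSet.of_discrete)
  have hae := good_ae hμ hk0 τ
  have hS0meas : MeasurableSet {x : ℕ → ℝ | OccursAt (1 : Equiv.Perm (Fin k)) x 0} := by
    rw [occ0_eq]
    exact measurable_proj k (measurableSet_ordRegion _)
  have hS0 : μ {x : ℕ → ℝ | OccursAt (1 : Equiv.Perm (Fin k)) x 0}
      = ((k.factorial : ℝ≥0∞))⁻¹ := by
    rw [occ0_eq, map_proj hμ k (measurableSet_ordRegion _), Pn_ordRegion]
  have hμA : μ A = 1 - ((k.factorial : ℝ≥0∞))⁻¹ := by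
    have hcong : A =ᵐ[μ] ({x : ℕ → ℝ | OccursAt (1 : Equiv.Perm (Fin k)) x 0}ᶜ : Set (ℕ → ℝ)) := by
      rw [Filter.eventuallyEq_set]
      filter_upwards [hae] with x hx
      rcases dichotomy hk hτ hx.1 hx.2.1 hx.2.2 with ⟨h0, heq, hgt⟩ | ⟨h0, hle, hgt⟩
      · simp only [hA, Set.mem_setOf_eq, Set.mem_compl_iff, not_not]
        constructor
        · intro hlt; omega
        · intro hc; exact absurd h0 hc
      · simp only [hA, Set.mem_setOf_eq, Set.mem_compl_iff]
        constructor
        · intro _; exact h0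
        · intro _; omega
    rw [measure_congr hcong, measure_compl hS0meas (measure_ne_top _ _), measure_univ, hS0]
  have hminset : ∀ n : ℕ, {x : ℕ → ℝ | n < min (hitTime τ x) k}
      = if n < k then {x : ℕ → ℝ | n < hitTime τ x} else ∅ := by
    intro n
    by_cases h : n < k
    · rw [if_pos h]; ext x; simp [lt_min_iff, h]
    · rw [if_neg h]; ext x; simp only [Set.mem_setOf_eq, lt_min_iff,
        Set.mem_empty_iff_false, iff_false, not_and]
      intro _; omega
  have hfι_meas : Measurable (hitTime (1 : Equiv.Perm (Fin k))) := measurable_hitTime _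
  have hfm_meas : Measurable (fun x => min (hitTime τ x) k) :=
    (Measurable.of_discrete (f := fun t : ℕ => min t k)).comp (measurable_hitTime τ)
  have hfinι := tsum_meas_hitTime_ne_top hμ (1 : Equiv.Perm (Fin k)) hk0
  have hfinm : (∑' n : ℕ, μ {x | n < min (hitTime τ x) k}) ≠ ⊤ := by
    rw [tsum_eq_sum (s := Finset.range k) (fun n hn => by
      rw [hminset n, if_neg (by simpa using hn)]
      exact measure_empty)]
    exact (ENNReal.sum_lt_top.mpr fun n _ => measure_lt_top μ _).ne
  have hIntι : Integrable (fun x => ((hitTime (1 : Equiv.Perm (Fin k)) x : ℕ) : ℝ)) μ :=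
    integrable_nat _ hfι_meas hfinι
  have hIntm : Integrable (fun x => ((min (hitTime τ x) k : ℕ) : ℝ)) μ :=
    integrable_nat _ hfm_meas hfinm
  have hind : Set.indicator A (fun x => ((hitTime (1 : Equiv.Perm (Fin k)) x : ℝ)
        - (hitTime τ x : ℝ)))
      =ᵐ[μ] fun x => ((hitTime (1 : Equiv.Perm (Fin k)) x : ℝ)
        - ((min (hitTime τ x) k : ℕ) : ℝ)) := by
    filter_upwards [hae] with x hx
    rcases dichotomy hk hτ hx.1 hx.2.1 hx.2.2 with ⟨h0, heq, hgt⟩ | ⟨h0, hle, hgt⟩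
    · have hxA : x ∉ A := by simp only [hA, Set.mem_setOf_eq]; omega
      rw [Set.indicator_of_notMem hxA, min_eq_right (le_of_lt hgt), heq]
      simp
    · have hxA : x ∈ A := by simp only [hA, Set.mem_setOf_eq]; omega
      rw [Set.indicator_of_mem hxA, min_eq_left hle]
  have hIι : ∫ x, ((hitTime (1 : Equiv.Perm (Fin k)) x : ℕ) : ℝ) ∂μ
      = ∑' n : ℕ, (avoidCount (1 : Equiv.Perm (Fin k)) n : ℝ) / n.factorial := by
    rw [integral_nat _ hfι_meas]
    refine tsum_congr fun n => ?_
    rw [meas_hitTime_gt hμ _ hk0 n, ENNReal.toReal_mul, ENNReal.toReal_inv]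
    simp [div_eq_mul_inv]
  have hIm : ∫ x, ((min (hitTime τ x) k : ℕ) : ℝ) ∂μ
      = ∑ i ∈ Finset.range k, 1 / (i.factorial : ℝ) := by
    rw [integral_nat _ hfm_meas]
    rw [tsum_eq_sum (s := Finset.range k) (fun n hn => by
      rw [hminset n, if_neg (by simpa using hn), measure_empty]
      simp)]
    refine Finset.sum_congr rfl fun n hn => ?_
    rw [hminset n, if_pos (Finset.mem_range.mp hn), meas_hitTime_gt hμ τ (by norm_num) n,
      avoidCount_τ hτ n, ENNReal.toReal_mul, ENNReal.toReal_inv]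
    simp [one_div]
  have hset_int : ∫ x in A, ((hitTime (1 : Equiv.Perm (Fin k)) x : ℝ) - (hitTime τ x : ℝ)) ∂μ
      = (∑' n : ℕ, (avoidCount (1 : Equiv.Perm (Fin k)) n : ℝ) / n.factorial)
        - ∑ i ∈ Finset.range k, 1 / (i.factorial : ℝ) := by
    rw [← integral_indicator hAmeas, integral_congr_ae hind, integral_sub hIntι hIntm, hIι, hIm]
  rw [hset_int, hμA]
  have hf2 : (2 : ℝ) ≤ (k.factorial : ℝ) := by
    exact_mod_cast le_trans hk (Nat.self_le_factorial k)
  have hfle : ((k.factorial : ℝ≥0∞))⁻¹ ≤ 1 := by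
    refine ENNReal.inv_le_one.mpr ?_
    exact_mod_cast Nat.one_le_iff_ne_zero.mpr (Nat.factorial_ne_zero k)
  have htoReal : ((1 : ℝ≥0∞) - ((k.factorial : ℝ≥0∞))⁻¹).toReal
      = 1 - ((k.factorial : ℝ))⁻¹ := by
    rw [ENNReal.toReal_sub_of_le hfle ENNReal.one_ne_top, ENNReal.toReal_one,
      ENNReal.toReal_inv]
    simp
  rw [htoReal]
  have h1 : 1 - ((k.factorial : ℝ))⁻¹ = ((k.factorial : ℝ) - 1) / (k.factorial : ℝ) := by
    field_simp
  rw [h1, one_div_div]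

end
end

section
/- Let σ ∈ S_k and τ ∈ S_ℓ be incomparable patterns. Then μ(T_σ < T_τ) = Σ_{n≥k} |Av_n^σ(σ,τ)| / n!. -/
open MeasureTheory ProbabilityTheory Real

noncomputable section

/-- `avEndCount σ τ n` is `|Av_n^σ(σ,τ)|`: the number of permutations in `S_n` that end
with a consecutive occurrence of `σ` and have no consecutive occurrence of `σ` or of `τ`
other than possibly this final window. -/
def avEndCount {k l : ℕ} (σ : Equiv.Perm (Fin k)) (τ : Equiv.Perm (Fin l)) (n : ℕ) : ℕ :=
  Nat.card {p : Equiv.Perm (Fin n) //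
    PermOccursAt σ p (n - k) ∧
    (∀ i, PermOccursAt σ p i → i = n - k) ∧
    (∀ i, PermOccursAt τ p i → l = k ∧ i = n - k)}

namespace PPaux


def U : Measure ℝ := (volume : Measure ℝ).restrict (Set.Icc 0 1)

lemma U_prob : IsProbabilityMeasure U :=
  ⟨by rw [U, Measure.restrict_apply_univ, Real.volume_Icc]; norm_num⟩

def nu (n : ℕ) : Measure (Fin n → ℝ) := Measure.pi fun _ => U

lemma nu_prob (n : ℕ) : IsProbabilityMeasure (nu n) := by
  haveI := U_prob
  unfold nu; infer_instance

def patSet {n : ℕ} (f : Fin n → Fin n) : Set (Fin n → ℝ) :=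
  {y | ∀ a b, y a < y b ↔ f a < f b}

lemma measurableSet_iff_const {α : Type*} [MeasurableSpace α] {P : α → Prop}
    (hP : MeasurableSet {x | P x}) (C : Prop) : MeasurableSet {x | P x ↔ C} := by
  by_cases h : C
  · simp only [h, iff_true]; exact hP
  · simp only [h, iff_false]; exact hP.compl

lemma measurableSet_patSet {n : ℕ} (f : Fin n → Fin n) : MeasurableSet (patSet f) := by
  have h : patSet f = ⋂ a, ⋂ b, {y : Fin n → ℝ | y a < y b ↔ f a < f b} := by
    ext y; simp [patSet, Set.mem_iInter]
  rw [h]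
  exact .iInter fun a => .iInter fun b =>
    measurableSet_iff_const (measurableSet_lt (measurable_pi_apply a) (measurable_pi_apply b)) _

lemma perm_eq_of_pat {n : ℕ} {p q : Equiv.Perm (Fin n)}
    (h : ∀ a b, p a < p b ↔ q a < q b) : p = q := by
  have hs : StrictMono (fun i => q (p.symm i)) := by
    intro c d hcd
    have h2 := (h (p.symm c) (p.symm d)).mp (by simpa using hcd)
    simpa using h2
  have hr : (fun i => q (p.symm i)) = id := by
    apply (StrictMono.range_inj hs strictMono_id).mp
    rw [Set.range_id, Set.range_eq_univ]
    exact fun b => ⟨p (q.symm b), by simp⟩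
  ext a
  have h3 := congrFun hr (p a)
  simp only [Equiv.symm_apply_apply, id_eq] at h3
  exact congrArg Fin.val h3.symm

lemma exists_pat {n : ℕ} (y : Fin n → ℝ) (hy : Function.Injective y) :
    ∃ p : Equiv.Perm (Fin n), y ∈ patSet ⇑p := by
  have hm : Monotone (y ∘ Tuple.sort y) := Tuple.monotone_sort y
  have hsm : StrictMono (y ∘ Tuple.sort y) :=
    hm.strictMono_of_injective (hy.comp (Equiv.injective _))
  refine ⟨(Tuple.sort y)⁻¹, fun a b => ?_⟩
  have ha : y a = (y ∘ Tuple.sort y) ((Tuple.sort y)⁻¹ a) := by simp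
  have hb : y b = (y ∘ Tuple.sort y) ((Tuple.sort y)⁻¹ b) := by simp
  rw [ha, hb]
  exact hsm.lt_iff_lt

lemma inj_of_pat {n : ℕ} {p : Equiv.Perm (Fin n)} {y : Fin n → ℝ} (hy : y ∈ patSet ⇑p) :
    Function.Injective y := by
  intro a b hab
  by_contra hne
  rcases lt_or_gt_of_ne (fun h : p a = p b => hne (p.injective h)) with h | h
  · exact absurd ((hy a b).mpr h) (by simp [hab])
  · exact absurd ((hy b a).mpr h) (by simp [hab])

lemma nu_two_eq_null {n : ℕ} (a b : Fin n) (hab : a ≠ b) :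
    nu n {y | y a = y b} = 0 := by
  haveI := U_prob
  haveI : SigmaFinite U := inferInstance
  have hf : Measurable (fun y : Fin n → ℝ => (y a, y b)) :=
    (measurable_pi_apply a).prodMk (measurable_pi_apply b)
  have hmap : (nu n).map (fun y => (y a, y b)) = U.prod U := by
    refine (Measure.prod_eq fun s t hs ht => ?_).symm
    rw [Measure.map_apply hf (hs.prod ht)]
    have hpre : (fun y : Fin n → ℝ => (y a, y b)) ⁻¹' (s ×ˢ t)
        = Set.pi Set.univ (fun i => if i = a then s else if i = b then t else Set.univ) := by
      ext y
      simp only [Set.mem_preimage, Set.mem_prod, Set.mem_pi, Set.mem_univ, true_implies]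
      constructor
      · rintro ⟨h1, h2⟩ i
        rcases eq_or_ne i a with rfl | hia
        · simpa using h1
        · rcases eq_or_ne i b with rfl | hib
          · simpa [hia] using h2
          · simp [hia, hib]
      · intro h
        have h1 := h a
        have h2 := h b
        rw [if_pos rfl] at h1
        rw [if_neg hab.symm, if_pos rfl] at h2
        exact ⟨h1, h2⟩
    rw [hpre, nu, Measure.pi_pi]
    have hone : ∀ i ∈ (Finset.univ : Finset (Fin n)), i ∉ ({a, b} : Finset (Fin n)) →
        U (if i = a then s else if i = b then t else Set.univ) = 1 := by
      intro i _ hi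
      simp only [Finset.mem_insert, Finset.mem_singleton, not_or] at hi
      rw [if_neg hi.1, if_neg hi.2]
      exact measure_univ
    rw [← Finset.prod_subset (Finset.subset_univ ({a, b} : Finset (Fin n))) hone,
      Finset.prod_pair hab, if_pos rfl, if_neg hab.symm, if_pos rfl]
  have hdiag : MeasurableSet {p : ℝ × ℝ | p.1 = p.2} :=
    measurableSet_eq_fun measurable_fst measurable_snd
  have hset : {y : Fin n → ℝ | y a = y b}
      = (fun y : Fin n → ℝ => (y a, y b)) ⁻¹' {p | p.1 = p.2} := rfl
  rw [hset, ← Measure.map_apply hf hdiag, hmap, Measure.prod_apply hdiag]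
  have hz : ∀ x : ℝ, U (Prod.mk x ⁻¹' {p : ℝ × ℝ | p.1 = p.2}) = 0 := by
    intro x
    have hxx : (Prod.mk x ⁻¹' {p : ℝ × ℝ | p.1 = p.2}) = {x} := by
      ext z; simp [eq_comm]
    rw [hxx, U, Measure.restrict_apply (measurableSet_singleton x)]
    exact le_antisymm ((measure_mono Set.inter_subset_left).trans (by simp)) zero_le
  have hint : ∫⁻ x, U (Prod.mk x ⁻¹' {p : ℝ × ℝ | p.1 = p.2}) ∂U = ∫⁻ _, 0 ∂U :=
    lintegral_congr hz
  simpa using hint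

def tieSet (n : ℕ) : Set (Fin n → ℝ) := {y | ∃ a b, a ≠ b ∧ y a = y b}

lemma tieSet_null (n : ℕ) : nu n (tieSet n) = 0 := by
  have h : tieSet n = ⋃ a, ⋃ b, ⋃ (_ : a ≠ b), {y : Fin n → ℝ | y a = y b} := by
    ext y; simp [tieSet]
  rw [h]
  exact measure_iUnion_null fun a => measure_iUnion_null fun b =>
    measure_iUnion_null fun hab => nu_two_eq_null a b hab

lemma not_tie_inj {n : ℕ} {y : Fin n → ℝ} (hy : y ∉ tieSet n) : Function.Injective y := by
  intro a b hab
  by_contra hne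
  exact hy ⟨a, b, hne, hab⟩

lemma nu_pat_comp {n : ℕ} (q : Equiv.Perm (Fin n)) (p : Fin n ≃ Fin n) :
    nu n (patSet (⇑q ∘ ⇑p)) = nu n (patSet ⇑q) := by
  haveI := U_prob
  have hmp := measurePreserving_piCongrLeft (fun _ : Fin n => U) p
  have hpre : (MeasurableEquiv.piCongrLeft (fun _ : Fin n => ℝ) p) ⁻¹' (patSet ⇑q)
      = patSet (⇑q ∘ ⇑p) := by
    ext y
    simp only [Set.mem_preimage, MeasurableEquiv.coe_piCongrLeft, patSet, Set.mem_setOf_eq,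
      Function.comp_apply]
    constructor
    · intro hy a b
      have h2 := hy (p a) (p b)
      rwa [Equiv.piCongrLeft_apply_apply, Equiv.piCongrLeft_apply_apply] at h2
    · intro hy a b
      conv_lhs => rw [← p.apply_symm_apply a, ← p.apply_symm_apply b,
        Equiv.piCongrLeft_apply_apply, Equiv.piCongrLeft_apply_apply]
      have h2 := hy (p.symm a) (p.symm b)
      rwa [p.apply_symm_apply, p.apply_symm_apply] at h2
  have := hmp.measure_preimage (measurableSet_patSet (⇑q)).nullMeasurableSet
  rw [hpre] at this
  exact this

lemma nu_pat_eq {n : ℕ} (q q' : Equiv.Perm (Fin n)) :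
    nu n (patSet ⇑q) = nu n (patSet ⇑q') := by
  have h := nu_pat_comp q (q⁻¹ * q' : Equiv.Perm (Fin n))
  have hc : ⇑q ∘ ⇑(q⁻¹ * q' : Equiv.Perm (Fin n)) = ⇑q' := by
    funext a; simp [Equiv.Perm.mul_apply]
  rw [hc] at h
  exact h.symm

lemma nu_patSet {n : ℕ} (p : Equiv.Perm (Fin n)) :
    nu n (patSet ⇑p) = ((n.factorial : ENNReal))⁻¹ := by
  haveI := nu_prob n
  have hdisj : Pairwise (Function.onFun Disjoint fun q : Equiv.Perm (Fin n) => patSet ⇑q) := by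
    intro q q' hqq'
    rw [Function.onFun, Set.disjoint_left]
    intro y hyq hyq'
    exact hqq' (perm_eq_of_pat fun a b => ((hyq a b).symm.trans (hyq' a b)))
  have hcover : (Set.univ : Set (Fin n → ℝ)) ⊆ tieSet n ∪ ⋃ q : Equiv.Perm (Fin n), patSet ⇑q := by
    intro y _
    by_cases hy : y ∈ tieSet n
    · exact Or.inl hy
    · rcases exists_pat y (not_tie_inj hy) with ⟨q, hq⟩
      exact Or.inr (Set.mem_iUnion.mpr ⟨q, hq⟩)
  have hU : nu n (⋃ q : Equiv.Perm (Fin n), patSet ⇑q)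
      = (n.factorial : ENNReal) * nu n (patSet ⇑p) := by
    rw [measure_iUnion hdisj fun q => measurableSet_patSet _]
    rw [tsum_fintype]
    rw [Finset.sum_congr rfl fun q _ => nu_pat_eq q p]
    rw [Finset.sum_const, Finset.card_univ, Fintype.card_perm, Fintype.card_fin, nsmul_eq_mul]
  have h1 : (1 : ENNReal) ≤ nu n (⋃ q : Equiv.Perm (Fin n), patSet ⇑q) := by
    calc (1 : ENNReal) = nu n Set.univ := measure_univ.symm
    _ ≤ nu n (tieSet n ∪ ⋃ q : Equiv.Perm (Fin n), patSet ⇑q) := measure_mono hcover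
    _ ≤ nu n (tieSet n) + nu n (⋃ q : Equiv.Perm (Fin n), patSet ⇑q) := measure_union_le _ _
    _ = nu n (⋃ q : Equiv.Perm (Fin n), patSet ⇑q) := by rw [tieSet_null, zero_add]
  have h2 : nu n (⋃ q : Equiv.Perm (Fin n), patSet ⇑q) ≤ 1 := prob_le_one
  have heq : (n.factorial : ENNReal) * nu n (patSet ⇑p) = 1 := by
    rw [← hU]; exact le_antisymm h2 h1
  have hfne : (n.factorial : ENNReal) ≠ 0 := by
    simp [Nat.factorial_ne_zero]
  have hftop : (n.factorial : ENNReal) ≠ ⊤ := ENNReal.natCast_ne_top _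
  calc nu n (patSet ⇑p) = (n.factorial : ENNReal)⁻¹ * ((n.factorial : ENNReal) * nu n (patSet ⇑p)) := by
        rw [← mul_assoc, ENNReal.inv_mul_cancel hfne hftop, one_mul]
  _ = (n.factorial : ENNReal)⁻¹ := by rw [heq, mul_one]


section SeqSide

lemma map_proj {μ : Measure (ℕ → ℝ)} (hμ : IsIIDUniform μ) (n : ℕ)
    {S : Set (Fin n → ℝ)} (hS : MeasurableSet S) :
    μ ((fun x (i : Fin n) => x ↑i) ⁻¹' S) = nu n S := by
  have hm : Measurable (fun (x : ℕ → ℝ) (i : Fin n) => x ↑i) :=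
    measurable_pi_lambda _ fun i => measurable_pi_apply _
  rw [← Measure.map_apply hm hS, hμ.2 n]
  rfl

lemma measurableSet_occ {r : ℕ} (ρ : Equiv.Perm (Fin r)) (i : ℕ) :
    MeasurableSet {x : ℕ → ℝ | OccursAt ρ x i} := by
  have h : {x : ℕ → ℝ | OccursAt ρ x i}
      = ⋂ a : Fin r, ⋂ b : Fin r, {x : ℕ → ℝ | x (i + ↑a) < x (i + ↑b) ↔ ρ a < ρ b} := by
    ext x; simp [OccursAt, Set.mem_iInter]
  rw [h]
  exact .iInter fun a => .iInter fun b =>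
    measurableSet_iff_const (P := fun x : ℕ → ℝ => x (i + ↑a) < x (i + ↑b))
      (measurableSet_lt (measurable_pi_apply _) (measurable_pi_apply _)) _

lemma measurableSet_hitSet {r : ℕ} (ρ : Equiv.Perm (Fin r)) (j : ℕ) :
    MeasurableSet {x : ℕ → ℝ | r ≤ j ∧ OccursAt ρ x (j - r)} := by
  by_cases h : r ≤ j
  · simp only [h, true_and]; exact measurableSet_occ ρ (j - r)
  · simp only [h, false_and, Set.setOf_false]; exact MeasurableSet.empty

lemma hitTime_gt_iff {r : ℕ} (ρ : Equiv.Perm (Fin r)) (x : ℕ → ℝ) (n : ℕ) :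
    n < hitTime ρ x ↔ (∃ j, r ≤ j ∧ OccursAt ρ x (j - r)) ∧
      ∀ j ≤ n, ¬(r ≤ j ∧ OccursAt ρ x (j - r)) := by
  unfold hitTime
  constructor
  · intro h
    have hne : {j | r ≤ j ∧ OccursAt ρ x (j - r)}.Nonempty := by
      by_contra hemp
      rw [Set.not_nonempty_iff_eq_empty] at hemp
      rw [hemp, Nat.sInf_empty] at h
      omega
    refine ⟨hne, fun j hj hmem => ?_⟩
    have h2 := Nat.sInf_le (s := {j | r ≤ j ∧ OccursAt ρ x (j - r)}) hmem
    omega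
  · rintro ⟨⟨j0, hj0⟩, hbelow⟩
    have hmem := Nat.sInf_mem (⟨j0, hj0⟩ : {j | r ≤ j ∧ OccursAt ρ x (j - r)}.Nonempty)
    by_contra hle
    push_neg at hle
    exact hbelow _ hle hmem

lemma hitTime_eq_iff {r : ℕ} (ρ : Equiv.Perm (Fin r)) (x : ℕ → ℝ) {n : ℕ} (hn : 0 < n) :
    hitTime ρ x = n ↔ (r ≤ n ∧ OccursAt ρ x (n - r)) ∧
      ∀ m < n, ¬(r ≤ m ∧ OccursAt ρ x (m - r)) := by
  unfold hitTime
  constructor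
  · intro h
    have hne : {j | r ≤ j ∧ OccursAt ρ x (j - r)}.Nonempty := by
      by_contra hemp
      rw [Set.not_nonempty_iff_eq_empty] at hemp
      rw [hemp, Nat.sInf_empty] at h
      omega
    have hmem := Nat.sInf_mem hne
    rw [h] at hmem
    refine ⟨hmem, fun m hm hmmem => ?_⟩
    have h2 := Nat.sInf_le (show m ∈ {j | r ≤ j ∧ OccursAt ρ x (j - r)} from hmmem)
    omega
  · rintro ⟨hmem, hbelow⟩
    refine le_antisymm (Nat.sInf_le (show n ∈ {j | r ≤ j ∧ OccursAt ρ x (j - r)} from hmem)) ?_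
    by_contra hlt
    push_neg at hlt
    have hmem2 := Nat.sInf_mem (⟨n, hmem⟩ : {j | r ≤ j ∧ OccursAt ρ x (j - r)}.Nonempty)
    exact hbelow _ hlt hmem2

lemma never_of_no_hit {r : ℕ} (ρ : Equiv.Perm (Fin r)) (x : ℕ → ℝ)
    (h : ∀ j, ¬(r ≤ j ∧ OccursAt ρ x (j - r))) : ∀ i, ¬ OccursAt ρ x i := by
  intro i hi
  exact h (i + r) ⟨Nat.le_add_left r i, by simpa [Nat.add_sub_cancel] using hi⟩

lemma occ_agree {r : ℕ} (ρ : Equiv.Perm (Fin r)) {x x' : ℕ → ℝ} {i n : ℕ}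
    (h : ∀ t, t < n → x t = x' t) (hi : i + r ≤ n) :
    OccursAt ρ x i ↔ OccursAt ρ x' i := by
  have e : ∀ a : Fin r, x (i + ↑a) = x' (i + ↑a) := fun a => h _ (by have := a.isLt; omega)
  constructor <;> intro H a b
  · rw [← e a, ← e b]; exact H a b
  · rw [e a, e b]; exact H a b

lemma occursAt_iff_permOccursAt {r n : ℕ} (ρ : Equiv.Perm (Fin r)) {i : ℕ} (h : i + r ≤ n)
    (x : ℕ → ℝ) (p : Equiv.Perm (Fin n)) (hPat : ∀ a b : Fin n, x ↑a < x ↑b ↔ p a < p b) :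
    OccursAt ρ x i ↔ PermOccursAt ρ p i := by
  constructor
  · intro ho
    exact ⟨h, fun a b =>
      (hPat ⟨i + ↑a, by have := a.isLt; omega⟩ ⟨i + ↑b, by have := b.isLt; omega⟩).symm.trans
        (ho a b)⟩
  · rintro ⟨h', hp⟩ a b
    exact (hPat ⟨i + ↑a, by have := a.isLt; omega⟩ ⟨i + ↑b, by have := b.isLt; omega⟩).trans
      (hp a b)

lemma mem_B_iff_good {k l n : ℕ} (σ : Equiv.Perm (Fin k)) (τ : Equiv.Perm (Fin l))
    (hinc : Incomparable σ τ) (x : ℕ → ℝ) (p : Equiv.Perm (Fin n))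
    (hPat : ∀ a b : Fin n, x ↑a < x ↑b ↔ p a < p b) :
    ((k ≤ n ∧ OccursAt σ x (n - k)) ∧
      (∀ m, m < n → ¬(k ≤ m ∧ OccursAt σ x (m - k))) ∧
      (∀ j, j ≤ n → ¬(l ≤ j ∧ OccursAt τ x (j - l)))) ↔
    (PermOccursAt σ p (n - k) ∧ (∀ i, PermOccursAt σ p i → i = n - k) ∧
      (∀ i, PermOccursAt τ p i → l = k ∧ i = n - k)) := by
  constructor
  · rintro ⟨⟨hkn, hocc⟩, huniq, htau⟩
    have hnk : (n - k) + k ≤ n := by omega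
    refine ⟨(occursAt_iff_permOccursAt σ hnk x p hPat).mp hocc, ?_, ?_⟩
    · intro i hi
      have hik : i + k ≤ n := hi.choose
      have hoi : OccursAt σ x i := (occursAt_iff_permOccursAt σ hik x p hPat).mpr hi
      by_contra hne
      have hlt : i + k < n := by omega
      exact huniq (i + k) hlt ⟨Nat.le_add_left _ _, by simpa [Nat.add_sub_cancel] using hoi⟩
    · intro i hi
      have hil : i + l ≤ n := hi.choose
      have hoi : OccursAt τ x i := (occursAt_iff_permOccursAt τ hil x p hPat).mpr hi
      exact absurd ⟨Nat.le_add_left _ _, by simpa [Nat.add_sub_cancel] using hoi⟩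
        (htau (i + l) hil)
  · rintro ⟨hP, huniq, htau⟩
    have hnk : (n - k) + k ≤ n := hP.choose
    have hkn : k ≤ n := le_trans (Nat.le_add_left k (n - k)) hnk
    refine ⟨⟨hkn, (occursAt_iff_permOccursAt σ hnk x p hPat).mpr hP⟩, ?_, ?_⟩
    · rintro m hm ⟨hkm, hoc⟩
      have h2 : (m - k) + k ≤ n := by omega
      have h3 := huniq (m - k) ((occursAt_iff_permOccursAt σ h2 x p hPat).mp hoc)
      omega
    · rintro j hj ⟨hlj, hoc⟩
      have h2 : (j - l) + l ≤ n := by omega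
      have hPt := (occursAt_iff_permOccursAt τ h2 x p hPat).mp hoc
      obtain ⟨hlk, hidx⟩ := htau (j - l) hPt
      have hoσ : OccursAt σ x (n - k) := (occursAt_iff_permOccursAt σ hnk x p hPat).mpr hP
      have hoτ : OccursAt τ x (n - k) := by rw [← hidx]; exact hoc
      refine absurd ?_ (hinc.2 0)
      refine ⟨by omega, fun a b => ?_⟩
      have hak : (0 + ↑a : ℕ) < k := by have := a.isLt; omega
      have hbk : (0 + ↑b : ℕ) < k := by have := b.isLt; omega
      have h3 := hoσ ⟨0 + ↑a, hak⟩ ⟨0 + ↑b, hbk⟩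
      have h4 := hoτ a b
      rw [← h3]
      rw [show (n - k) + ((0:ℕ) + ↑a) = (n - k) + ↑a by omega,
        show (n - k) + ((0:ℕ) + ↑b) = (n - k) + ↑b by omega]
      exact h4

end SeqSide

section Never

def blockSet {r : ℕ} (ρ : Equiv.Perm (Fin r)) (q : ℕ) : Set (Fin q → ℝ) :=
  {y | ∀ (m : ℕ) (hm : m * r + r ≤ q),
    (fun c : Fin r => y ⟨m * r + ↑c, Nat.lt_of_lt_of_le (Nat.add_lt_add_left c.isLt _) hm⟩)
      ∈ (patSet ⇑ρ)ᶜ}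

lemma measurableSet_blockSet {r : ℕ} (ρ : Equiv.Perm (Fin r)) (q : ℕ) :
    MeasurableSet (blockSet ρ q) := by
  have h : blockSet ρ q = ⋂ (m : ℕ), ⋂ (hm : m * r + r ≤ q),
      (fun (y : Fin q → ℝ) (c : Fin r) =>
        y ⟨m * r + ↑c, Nat.lt_of_lt_of_le (Nat.add_lt_add_left c.isLt _) hm⟩) ⁻¹'
          (patSet ⇑ρ)ᶜ := by
    ext y; simp [blockSet, Set.mem_iInter]
  rw [h]
  exact .iInter fun m => .iInter fun hm =>
    (measurable_pi_lambda _ fun c => measurable_pi_apply _) (measurableSet_patSet _).compl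

lemma nu_blockSet {r : ℕ} (ρ : Equiv.Perm (Fin r)) (hr : 1 ≤ r) (M : ℕ) :
    nu (M * r) (blockSet ρ (M * r)) = (nu r ((patSet ⇑ρ)ᶜ)) ^ M := by
  induction M with
  | zero =>
    haveI := nu_prob 0
    rw [Nat.zero_mul]
    have hset : blockSet ρ 0 = Set.univ := by
      ext y
      simp only [blockSet, Set.mem_setOf_eq, Set.mem_univ, iff_true]
      exact fun m hm => absurd hm (by omega)
    rw [hset, pow_zero, measure_univ]
  | succ M ih =>
    haveI := U_prob
    haveI : SigmaFinite U := inferInstance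
    haveI := nu_prob r
    haveI := nu_prob (M * r)
    rw [Nat.succ_mul]
    set N := M * r with hN
    set F : ((Fin N → ℝ) × (Fin r → ℝ)) → (Fin (N + r) → ℝ) :=
      fun zw => Equiv.piCongrLeft (fun _ => ℝ) finSumFinEquiv
        ((Equiv.sumPiEquivProdPi (fun _ : Fin N ⊕ Fin r => ℝ)).symm zw) with hF
    have hmp : MeasurePreserving F ((nu N).prod (nu r)) (nu (N + r)) := by
      have h1 := measurePreserving_sumPiEquivProdPi_symm (fun _ : Fin N ⊕ Fin r => U)
      have h2 := measurePreserving_piCongrLeft (fun _ : Fin (N + r) => U)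
        (finSumFinEquiv : Fin N ⊕ Fin r ≃ Fin (N + r))
      exact h2.comp h1
    have hwl : ∀ (z : Fin N → ℝ) (w : Fin r → ℝ) (j : Fin (N + r)) (i : Fin N),
        (j : ℕ) = (i : ℕ) → F (z, w) j = z i := by
      intro z w j i hj
      have hji : j = Fin.castAdd r i := Fin.ext (by simpa using hj)
      rw [hF, hji, ← finSumFinEquiv_apply_left i]
      exact Equiv.piCongrLeft_sumInl (fun _ => ℝ) finSumFinEquiv z w i
    have hwr : ∀ (z : Fin N → ℝ) (w : Fin r → ℝ) (j : Fin (N + r)) (c : Fin r),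
        (j : ℕ) = N + (c : ℕ) → F (z, w) j = w c := by
      intro z w j c hj
      have hji : j = Fin.natAdd N c := Fin.ext (by simpa using hj)
      rw [hF, hji, ← finSumFinEquiv_apply_right c]
      exact Equiv.piCongrLeft_sumInr (fun _ => ℝ) finSumFinEquiv z w c
    have hpre : F ⁻¹' (blockSet ρ (N + r)) = (blockSet ρ N) ×ˢ ((patSet ⇑ρ)ᶜ) := by
      ext ⟨z, w⟩
      simp only [Set.mem_preimage, Set.mem_prod]
      constructor
      · intro h
        refine ⟨?_, ?_⟩
        · intro m hm
          have h2 := h m (by omega)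
          have hfe : (fun c : Fin r => F (z, w)
              ⟨m * r + ↑c, Nat.lt_of_lt_of_le (Nat.add_lt_add_left c.isLt _) (by omega)⟩)
              = fun c : Fin r => z
              ⟨m * r + ↑c, Nat.lt_of_lt_of_le (Nat.add_lt_add_left c.isLt _) hm⟩ := by
            funext c
            exact hwl z w _ _ rfl
          rwa [hfe] at h2
        · have h2 := h M (by omega)
          have hfe : (fun c : Fin r => F (z, w)
              ⟨M * r + ↑c, Nat.lt_of_lt_of_le (Nat.add_lt_add_left c.isLt _) (by omega)⟩)
              = w := by
            funext c
            exact hwr z w _ c rfl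
          rwa [hfe] at h2
      · rintro ⟨hz, hw⟩ m hm
        have e1 : (m + 1) * r = m * r + r := Nat.succ_mul m r
        have e2 : (M + 1) * r = M * r + r := Nat.succ_mul M r
        have hmM : m ≤ M := by
          have h3 := Nat.le_of_mul_le_mul_right
            (show (m + 1) * r ≤ (M + 1) * r by omega) (show 0 < r by omega)
          omega
        rcases Nat.lt_or_ge m M with hlt | hge
        · have hmr : m * r + r ≤ N := by
            have h4 := Nat.mul_le_mul_right r (show m + 1 ≤ M by omega)
            omega
          have h2 := hz m hmr
          have hfe : (fun c : Fin r => F (z, w)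
              ⟨m * r + ↑c, Nat.lt_of_lt_of_le (Nat.add_lt_add_left c.isLt _) hm⟩)
              = fun c : Fin r => z
              ⟨m * r + ↑c, Nat.lt_of_lt_of_le (Nat.add_lt_add_left c.isLt _) hmr⟩ := by
            funext c
            exact hwl z w _ _ rfl
          rwa [hfe]
        · have hmeq : m = M := le_antisymm hmM hge
          subst hmeq
          have hfe : (fun c : Fin r => F (z, w)
              ⟨m * r + ↑c, Nat.lt_of_lt_of_le (Nat.add_lt_add_left c.isLt _) hm⟩)
              = w := by
            funext c
            exact hwr z w _ c (by simp [hN])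
          rwa [hfe]
    have key : nu (N + r) (blockSet ρ (N + r)) = ((nu N).prod (nu r)) (F ⁻¹' blockSet ρ (N + r)) :=
      (hmp.measure_preimage (measurableSet_blockSet ρ (N + r)).nullMeasurableSet).symm
    rw [key, hpre, Measure.prod_prod, ih, pow_succ]

lemma never_null {μ : Measure (ℕ → ℝ)} (hμ : IsIIDUniform μ) {r : ℕ} (ρ : Equiv.Perm (Fin r))
    (hr : 1 ≤ r) : μ {x | ∀ i, ¬ OccursAt ρ x i} = 0 := by
  haveI := U_prob
  have hBad : nu r ((patSet ⇑ρ)ᶜ) < 1 := by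
    haveI := nu_prob r
    rw [measure_compl (measurableSet_patSet _) (measure_ne_top _ _), nu_patSet ρ, measure_univ]
    exact ENNReal.sub_lt_self ENNReal.one_ne_top one_ne_zero
      (ENNReal.inv_ne_zero.mpr (ENNReal.natCast_ne_top _))
  have hle : ∀ M : ℕ, μ {x | ∀ i, ¬ OccursAt ρ x i} ≤ (nu r ((patSet ⇑ρ)ᶜ)) ^ M := by
    intro M
    have hsub : {x : ℕ → ℝ | ∀ i, ¬ OccursAt ρ x i}
        ⊆ (fun x (i : Fin (M * r)) => x ↑i) ⁻¹' (blockSet ρ (M * r)) := by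
      intro x hx m hm hpat
      exact hx (m * r) (fun a b => hpat a b)
    calc μ {x : ℕ → ℝ | ∀ i, ¬ OccursAt ρ x i}
        ≤ μ ((fun x (i : Fin (M * r)) => x ↑i) ⁻¹' (blockSet ρ (M * r))) := measure_mono hsub
      _ = nu (M * r) (blockSet ρ (M * r)) := map_proj hμ _ (measurableSet_blockSet ρ _)
      _ = (nu r ((patSet ⇑ρ)ᶜ)) ^ M := nu_blockSet ρ hr M
  have htend := ENNReal.tendsto_pow_atTop_nhds_zero_of_lt_one hBad
  exact le_antisymm (ge_of_tendsto' htend hle) zero_le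

end Never

end PPaux

theorem prob_precedes_eq_tsum (μ : Measure (ℕ → ℝ)) (hμ : IsIIDUniform μ)
    {k l : ℕ} (σ : Equiv.Perm (Fin k)) (τ : Equiv.Perm (Fin l))
    (hinc : Incomparable σ τ) :
    μ {x | hitTime σ x < hitTime τ x} =
      ∑' n : ℕ, (avEndCount σ τ n : ENNReal) / (n.factorial : ENNReal) := by
  classical
  have hk1 : 1 ≤ k := by
    by_contra hk
    have hk0 : k = 0 := by omega
    subst hk0
    exact hinc.1 0 ⟨by omega, fun a b => a.elim0⟩
  have hl1 : 1 ≤ l := by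
    by_contra hl
    have hl0 : l = 0 := by omega
    subst hl0
    exact hinc.2 0 ⟨by omega, fun a b => a.elim0⟩
  have hNτ : μ {x | ∀ i, ¬ OccursAt τ x i} = 0 := PPaux.never_null hμ τ hl1
  have hNσ : μ {x | ∀ i, ¬ OccursAt σ x i} = 0 := PPaux.never_null hμ σ hk1
  set A : ℕ → Set (ℕ → ℝ) := fun n => {x | hitTime σ x = n ∧ n < hitTime τ x} with hA
  have hAm : ∀ n, MeasurableSet (A n) := by
    intro n
    have hgt : MeasurableSet {x : ℕ → ℝ | n < hitTime τ x} := by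
      have hset : {x : ℕ → ℝ | n < hitTime τ x}
          = (⋃ j, {x : ℕ → ℝ | l ≤ j ∧ OccursAt τ x (j - l)}) ∩
            ⋂ j, ⋂ (_ : j ≤ n), {x : ℕ → ℝ | l ≤ j ∧ OccursAt τ x (j - l)}ᶜ := by
        ext x
        simp only [Set.mem_setOf_eq, Set.mem_inter_iff, Set.mem_iUnion, Set.mem_iInter,
          Set.mem_compl_iff]
        exact PPaux.hitTime_gt_iff τ x n
      rw [hset]
      exact ((MeasurableSet.iUnion fun j => PPaux.measurableSet_hitSet τ j).inter
        (.iInter fun j => .iInter fun _ => (PPaux.measurableSet_hitSet τ j).compl))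
    rcases Nat.eq_zero_or_pos n with rfl | hn
    · have hset : {x : ℕ → ℝ | hitTime σ x = 0}
          = (⋂ j, {x : ℕ → ℝ | k ≤ j ∧ OccursAt σ x (j - k)}ᶜ) ∪
            {x : ℕ → ℝ | k ≤ 0 ∧ OccursAt σ x (0 - k)} := by
        ext x
        simp only [Set.mem_setOf_eq, Set.mem_union, Set.mem_iInter, Set.mem_compl_iff]
        unfold hitTime
        rw [Nat.sInf_eq_zero]
        constructor
        · rintro (h0 | hemp)
          · exact Or.inr h0
          · exact Or.inl (fun j hj => Set.eq_empty_iff_forall_notMem.mp hemp j hj)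
        · rintro (hall | h0)
          · exact Or.inr (Set.eq_empty_iff_forall_notMem.mpr hall)
          · exact Or.inl h0
      have h1 : MeasurableSet {x : ℕ → ℝ | hitTime σ x = 0} := by
        rw [hset]
        exact ((MeasurableSet.iInter fun j => (PPaux.measurableSet_hitSet σ j).compl).union
          (PPaux.measurableSet_hitSet σ 0))
      exact h1.inter hgt
    · have hset : {x : ℕ → ℝ | hitTime σ x = n}
          = {x : ℕ → ℝ | k ≤ n ∧ OccursAt σ x (n - k)} ∩
            ⋂ m, ⋂ (_ : m < n), {x : ℕ → ℝ | k ≤ m ∧ OccursAt σ x (m - k)}ᶜ := by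
        ext x
        simp only [Set.mem_setOf_eq, Set.mem_inter_iff, Set.mem_iInter, Set.mem_compl_iff]
        exact PPaux.hitTime_eq_iff σ x hn
      have h1 : MeasurableSet {x : ℕ → ℝ | hitTime σ x = n} := by
        rw [hset]
        exact ((PPaux.measurableSet_hitSet σ n).inter
          (.iInter fun m => .iInter fun _ => (PPaux.measurableSet_hitSet σ m).compl))
      exact h1.inter hgt
  have hdecomp : {x : ℕ → ℝ | hitTime σ x < hitTime τ x} = ⋃ n, A n := by
    ext x
    constructor
    · intro h
      exact Set.mem_iUnion.mpr ⟨hitTime σ x, rfl, h⟩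
    · intro h
      obtain ⟨n, h1, h2⟩ := Set.mem_iUnion.mp h
      exact lt_of_le_of_lt h1.le h2
  have hdisj : Pairwise (Function.onFun Disjoint A) := by
    intro m n hmn
    rw [Function.onFun, Set.disjoint_left]
    rintro x ⟨h1, -⟩ ⟨h2, -⟩
    exact hmn (h1.symm.trans h2)
  rw [hdecomp, measure_iUnion hdisj hAm]
  refine tsum_congr fun n => ?_
  rcases lt_or_ge n k with hnk | hkn
  · have hav : avEndCount σ τ n = 0 := by
      rw [avEndCount]
      have hem : IsEmpty {p : Equiv.Perm (Fin n) //
          PermOccursAt σ p (n - k) ∧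
          (∀ i, PermOccursAt σ p i → i = n - k) ∧
          (∀ i, PermOccursAt τ p i → l = k ∧ i = n - k)} := by
        constructor
        rintro ⟨p, hp, -, -⟩
        have h1 := hp.choose
        omega
      exact Nat.card_of_isEmpty
    rw [hav]
    simp only [Nat.cast_zero, ENNReal.zero_div]
    rcases Nat.eq_zero_or_pos n with rfl | hn
    · refine measure_mono_null ?_ hNσ
      rintro x ⟨h0, -⟩
      intro i hocc
      have hmem : (i + k) ∈ {j | k ≤ j ∧ OccursAt σ x (j - k)} :=
        ⟨Nat.le_add_left _ _, by simpa [Nat.add_sub_cancel] using hocc⟩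
      have hmem2 := Nat.sInf_mem (⟨i + k, hmem⟩ :
        {j | k ≤ j ∧ OccursAt σ x (j - k)}.Nonempty)
      rw [show sInf {j | k ≤ j ∧ OccursAt σ x (j - k)} = hitTime σ x from rfl, h0] at hmem2
      exact absurd hmem2.1 (by omega)
    · have hemp : A n ⊆ (∅ : Set (ℕ → ℝ)) := by
        rintro x ⟨h1, -⟩
        have h2 := ((PPaux.hitTime_eq_iff σ x hn).mp h1).1.1
        exact absurd h2 (by omega)
      exact measure_mono_null hemp measure_empty
  · have hn1 : 0 < n := by omega
    set P : Equiv.Perm (Fin n) → Prop := fun p =>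
      PermOccursAt σ p (n - k) ∧ (∀ i, PermOccursAt σ p i → i = n - k) ∧
        (∀ i, PermOccursAt τ p i → l = k ∧ i = n - k) with hP
    set B : Set (ℕ → ℝ) := {x | (k ≤ n ∧ OccursAt σ x (n - k)) ∧
      (∀ m, m < n → ¬(k ≤ m ∧ OccursAt σ x (m - k))) ∧
      (∀ j, j ≤ n → ¬(l ≤ j ∧ OccursAt τ x (j - l)))} with hB
    have hAB : A n = B ∩ {x | ∃ j, l ≤ j ∧ OccursAt τ x (j - l)} := by
      ext x
      simp only [hA, hB, Set.mem_setOf_eq, Set.mem_inter_iff]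
      rw [PPaux.hitTime_eq_iff σ x hn1, PPaux.hitTime_gt_iff τ x n]
      tauto
    have hABμ : μ (A n) = μ B := by
      refine le_antisymm (measure_mono (by rw [hAB]; exact Set.inter_subset_left)) ?_
      have hsplit : B ⊆ A n ∪ {x | ∀ i, ¬ OccursAt τ x i} := by
        intro x hx
        by_cases hex : ∃ j, l ≤ j ∧ OccursAt τ x (j - l)
        · left
          rw [hAB]
          exact ⟨hx, hex⟩
        · right
          push_neg at hex
          exact PPaux.never_of_no_hit τ x (fun j hj => hex j hj.1 hj.2)
      calc μ B ≤ μ (A n ∪ {x | ∀ i, ¬ OccursAt τ x i}) := measure_mono hsplit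
        _ ≤ μ (A n) + μ {x | ∀ i, ¬ OccursAt τ x i} := measure_union_le _ _
        _ = μ (A n) := by rw [hNτ, add_zero]
    set yext : (Fin n → ℝ) → (ℕ → ℝ) := fun y i => if h : i < n then y ⟨i, h⟩ else 0 with hyext
    have hyext_meas : Measurable yext := by
      apply measurable_pi_lambda
      intro i
      by_cases h : i < n
      · simp only [hyext, dif_pos h]
        exact measurable_pi_apply _
      · simp only [hyext, dif_neg h]
        exact measurable_const
    have hBmeas : MeasurableSet B := by
      have hfirst : MeasurableSet {x : ℕ → ℝ | k ≤ n ∧ OccursAt σ x (n - k)} :=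
        PPaux.measurableSet_hitSet σ n
      have hsecond : MeasurableSet {x : ℕ → ℝ | ∀ m, m < n → ¬(k ≤ m ∧ OccursAt σ x (m - k))} := by
        have hs : {x : ℕ → ℝ | ∀ m, m < n → ¬(k ≤ m ∧ OccursAt σ x (m - k))}
            = ⋂ m, ⋂ (_ : m < n), {x : ℕ → ℝ | k ≤ m ∧ OccursAt σ x (m - k)}ᶜ := by
          ext x; simp [Set.mem_iInter]
        rw [hs]
        exact .iInter fun m => .iInter fun _ => (PPaux.measurableSet_hitSet σ m).compl
      have hthird : MeasurableSet {x : ℕ → ℝ | ∀ j, j ≤ n → ¬(l ≤ j ∧ OccursAt τ x (j - l))} := by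
        have hs : {x : ℕ → ℝ | ∀ j, j ≤ n → ¬(l ≤ j ∧ OccursAt τ x (j - l))}
            = ⋂ j, ⋂ (_ : j ≤ n), {x : ℕ → ℝ | l ≤ j ∧ OccursAt τ x (j - l)}ᶜ := by
          ext x; simp [Set.mem_iInter]
        rw [hs]
        exact .iInter fun j => .iInter fun _ => (PPaux.measurableSet_hitSet τ j).compl
      exact hfirst.inter (hsecond.inter hthird)
    set C : Set (Fin n → ℝ) := yext ⁻¹' B with hC
    have hCmeas : MeasurableSet C := hyext_meas hBmeas
    have hBag : ∀ x x' : ℕ → ℝ, (∀ t, t < n → x t = x' t) → (x ∈ B ↔ x' ∈ B) := by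
      intro x x' hxx
      simp only [hB, Set.mem_setOf_eq]
      apply and_congr
      · exact and_congr_right fun hk' => PPaux.occ_agree σ hxx (by omega)
      apply and_congr
      · exact forall_congr' fun m => imp_congr_right fun hm =>
          not_congr (and_congr_right fun hkm => PPaux.occ_agree σ hxx (by omega))
      · exact forall_congr' fun j => imp_congr_right fun hj =>
          not_congr (and_congr_right fun hlj => PPaux.occ_agree τ hxx (by omega))
    have hBC : B = (fun x (i : Fin n) => x ↑i) ⁻¹' C := by
      ext x
      simp only [hC, Set.mem_preimage]
      have hag : ∀ t, t < n → yext (fun i : Fin n => x ↑i) t = x t := by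
        intro t ht
        simp [hyext, ht]
      exact (hBag (yext fun i : Fin n => x ↑i) x hag).symm
    have hμB : μ B = PPaux.nu n C := by
      rw [hBC]
      exact PPaux.map_proj hμ n hCmeas
    set Good : Finset (Equiv.Perm (Fin n)) := Finset.univ.filter P with hGood
    have hPat_of : ∀ (y : Fin n → ℝ) (p : Equiv.Perm (Fin n)), y ∈ PPaux.patSet ⇑p →
        ∀ a b : Fin n, yext y ↑a < yext y ↑b ↔ p a < p b := by
      intro y p hp a b
      have ha : yext y ↑a = y a := by simp [hyext, a.isLt]
      have hb : yext y ↑b = y b := by simp [hyext, b.isLt]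
      rw [ha, hb]
      exact hp a b
    have hCG : PPaux.nu n C = PPaux.nu n (⋃ p ∈ Good, PPaux.patSet ⇑p) := by
      have hsub1 : C ⊆ (⋃ p ∈ Good, PPaux.patSet ⇑p) ∪ PPaux.tieSet n := by
        intro y hy
        by_cases ht : y ∈ PPaux.tieSet n
        · exact Or.inr ht
        · left
          obtain ⟨p, hp⟩ := PPaux.exists_pat y (PPaux.not_tie_inj ht)
          have hgood : P p :=
            (PPaux.mem_B_iff_good σ τ hinc (yext y) p (hPat_of y p hp)).mp hy
          exact Set.mem_biUnion (Finset.mem_filter.mpr ⟨Finset.mem_univ _, hgood⟩) hp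
      have hsub2 : (⋃ p ∈ Good, PPaux.patSet ⇑p) ⊆ C := by
        intro y hy
        simp only [Set.mem_iUnion] at hy
        obtain ⟨p, hpG, hp⟩ := hy
        have hgood : P p := (Finset.mem_filter.mp hpG).2
        exact (PPaux.mem_B_iff_good σ τ hinc (yext y) p (hPat_of y p hp)).mpr hgood
      refine le_antisymm ?_ (measure_mono hsub2)
      calc PPaux.nu n C
          ≤ PPaux.nu n ((⋃ p ∈ Good, PPaux.patSet ⇑p) ∪ PPaux.tieSet n) := measure_mono hsub1
        _ ≤ PPaux.nu n (⋃ p ∈ Good, PPaux.patSet ⇑p) + PPaux.nu n (PPaux.tieSet n) :=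
            measure_union_le _ _
        _ = PPaux.nu n (⋃ p ∈ Good, PPaux.patSet ⇑p) := by rw [PPaux.tieSet_null, add_zero]
    have hGU : PPaux.nu n (⋃ p ∈ Good, PPaux.patSet ⇑p)
        = (Good.card : ENNReal) * ((n.factorial : ENNReal))⁻¹ := by
      have hdisj2 : (↑Good : Set (Equiv.Perm (Fin n))).PairwiseDisjoint
          fun p => PPaux.patSet ⇑p := by
        intro p _ q _ hpq
        exact Set.disjoint_left.mpr fun y hyp hyq =>
          hpq (PPaux.perm_eq_of_pat fun a b => ((hyp a b).symm.trans (hyq a b)))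
      rw [measure_biUnion_finset hdisj2 (fun p _ => PPaux.measurableSet_patSet _)]
      rw [Finset.sum_congr rfl fun p _ => PPaux.nu_patSet p, Finset.sum_const, nsmul_eq_mul]
    have hcard : avEndCount σ τ n = Good.card := by
      rw [avEndCount, Nat.card_eq_fintype_card, Fintype.card_subtype, hGood]
    rw [hABμ, hμB, hCG, hGU, hcard, div_eq_mul_inv]

end
end

section
/- Let k ≥ 3 and let σ, τ ∈ S_k be distinct. Suppose there exists j ∈ [k−1] such that: (i) σ_i = τ_i for 1 ≤ i ≤ j; (ii) for every i with j+1 ≤ i ≤ k−1, st(σ_{k−i+1}⋯σ_k) ≠ st(τ_1⋯τ_i) and st(τ_{k−i+1}⋯τ_k) ≠ st(σ_1⋯σ_i); and (iii) for every i with j+1 ≤ i ≤ k−1, st(σ_{k−i+1}⋯σ_k) ≠ st(σ_1⋯σ_i) and st(τ_{k−i+1}⋯τ_k) ≠ st(τ_1⋯τ_i). Then μ(T_σ < T_τ) = 1/2. -/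
open MeasureTheory ProbabilityTheory Real

noncomputable section

/-- The standardization of the suffix `σ_{k-i+1} ⋯ σ_k` (of length `i`) equals the
standardization of the prefix `τ_1 ⋯ τ_i`, i.e., the relative orders agree. -/
def SuffixMatchesPrefix {k : ℕ} (σ τ : Equiv.Perm (Fin k)) (i : ℕ) : Prop :=
  ∃ h : i ≤ k, ∀ a b : Fin i,
    (σ ⟨k - i + a, by have := a.isLt; omega⟩ < σ ⟨k - i + b, by have := b.isLt; omega⟩ ↔
      τ ⟨a, by have := a.isLt; omega⟩ < τ ⟨b, by have := b.isLt; omega⟩)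

namespace NOT

/-- uniform measure on `[0,1]` -/
def unif : Measure ℝ := (volume : Measure ℝ).restrict (Set.Icc 0 1)

instance : IsProbabilityMeasure unif :=
  ⟨by simp [unif, Real.volume_Icc]⟩

/-- product of uniforms on `Fin n` -/
def upi (n : ℕ) : Measure (Fin n → ℝ) := Measure.pi fun _ : Fin n => unif

instance (n : ℕ) : IsProbabilityMeasure (upi n) := by
  unfold upi; infer_instance

/-- set of windows realizing the pattern `ρ` -/
def Pat {k : ℕ} (ρ : Equiv.Perm (Fin k)) : Set (Fin k → ℝ) :=
  {y | ∀ a b : Fin k, y a < y b ↔ ρ a < ρ b}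

lemma measurableSet_Pat {k : ℕ} (ρ : Equiv.Perm (Fin k)) : MeasurableSet (Pat ρ) := by
  have h0 : Pat ρ = ⋂ (a : Fin k) (b : Fin k), {y : Fin k → ℝ | y a < y b ↔ ρ a < ρ b} := by
    ext y; simp [Pat, Set.mem_iInter]
  rw [h0]
  refine MeasurableSet.iInter fun a => MeasurableSet.iInter fun b => ?_
  by_cases h : ρ a < ρ b
  · have h1 : {y : Fin k → ℝ | y a < y b ↔ ρ a < ρ b} = {y | y a < y b} := by
      ext y; simp [h]
    rw [h1]; exact measurableSet_lt (measurable_pi_apply a) (measurable_pi_apply b)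
  · have h1 : {y : Fin k → ℝ | y a < y b ↔ ρ a < ρ b} = {y : Fin k → ℝ | y a < y b}ᶜ := by
      ext y; simp [h]
    rw [h1]; exact (measurableSet_lt (measurable_pi_apply a) (measurable_pi_apply b)).compl

/-- the window of length `k` starting at `p` -/
def blkF {k n : ℕ} (p : ℕ) (h : p + k ≤ n) (y : Fin n → ℝ) : Fin k → ℝ :=
  fun s => y ⟨p + s, by have := s.isLt; omega⟩

lemma measurable_blkF {k n : ℕ} (p : ℕ) (h : p + k ≤ n) : Measurable (blkF (k := k) p h) := by
  apply measurable_pi_lambda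
  intro s
  exact measurable_pi_apply _

/-- restriction of a sequence to its first `n` coordinates -/
def restr (n : ℕ) : (ℕ → ℝ) → (Fin n → ℝ) := fun x i => x i

lemma measurable_restr (n : ℕ) : Measurable (restr n) := by
  apply measurable_pi_lambda
  intro i
  exact measurable_pi_apply _

lemma occursAt_iff_pat {k : ℕ} (ρ : Equiv.Perm (Fin k)) (x : ℕ → ℝ) (p : ℕ) :
    OccursAt ρ x p ↔ (fun s : Fin k => x (p + s)) ∈ Pat ρ := Iff.rfl

/-- finite-dimensional version of the event `T_σ = d + k < T_τ` -/
def Afin {k : ℕ} (σ τ : Equiv.Perm (Fin k)) (d : ℕ) : Set (Fin (d + k) → ℝ) :=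
  {y | blkF d le_rfl y ∈ Pat σ ∧
    ∀ p, ∀ _ : p < d, blkF p (by omega) y ∉ Pat σ ∧ blkF p (by omega) y ∉ Pat τ}

lemma measurableSet_Afin {k : ℕ} (σ τ : Equiv.Perm (Fin k)) (d : ℕ) :
    MeasurableSet (Afin σ τ d) := by
  have h0 : Afin σ τ d = ((blkF d le_rfl) ⁻¹' Pat σ) ∩
      ⋂ (p : ℕ) (hp : p < d),
        (((blkF p (by omega : p + k ≤ d + k)) ⁻¹' Pat σ)ᶜ ∩
          ((blkF p (by omega : p + k ≤ d + k)) ⁻¹' Pat τ)ᶜ) := by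
    ext y
    simp only [Afin, Set.mem_setOf_eq, Set.mem_inter_iff, Set.mem_iInter, Set.mem_preimage,
      Set.mem_compl_iff]
  rw [h0]
  refine ((measurableSet_Pat σ).preimage (measurable_blkF _ _)).inter ?_
  refine MeasurableSet.iInter fun p => MeasurableSet.iInter fun hp => ?_
  exact (((measurableSet_Pat σ).preimage (measurable_blkF _ _)).compl).inter
    (((measurableSet_Pat τ).preimage (measurable_blkF _ _)).compl)

/-- the event `T_σ = d + k < T_τ` (on the good set where both patterns occur) -/
def Aset {k : ℕ} (σ τ : Equiv.Perm (Fin k)) (d : ℕ) : Set (ℕ → ℝ) :=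
  restr (d + k) ⁻¹' Afin σ τ d

lemma mem_Aset_iff {k : ℕ} (σ τ : Equiv.Perm (Fin k)) (d : ℕ) (x : ℕ → ℝ) :
    x ∈ Aset σ τ d ↔ OccursAt σ x d ∧
      ∀ p, p < d → ¬ OccursAt σ x p ∧ ¬ OccursAt τ x p := Iff.rfl

/-- a permutation of `Fin (d+k)` fixing the first `d` coordinates and permuting the window -/
def ePerm {k : ℕ} (pe : Equiv.Perm (Fin k)) (d : ℕ) : Equiv.Perm (Fin (d + k)) :=
  (finSumFinEquiv.symm).trans ((Equiv.sumCongr (Equiv.refl (Fin d)) pe).trans finSumFinEquiv)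

lemma ePerm_low {k : ℕ} (pe : Equiv.Perm (Fin k)) (d : ℕ) (c : Fin (d + k)) (hc : (c : ℕ) < d) :
    ePerm pe d c = c := by
  have hc2 : c = Fin.castAdd k ⟨(c : ℕ), hc⟩ := by
    apply Fin.ext; rfl
  have key : ∀ i : Fin d, ePerm pe d (Fin.castAdd k i) = Fin.castAdd k i := by
    intro i; simp [ePerm]
  rw [hc2]; exact key _

lemma ePerm_high {k : ℕ} (pe : Equiv.Perm (Fin k)) (d : ℕ) (s : Fin k) (h1 : d + (s : ℕ) < d + k)
    (h2 : d + (pe s : ℕ) < d + k) :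
    ePerm pe d ⟨d + s, h1⟩ = ⟨d + (pe s : ℕ), h2⟩ := by
  have hc2 : (⟨d + s, h1⟩ : Fin (d + k)) = Fin.natAdd d s := by
    apply Fin.ext; rfl
  have key : ∀ s : Fin k, ePerm pe d (Fin.natAdd d s) = Fin.natAdd d (pe s) := by
    intro s; simp [ePerm]
  rw [hc2, key]
  apply Fin.ext; rfl

/-- the combinatorial heart: rearranging the final window turns
an occurrence of `σ` first into an occurrence of `τ` first. -/
lemma swap_mem {k : ℕ} (σ τ : Equiv.Perm (Fin k)) (j d : ℕ)
    (hj : 1 ≤ j) (hjk : j < k)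
    (hpre : ∀ a : Fin k, (a : ℕ) < j → σ a = τ a)
    (hov : ∀ i : ℕ, j + 1 ≤ i → i < k →
      ¬ SuffixMatchesPrefix σ τ i ∧ ¬ SuffixMatchesPrefix τ τ i)
    {y : Fin (d + k) → ℝ} (hy : y ∈ Afin σ τ d) :
    y ∘ (ePerm (τ.trans σ.symm) d) ∈ Afin τ σ d := by
  set pe := τ.trans σ.symm with hpe
  set y' := y ∘ ePerm pe d with hy'
  -- values of y' in the final window
  have hvh : ∀ (s : Fin k) (h1 : d + (s : ℕ) < d + k),
      y' ⟨d + s, h1⟩ = y ⟨d + (pe s : ℕ), by have := (pe s).isLt; omega⟩ := by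
    intro s h1
    show y (ePerm pe d ⟨d + s, h1⟩) = _
    rw [ePerm_high pe d s h1 (by have := (pe s).isLt; omega)]
  -- values of y' below position d + j are unchanged
  have hveq : ∀ (c : Fin (d + k)), (c : ℕ) < d + j → y' c = y c := by
    intro c hc
    by_cases h : (c : ℕ) < d
    · show y (ePerm pe d c) = y c
      rw [ePerm_low pe d c h]
    · have hs : (c : ℕ) - d < k := by have := c.isLt; omega
      have hc2 : c = ⟨d + ((⟨(c : ℕ) - d, hs⟩ : Fin k) : ℕ), by simp; have := c.isLt; omega⟩ := by
        apply Fin.ext; simp; omega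
      have hfix : pe ⟨(c : ℕ) - d, hs⟩ = ⟨(c : ℕ) - d, hs⟩ := by
        have h2 := hpre ⟨(c : ℕ) - d, hs⟩ (by simp; omega)
        show σ.symm (τ _) = _
        rw [← h2, Equiv.symm_apply_apply]
      rw [hc2, hvh]
      exact congrArg y (Fin.ext (congrArg (fun t : Fin k => d + (t : ℕ)) hfix))
  -- the final window of y' realizes τ
  have hend : blkF d le_rfl y' ∈ Pat τ := by
    intro a b
    show y' ⟨d + (a : ℕ), _⟩ < y' ⟨d + (b : ℕ), _⟩ ↔ _
    rw [hvh a (by have := a.isLt; omega), hvh b (by have := b.isLt; omega)]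
    have h1 := hy.1 (pe a) (pe b)
    have h2 : blkF d le_rfl y (pe a) = y ⟨d + (pe a : ℕ), by have := (pe a).isLt; omega⟩ := rfl
    have h3 : blkF d le_rfl y (pe b) = y ⟨d + (pe b : ℕ), by have := (pe b).isLt; omega⟩ := rfl
    rw [h2, h3] at h1
    rw [h1]
    have e1 : σ (pe a) = τ a := by simp [hpe]
    have e2 : σ (pe b) = τ b := by simp [hpe]
    rw [e1, e2]
  -- no pattern occurrence in earlier windows of y'
  have main : ∀ (ρ : Equiv.Perm (Fin k)),
      (∀ p, ∀ _ : p < d, blkF p (by omega : p + k ≤ d + k) y ∉ Pat ρ) →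
      (∀ i : ℕ, j + 1 ≤ i → i < k → ¬ SuffixMatchesPrefix ρ τ i) →
      ∀ p, ∀ _ : p < d, blkF p (by omega : p + k ≤ d + k) y' ∉ Pat ρ := by
    intro ρ hyρ hsmp p hp hmem
    by_cases hcase : p + k ≤ d + j
    · apply hyρ p hp
      have heq : blkF p (by omega : p + k ≤ d + k) y = blkF p (by omega : p + k ≤ d + k) y' := by
        funext s
        exact (hveq ⟨p + (s : ℕ), by have := s.isLt; omega⟩
          (show p + (s : ℕ) < d + j by have := s.isLt; omega)).symm
      rw [heq]; exact hmem
    · set i := p + k - d with hidef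
      have hd : d + j < p + k := by omega
      have hi1 : j + 1 ≤ i := by omega
      have hi2 : i < k := by omega
      refine hsmp i hi1 hi2 ⟨by omega, ?_⟩
      intro a b
      have ha := a.isLt
      have hb := b.isLt
      have pfa : k - i + (a : ℕ) < k := by omega
      have pfb : k - i + (b : ℕ) < k := by omega
      have h1 := hmem ⟨k - i + (a : ℕ), pfa⟩ ⟨k - i + (b : ℕ), pfb⟩
      have ua : blkF p (by omega : p + k ≤ d + k) y' ⟨k - i + (a : ℕ), pfa⟩ =
          y' ⟨d + (a : ℕ), by omega⟩ := by
        show y' ⟨p + (k - i + (a : ℕ)), by omega⟩ = _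
        congr 1; apply Fin.ext; simp; omega
      have ub : blkF p (by omega : p + k ≤ d + k) y' ⟨k - i + (b : ℕ), pfb⟩ =
          y' ⟨d + (b : ℕ), by omega⟩ := by
        show y' ⟨p + (k - i + (b : ℕ)), by omega⟩ = _
        congr 1; apply Fin.ext; simp; omega
      rw [ua, ub] at h1
      have h2 := hend ⟨(a : ℕ), by omega⟩ ⟨(b : ℕ), by omega⟩
      have va : blkF d le_rfl y' ⟨(a : ℕ), by omega⟩ = y' ⟨d + (a : ℕ), by omega⟩ := rfl
      have vb : blkF d le_rfl y' ⟨(b : ℕ), by omega⟩ = y' ⟨d + (b : ℕ), by omega⟩ := rfl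
      rw [va, vb] at h2
      exact h1.symm.trans h2
  refine ⟨hend, ?_⟩
  intro p hp
  exact ⟨main τ (fun p hp => (hy.2 p hp).2) (fun i h1 h2 => (hov i h1 h2).2) p hp,
    main σ (fun p hp => (hy.2 p hp).1) (fun i h1 h2 => (hov i h1 h2).1) p hp⟩

lemma marg {μ : Measure (ℕ → ℝ)} (hμ : IsIIDUniform μ) (n : ℕ) (S : Set (Fin n → ℝ))
    (hS : MeasurableSet S) : μ (restr n ⁻¹' S) = upi n S := by
  have h0 := hμ.2 n
  have h1 : μ.map (fun x (i : Fin n) => x i) S = upi n S := by rw [h0]; rfl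
  rw [show restr n ⁻¹' S = (fun x (i : Fin n) => x i) ⁻¹' S from rfl, ← h1,
    Measure.map_apply (μ := μ) (f := fun x (i : Fin n) => x i) (measurable_restr n) hS]

lemma upi_comp_perm (n : ℕ) (e : Equiv.Perm (Fin n)) (S : Set (Fin n → ℝ))
    (hS : MeasurableSet S) : upi n ((fun y => y ∘ e) ⁻¹' S) = upi n S := by
  have hcoe : (fun y : Fin n → ℝ => y ∘ e) =
      ⇑(MeasurableEquiv.piCongrLeft (fun _ : Fin n => ℝ) e.symm) := by
    funext y; funext b
    rw [MeasurableEquiv.coe_piCongrLeft]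
    have h2 := Equiv.piCongrLeft_apply_apply (P := fun _ : Fin n => ℝ) e.symm y (e b)
    simp only [Equiv.symm_apply_apply] at h2 ⊢
    exact h2.symm
  have mp := measurePreserving_piCongrLeft (fun _ : Fin n => unif) e.symm
  rw [hcoe]
  exact mp.measure_preimage hS.nullMeasurableSet

lemma ePerm_comp {k : ℕ} (σ τ : Equiv.Perm (Fin k)) (d : ℕ) (c : Fin (d + k)) :
    ePerm (τ.trans σ.symm) d (ePerm (σ.trans τ.symm) d c) = c := by
  by_cases hc : (c : ℕ) < d
  · rw [ePerm_low _ _ _ hc]; exact ePerm_low _ _ _ hc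
  · have hs : (c : ℕ) - d < k := by have := c.isLt; omega
    set s : Fin k := ⟨(c : ℕ) - d, hs⟩ with hsdef
    have h1 : d + (s : ℕ) < d + k := by have := c.isLt; simp [hsdef]; omega
    have e1 : c = ⟨d + (s : ℕ), h1⟩ := by apply Fin.ext; simp [hsdef]; omega
    rw [e1, ePerm_high _ _ s h1 (by have := ((σ.trans τ.symm) s).isLt; omega),
      ePerm_high _ _ _ _ (by have := ((τ.trans σ.symm) ((σ.trans τ.symm) s)).isLt; omega)]
    apply Fin.ext
    simp

lemma measure_Aset_eq {μ : Measure (ℕ → ℝ)} (hμ : IsIIDUniform μ) {k : ℕ}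
    (σ τ : Equiv.Perm (Fin k)) (j d : ℕ) (hj : 1 ≤ j) (hjk : j < k)
    (hpre : ∀ a : Fin k, (a : ℕ) < j → σ a = τ a)
    (hov1 : ∀ i : ℕ, j + 1 ≤ i → i < k →
      ¬ SuffixMatchesPrefix σ τ i ∧ ¬ SuffixMatchesPrefix τ τ i)
    (hov2 : ∀ i : ℕ, j + 1 ≤ i → i < k →
      ¬ SuffixMatchesPrefix τ σ i ∧ ¬ SuffixMatchesPrefix σ σ i) :
    μ (Aset σ τ d) = μ (Aset τ σ d) := by
  have hpre' : ∀ a : Fin k, (a : ℕ) < j → τ a = σ a := fun a ha => (hpre a ha).symm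
  have hset : Afin σ τ d = (fun y => y ∘ ePerm (τ.trans σ.symm) d) ⁻¹' Afin τ σ d := by
    ext y
    constructor
    · intro h
      exact swap_mem σ τ j d hj hjk hpre hov1 h
    · intro h
      have h2 := swap_mem τ σ j d hj hjk hpre' hov2 h
      have h3 : (y ∘ ePerm (τ.trans σ.symm) d) ∘ ePerm (σ.trans τ.symm) d = y := by
        funext c
        show y (ePerm (τ.trans σ.symm) d (ePerm (σ.trans τ.symm) d c)) = y c
        rw [ePerm_comp]
      rw [h3] at h2
      exact h2
  calc μ (Aset σ τ d) = upi (d + k) (Afin σ τ d) := marg hμ _ _ (measurableSet_Afin σ τ d)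
    _ = upi (d + k) ((fun y => y ∘ ePerm (τ.trans σ.symm) d) ⁻¹' Afin τ σ d) := by rw [← hset]
    _ = upi (d + k) (Afin τ σ d) := upi_comp_perm _ _ _ (measurableSet_Afin τ σ d)
    _ = μ (Aset τ σ d) := (marg hμ _ _ (measurableSet_Afin τ σ d)).symm

section NullOcc

/-- a product box forcing the pattern `ρ` -/
def box {k : ℕ} (ρ : Equiv.Perm (Fin k)) : Set (Fin k → ℝ) :=
  Set.univ.pi fun s => Set.Ioo (((ρ s : ℕ) : ℝ) / k) ((((ρ s : ℕ) : ℝ) + 1) / k)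

lemma measurableSet_box {k : ℕ} (ρ : Equiv.Perm (Fin k)) : MeasurableSet (box ρ) :=
  MeasurableSet.univ_pi fun _ => measurableSet_Ioo

lemma box_subset_Pat {k : ℕ} (hk : 1 ≤ k) (ρ : Equiv.Perm (Fin k)) : box ρ ⊆ Pat ρ := by
  intro y hy a b
  have hk0 : (0 : ℝ) < k := by exact_mod_cast hk
  have ha := hy a (Set.mem_univ a)
  have hb := hy b (Set.mem_univ b)
  have key : ∀ c e : Fin k, ρ c < ρ e → y c < y e := by
    intro c e hce
    have hce' : ((ρ c : ℕ) : ℝ) + 1 ≤ ((ρ e : ℕ) : ℝ) := by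
      have : (ρ c : ℕ) + 1 ≤ (ρ e : ℕ) := hce
      exact_mod_cast this
    have hc := hy c (Set.mem_univ c)
    have he := hy e (Set.mem_univ e)
    calc y c < (((ρ c : ℕ) : ℝ) + 1) / k := hc.2
      _ ≤ ((ρ e : ℕ) : ℝ) / k := by gcongr
      _ < y e := he.1
  constructor
  · intro hlt
    rcases lt_trichotomy (ρ a) (ρ b) with h | h | h
    · exact h
    · exact absurd (ρ.injective (by exact h)) (by rintro rfl; exact lt_irrefl _ hlt)
    · exact absurd (key b a h) (by intro h2; exact lt_asymm hlt h2)
  · exact key a b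

lemma upi_box_pos {k : ℕ} (hk : 1 ≤ k) (ρ : Equiv.Perm (Fin k)) : 0 < upi k (box ρ) := by
  have hk0 : (0 : ℝ) < k := by exact_mod_cast hk
  have hval : upi k (box ρ) = ENNReal.ofReal (1 / (k : ℝ)) ^ k := by
    rw [upi, box, Measure.pi_pi]
    have hone : ∀ s : Fin k,
        unif (Set.Ioo (((ρ s : ℕ) : ℝ) / k) ((((ρ s : ℕ) : ℝ) + 1) / k)) =
          ENNReal.ofReal (1 / (k : ℝ)) := by
      intro s
      have hsub : Set.Ioo (((ρ s : ℕ) : ℝ) / k) ((((ρ s : ℕ) : ℝ) + 1) / k) ⊆ Set.Icc 0 1 := by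
        intro z hz
        have h1 : (0 : ℝ) ≤ ((ρ s : ℕ) : ℝ) / k := by positivity
        have h2 : (((ρ s : ℕ) : ℝ) + 1) / k ≤ 1 := by
          rw [div_le_one hk0]
          have : (ρ s : ℕ) + 1 ≤ k := (ρ s).isLt
          exact_mod_cast this
        exact ⟨le_of_lt (lt_of_le_of_lt h1 hz.1), le_trans (le_of_lt hz.2) h2⟩
      rw [unif, Measure.restrict_apply measurableSet_Ioo,
        Set.inter_eq_left.mpr hsub, Real.volume_Ioo]
      congr 1
      field_simp
      ring
    rw [Finset.prod_congr rfl fun s _ => hone s, Finset.prod_const, Finset.card_univ,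
      Fintype.card_fin]
  rw [hval]
  have : 0 < ENNReal.ofReal (1 / (k : ℝ)) := ENNReal.ofReal_pos.mpr (by positivity)
  positivity

/-- finite-dimensional event: none of the `m` disjoint windows lies in the box -/
def Ffin {k : ℕ} (ρ : Equiv.Perm (Fin k)) (m : ℕ) : Set (Fin (m * k) → ℝ) :=
  {y | ∀ i, ∀ hi : i < m, blkF (i * k)
    (by calc i * k + k = (i + 1) * k := by ring
        _ ≤ m * k := Nat.mul_le_mul_right k hi) y ∈ (box ρ)ᶜ}

lemma measurableSet_Ffin {k : ℕ} (ρ : Equiv.Perm (Fin k)) (m : ℕ) :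
    MeasurableSet (Ffin ρ m) := by
  have h0 : Ffin ρ m = ⋂ (i : ℕ) (hi : i < m), (blkF (i * k)
      (by calc i * k + k = (i + 1) * k := by ring
          _ ≤ m * k := Nat.mul_le_mul_right k hi)) ⁻¹' (box ρ)ᶜ := by
    ext y
    simp only [Ffin, Set.mem_setOf_eq, Set.mem_iInter, Set.mem_preimage]
  rw [h0]
  exact MeasurableSet.iInter fun i => MeasurableSet.iInter fun hi =>
    (measurableSet_box ρ).compl.preimage (measurable_blkF _ _)

lemma Ffin_succ {k : ℕ} (ρ : Equiv.Perm (Fin k)) (m : ℕ) :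
    upi ((m + 1) * k) (Ffin ρ (m + 1)) = upi (m * k) (Ffin ρ m) * upi k ((box ρ)ᶜ) := by
  have hnk : m * k + k = (m + 1) * k := by ring
  set f : Fin (m * k) ⊕ Fin k ≃ Fin ((m + 1) * k) := finSumFinEquiv.trans (finCongr hnk) with hf
  have hval_inl : ∀ q : Fin (m * k), ((f (Sum.inl q) : Fin ((m+1)*k)) : ℕ) = (q : ℕ) := by
    intro q; simp [hf, finCongr]
  have hval_inr : ∀ s : Fin k, ((f (Sum.inr s) : Fin ((m+1)*k)) : ℕ) = m * k + (s : ℕ) := by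
    intro s; simp [hf, finCongr]
  set E1 := MeasurableEquiv.piCongrLeft (fun _ : Fin ((m + 1) * k) => ℝ) f with hE1
  set E2 := MeasurableEquiv.sumPiEquivProdPi (fun _ : Fin (m * k) ⊕ Fin k => ℝ) with hE2
  have mp1 : MeasurePreserving E1 (Measure.pi fun _ : Fin (m * k) ⊕ Fin k => unif)
      (upi ((m + 1) * k)) := measurePreserving_piCongrLeft (fun _ : Fin ((m + 1) * k) => unif) f
  have mp2 : MeasurePreserving E2 (Measure.pi fun _ : Fin (m * k) ⊕ Fin k => unif)
      ((upi (m * k)).prod (upi k)) :=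
    measurePreserving_sumPiEquivProdPi (fun _ : Fin (m * k) ⊕ Fin k => unif)
  have mpT : MeasurePreserving (fun y => E2 (E1.symm y)) (upi ((m + 1) * k))
      ((upi (m * k)).prod (upi k)) := mp2.comp (mp1.symm E1)
  have hE1s : ∀ (y : Fin ((m + 1) * k) → ℝ) (b : Fin (m * k) ⊕ Fin k),
      E1.symm y b = y (f b) := by
    intro y b
    show (MeasurableEquiv.piCongrLeft (fun _ : Fin ((m + 1) * k) => ℝ) f).symm y b = y (f b)
    rw [MeasurableEquiv.symm, MeasurableEquiv.coe_mk]
    exact Equiv.piCongrLeft_symm_apply (fun _ => ℝ) f y b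
  have hkey : Ffin ρ (m + 1) = (fun y => E2 (E1.symm y)) ⁻¹' ((Ffin ρ m) ×ˢ ((box ρ)ᶜ)) := by
    ext y
    have hfst : ∀ q : Fin (m * k), (E2 (E1.symm y)).1 q = y ⟨(q : ℕ), by
        have := q.isLt; omega⟩ := by
      intro q
      rw [hE2, MeasurableEquiv.coe_sumPiEquivProdPi]
      show (E1.symm y) (Sum.inl q) = _
      rw [hE1s]
      exact congrArg y (Fin.ext (hval_inl q))
    have hsnd : ∀ s : Fin k, (E2 (E1.symm y)).2 s = y ⟨m * k + (s : ℕ), by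
        have := s.isLt; omega⟩ := by
      intro s
      rw [hE2, MeasurableEquiv.coe_sumPiEquivProdPi]
      show (E1.symm y) (Sum.inr s) = _
      rw [hE1s]
      exact congrArg y (Fin.ext (hval_inr s))
    constructor
    · intro hy
      constructor
      · intro i hi
        have h1 := hy i (by omega)
        intro hbox
        apply h1
        have : blkF (i * k) (by
            calc i * k + k = (i + 1) * k := by ring
              _ ≤ (m + 1) * k := Nat.mul_le_mul_right k (by omega)) y =
            blkF (i * k) (by
            calc i * k + k = (i + 1) * k := by ring
              _ ≤ m * k := Nat.mul_le_mul_right k hi) (E2 (E1.symm y)).1 := by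
          funext s
          show y _ = (E2 (E1.symm y)).1 ⟨i * k + (s : ℕ), _⟩
          rw [hfst]
        rw [this]
        exact hbox
      · have h1 := hy m (by omega)
        intro hbox
        apply h1
        have : blkF (m * k) (by omega) y = (E2 (E1.symm y)).2 := by
          funext s
          show y _ = _
          rw [hsnd]
        rw [this]
        exact hbox
    · rintro ⟨h1, h2⟩ i hi hbox
      by_cases him : i < m
      · apply h1 i him
        have : blkF (i * k) (by
            calc i * k + k = (i + 1) * k := by ring
              _ ≤ m * k := Nat.mul_le_mul_right k him) (E2 (E1.symm y)).1 =
            blkF (i * k) (by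
            calc i * k + k = (i + 1) * k := by ring
              _ ≤ (m + 1) * k := Nat.mul_le_mul_right k (by omega)) y := by
          funext s
          show (E2 (E1.symm y)).1 ⟨i * k + (s : ℕ), _⟩ = y _
          rw [hfst]
        rw [this]
        exact hbox
      · have him2 : i = m := by omega
        subst him2
        apply h2
        have : (E2 (E1.symm y)).2 = blkF (i * k) (by
            calc i * k + k = (i + 1) * k := by ring
              _ ≤ (i + 1) * k := le_rfl) y := by
          funext s
          show _ = y ⟨i * k + (s : ℕ), _⟩
          rw [hsnd]
        rw [this]
        exact hbox
  rw [hkey, mpT.measure_preimage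
    (((measurableSet_Ffin ρ m).prod (measurableSet_box ρ).compl).nullMeasurableSet),
    Measure.prod_prod]

lemma noOcc_null {μ : Measure (ℕ → ℝ)} (hμ : IsIIDUniform μ) {k : ℕ} (hk : 1 ≤ k)
    (ρ : Equiv.Perm (Fin k)) : μ {x | ∀ s, ¬ OccursAt ρ x s} = 0 := by
  haveI := hμ.1
  set c := upi k ((box ρ)ᶜ) with hc
  have hclt : c < 1 := by
    rw [hc, measure_compl (measurableSet_box ρ) (measure_ne_top _ _)]
    have h1 : upi k Set.univ = 1 := measure_univ
    rw [h1]
    exact ENNReal.sub_lt_self ENNReal.one_ne_top one_ne_zero (upi_box_pos hk ρ).ne'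
  have hFm : ∀ m, upi (m * k) (Ffin ρ m) ≤ c ^ m := by
    intro m
    induction m with
    | zero => simpa using prob_le_one
    | succ m ih =>
      rw [Ffin_succ ρ m, pow_succ]
      exact mul_le_mul_left ih c
  have hsub : ∀ m, {x : ℕ → ℝ | ∀ s, ¬ OccursAt ρ x s} ⊆ restr (m * k) ⁻¹' (Ffin ρ m) := by
    intro m x hx i hi hbox
    apply hx (i * k)
    rw [occursAt_iff_pat]
    exact box_subset_Pat hk ρ hbox
  have hbound : ∀ m, μ {x : ℕ → ℝ | ∀ s, ¬ OccursAt ρ x s} ≤ c ^ m := by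
    intro m
    refine le_trans (measure_mono (hsub m)) ?_
    rw [marg hμ _ _ (measurableSet_Ffin ρ m)]
    exact hFm m
  have htend := ENNReal.tendsto_pow_atTop_nhds_zero_of_lt_one hclt
  refine le_antisymm ?_ zero_le
  exact ge_of_tendsto htend (Filter.Eventually.of_forall hbound)

end NullOcc

section Hit

variable {k : ℕ}

lemma occ_unique (σ τ : Equiv.Perm (Fin k)) (x : ℕ → ℝ) (p : ℕ)
    (h1 : OccursAt σ x p) (h2 : OccursAt τ x p) : σ = τ := by
  have key : ∀ a b : Fin k, σ a < σ b ↔ τ a < τ b := fun a b => (h1 a b).symm.trans (h2 a b)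
  set ψ := τ.symm.trans σ with hψ
  have hmono : StrictMono ⇑ψ := by
    intro c c' hcc
    have h3 := (key (τ.symm c) (τ.symm c')).mpr (by simpa using hcc)
    simpa [hψ] using h3
  have hid : ∀ c, ψ c = c := by
    intro c
    have h3 : StrictMono.orderIsoOfSurjective ⇑ψ hmono ψ.surjective = OrderIso.refl (Fin k) :=
      Subsingleton.elim _ _
    have h4 := congrArg (fun g : Fin k ≃o Fin k => g c) h3
    simpa using h4
  apply Equiv.ext
  intro a
  have h5 := hid (τ a)
  simpa [hψ] using h5

lemma measurableSet_Aset (σ τ : Equiv.Perm (Fin k)) (d : ℕ) : MeasurableSet (Aset σ τ d) :=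
  (measurableSet_Afin σ τ d).preimage (measurable_restr _)

lemma hit_of_mem_Aset (σ τ : Equiv.Perm (Fin k)) (d : ℕ) (x : ℕ → ℝ)
    (hx : x ∈ Aset σ τ d) : hitTime σ x = d + k := by
  have hx' := (mem_Aset_iff σ τ d x).mp hx
  have hmem : d + k ∈ {j | k ≤ j ∧ OccursAt σ x (j - k)} := by
    refine ⟨by omega, ?_⟩
    have : d + k - k = d := by omega
    rw [this]
    exact hx'.1
  refine le_antisymm (Nat.sInf_le hmem) ?_
  by_contra h
  push_neg at h
  have hne : {j | k ≤ j ∧ OccursAt σ x (j - k)}.Nonempty := ⟨d + k, hmem⟩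
  have hsm := Nat.sInf_mem hne
  have h3 : hitTime σ x - k < d := by
    have := hsm.1
    unfold hitTime at h ⊢
    omega
  exact (hx'.2 _ h3).1 hsm.2

lemma lt_of_mem_Aset (σ τ : Equiv.Perm (Fin k)) (hne : σ ≠ τ) (d : ℕ) (x : ℕ → ℝ)
    (hx : x ∈ Aset σ τ d) (hτ : ¬ ∀ s, ¬ OccursAt τ x s) :
    hitTime σ x < hitTime τ x := by
  rw [hit_of_mem_Aset σ τ d x hx]
  push_neg at hτ
  obtain ⟨s0, hs0⟩ := hτ
  have hneS : {j | k ≤ j ∧ OccursAt τ x (j - k)}.Nonempty := by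
    refine ⟨s0 + k, by omega, ?_⟩
    have : s0 + k - k = s0 := by omega
    rw [this]; exact hs0
  have hsm := Nat.sInf_mem hneS
  have hx' := (mem_Aset_iff σ τ d x).mp hx
  by_contra hle
  push_neg at hle
  have h1 : k ≤ hitTime τ x := hsm.1
  have h2 : OccursAt τ x (hitTime τ x - k) := hsm.2
  rcases lt_trichotomy (hitTime τ x - k) d with h | h | h
  · exact (hx'.2 _ h).2 h2
  · rw [h] at h2
    exact hne (occ_unique σ τ x d hx'.1 h2)
  · omega

lemma mem_Aset_of_lt (σ τ : Equiv.Perm (Fin k)) (x : ℕ → ℝ)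
    (hσ : ¬ ∀ s, ¬ OccursAt σ x s) (hτ : ¬ ∀ s, ¬ OccursAt τ x s)
    (hlt : hitTime σ x < hitTime τ x) : ∃ d, x ∈ Aset σ τ d := by
  push_neg at hσ hτ
  obtain ⟨s1, hs1⟩ := hσ
  obtain ⟨s2, hs2⟩ := hτ
  have hneσ : {j | k ≤ j ∧ OccursAt σ x (j - k)}.Nonempty := by
    refine ⟨s1 + k, by omega, ?_⟩
    have : s1 + k - k = s1 := by omega
    rw [this]; exact hs1
  have hneτ : {j | k ≤ j ∧ OccursAt τ x (j - k)}.Nonempty := by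
    refine ⟨s2 + k, by omega, ?_⟩
    have : s2 + k - k = s2 := by omega
    rw [this]; exact hs2
  have hsmσ := Nat.sInf_mem hneσ
  have hsmτ := Nat.sInf_mem hneτ
  refine ⟨hitTime σ x - k, (mem_Aset_iff σ τ _ x).mpr ⟨hsmσ.2, ?_⟩⟩
  intro p hp
  constructor
  · intro hocc
    have hm : p + k ∈ {j | k ≤ j ∧ OccursAt σ x (j - k)} := by
      refine ⟨by omega, ?_⟩
      have : p + k - k = p := by omega
      rw [this]; exact hocc
    have := Nat.sInf_le hm
    have h1 := hsmσ.1
    unfold hitTime at *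
    omega
  · intro hocc
    have hm : p + k ∈ {j | k ≤ j ∧ OccursAt τ x (j - k)} := by
      refine ⟨by omega, ?_⟩
      have : p + k - k = p := by omega
      rw [this]; exact hocc
    have := Nat.sInf_le hm
    have h1 := hsmσ.1
    unfold hitTime at *
    omega

end Hit

end NOT

theorem non_overlapping_tie (μ : Measure (ℕ → ℝ)) (hμ : IsIIDUniform μ)
    (k : ℕ) (hk : 3 ≤ k) (σ τ : Equiv.Perm (Fin k)) (hne : σ ≠ τ)
    (j : ℕ) (hj1 : 1 ≤ j) (hj2 : j ≤ k - 1)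
    (hpre : ∀ a : Fin k, (a : ℕ) < j → σ a = τ a)
    (hoverlap : ∀ i : ℕ, j + 1 ≤ i → i ≤ k - 1 →
      ¬ SuffixMatchesPrefix σ τ i ∧ ¬ SuffixMatchesPrefix τ σ i)
    (hself : ∀ i : ℕ, j + 1 ≤ i → i ≤ k - 1 →
      ¬ SuffixMatchesPrefix σ σ i ∧ ¬ SuffixMatchesPrefix τ τ i) :
    μ {x | hitTime σ x < hitTime τ x} = 1 / 2 := by
  classical
  haveI := hμ.1
  have hjk : j < k := by omega
  have hk1 : 1 ≤ k := by omega
  have hov1 : ∀ i : ℕ, j + 1 ≤ i → i < k →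
      ¬ SuffixMatchesPrefix σ τ i ∧ ¬ SuffixMatchesPrefix τ τ i :=
    fun i h1 h2 => ⟨(hoverlap i h1 (by omega)).1, (hself i h1 (by omega)).2⟩
  have hov2 : ∀ i : ℕ, j + 1 ≤ i → i < k →
      ¬ SuffixMatchesPrefix τ σ i ∧ ¬ SuffixMatchesPrefix σ σ i :=
    fun i h1 h2 => ⟨(hoverlap i h1 (by omega)).2, (hself i h1 (by omega)).1⟩
  set S : Set (ℕ → ℝ) := {x | hitTime σ x < hitTime τ x} with hSdef
  set U : Set (ℕ → ℝ) := ⋃ d, NOT.Aset σ τ d with hUdef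
  set V : Set (ℕ → ℝ) := ⋃ d, NOT.Aset τ σ d with hVdef
  set N1 : Set (ℕ → ℝ) := {x | ∀ s, ¬ OccursAt σ x s} with hN1def
  set N2 : Set (ℕ → ℝ) := {x | ∀ s, ¬ OccursAt τ x s} with hN2def
  have hN1 : μ N1 = 0 := NOT.noOcc_null hμ hk1 σ
  have hN2 : μ N2 = 0 := NOT.noOcc_null hμ hk1 τ
  have hdisjA : ∀ (σ' τ' : Equiv.Perm (Fin k)) (d d' : ℕ), d < d' → ∀ x,
      x ∈ NOT.Aset σ' τ' d → x ∈ NOT.Aset σ' τ' d' → False := by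
    intro σ' τ' d d' h x h1 h2
    exact (((NOT.mem_Aset_iff σ' τ' d' x).mp h2).2 d h).1 ((NOT.mem_Aset_iff σ' τ' d x).mp h1).1
  have hdisjU : Pairwise (Function.onFun Disjoint (fun d => NOT.Aset σ τ d)) := by
    intro d d' hdd
    rw [Function.onFun, Set.disjoint_left]
    intro x h1 h2
    rcases lt_or_gt_of_ne hdd with h | h
    · exact hdisjA σ τ d d' h x h1 h2
    · exact hdisjA σ τ d' d h x h2 h1
  have hdisjV : Pairwise (Function.onFun Disjoint (fun d => NOT.Aset τ σ d)) := by
    intro d d' hdd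
    rw [Function.onFun, Set.disjoint_left]
    intro x h1 h2
    rcases lt_or_gt_of_ne hdd with h | h
    · exact hdisjA τ σ d d' h x h1 h2
    · exact hdisjA τ σ d' d h x h2 h1
  have hU : μ U = ∑' d, μ (NOT.Aset σ τ d) :=
    measure_iUnion hdisjU (fun d => NOT.measurableSet_Aset σ τ d)
  have hV : μ V = ∑' d, μ (NOT.Aset τ σ d) :=
    measure_iUnion hdisjV (fun d => NOT.measurableSet_Aset τ σ d)
  have hUV : μ U = μ V := by
    rw [hU, hV]
    exact tsum_congr fun d => NOT.measure_Aset_eq hμ σ τ j d hj1 hjk hpre hov1 hov2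
  have hdisjUV : Disjoint U V := by
    rw [Set.disjoint_left]
    intro x hxU hxV
    obtain ⟨d, hd⟩ := Set.mem_iUnion.mp hxU
    obtain ⟨d', hd'⟩ := Set.mem_iUnion.mp hxV
    have hd1 := (NOT.mem_Aset_iff σ τ d x).mp hd
    have hd2 := (NOT.mem_Aset_iff τ σ d' x).mp hd'
    rcases lt_trichotomy d d' with h | h | h
    · exact (hd2.2 d h).2 hd1.1
    · subst h
      exact hne (NOT.occ_unique σ τ x d hd1.1 hd2.1)
    · exact (hd1.2 d' h).2 hd2.1
  have hcover : Set.univ ⊆ U ∪ V ∪ N1 ∪ N2 := by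
    intro x _
    simp only [Set.mem_union]
    by_cases h1 : ∀ s, ¬ OccursAt σ x s
    · exact Or.inl (Or.inr h1)
    by_cases h2 : ∀ s, ¬ OccursAt τ x s
    · exact Or.inr h2
    push_neg at h1 h2
    obtain ⟨s1, hs1⟩ := h1
    have hneS : {s | OccursAt σ x s ∨ OccursAt τ x s}.Nonempty := ⟨s1, Or.inl hs1⟩
    have hmin := Nat.sInf_mem hneS
    have hbelow : ∀ p, p < sInf {s | OccursAt σ x s ∨ OccursAt τ x s} →
        ¬ OccursAt σ x p ∧ ¬ OccursAt τ x p := by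
      intro p hp
      have hnm := Nat.notMem_of_lt_sInf hp
      exact ⟨fun h => hnm (Or.inl h), fun h => hnm (Or.inr h)⟩
    rcases hmin with h | h
    · exact Or.inl (Or.inl (Or.inl (Set.mem_iUnion.mpr
        ⟨_, (NOT.mem_Aset_iff σ τ _ x).mpr ⟨h, hbelow⟩⟩)))
    · exact Or.inl (Or.inl (Or.inr (Set.mem_iUnion.mpr
        ⟨_, (NOT.mem_Aset_iff τ σ _ x).mpr
          ⟨h, fun p hp => ⟨(hbelow p hp).2, (hbelow p hp).1⟩⟩⟩)))
  have hVmeas : MeasurableSet V := MeasurableSet.iUnion (fun d => NOT.measurableSet_Aset τ σ d)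
  have hone : μ (U ∪ V) = 1 := by
    refine le_antisymm prob_le_one ?_
    calc (1 : ENNReal) = μ Set.univ := measure_univ.symm
      _ ≤ μ (U ∪ V ∪ N1 ∪ N2) := measure_mono hcover
      _ ≤ μ (U ∪ V ∪ N1) + μ N2 := measure_union_le _ _
      _ ≤ (μ (U ∪ V) + μ N1) + μ N2 := add_le_add_left (measure_union_le _ _) _
      _ = μ (U ∪ V) := by rw [hN1, hN2, add_zero, add_zero]
  have hsum : μ U + μ V = 1 := by rw [← measure_union hdisjUV hVmeas, hone]
  have h2U : 2 * μ U = 1 := by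
    rw [← hUV] at hsum
    rw [two_mul]
    exact hsum
  have hhalf : μ U = 1 / 2 :=
    (ENNReal.eq_div_iff (by norm_num) (by norm_num)).mpr h2U
  have hsubS : S ⊆ U ∪ N1 ∪ N2 := by
    intro x hx
    simp only [Set.mem_union]
    by_cases h1 : ∀ s, ¬ OccursAt σ x s
    · exact Or.inl (Or.inr h1)
    by_cases h2 : ∀ s, ¬ OccursAt τ x s
    · exact Or.inr h2
    obtain ⟨d, hd⟩ := NOT.mem_Aset_of_lt σ τ x h1 h2 hx
    exact Or.inl (Or.inl (Set.mem_iUnion.mpr ⟨d, hd⟩))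
  have hsubU : U ⊆ S ∪ N2 := by
    intro x hx
    simp only [Set.mem_union]
    by_cases h2 : ∀ s, ¬ OccursAt τ x s
    · exact Or.inr h2
    · obtain ⟨d, hd⟩ := Set.mem_iUnion.mp hx
      exact Or.inl (NOT.lt_of_mem_Aset σ τ hne d x hd h2)
  have hfinal : μ S = μ U := by
    refine le_antisymm ?_ ?_
    · calc μ S ≤ μ (U ∪ N1 ∪ N2) := measure_mono hsubS
        _ ≤ μ (U ∪ N1) + μ N2 := measure_union_le _ _
        _ ≤ (μ U + μ N1) + μ N2 := add_le_add_left (measure_union_le _ _) _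
        _ = μ U := by rw [hN1, hN2, add_zero, add_zero]
    · calc μ U ≤ μ (S ∪ N2) := measure_mono hsubU
        _ ≤ μ S + μ N2 := measure_union_le _ _
        _ = μ S := by rw [hN2, add_zero]
  rw [hfinal, hhalf]

end
end

section
/- Let k ≥ 4 and 2 ≤ i < i' ≤ k−1. For m ∈ {i, i'}, let ρ^{(m)} ∈ S_k denote the permutation 12⋯(m−1)(m+1)⋯km, i.e., ρ^{(m)}_a = a for 1 ≤ a ≤ m−1, ρ^{(m)}_a = a+1 for m ≤ a ≤ k−1, and ρ^{(m)}_k = m. Then μ(T_{ρ^{(i)}} < T_{ρ^{(i')}}) = 1/2. -/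
open MeasureTheory ProbabilityTheory Real

noncomputable section

namespace RhoTie

/-- value pattern -/
def fval (k m a : ℕ) : ℕ := if a < m - 1 then a else if a < k - 1 then a + 1 else m - 1

def IsPat {k : ℕ} (m : ℕ) (σ : Equiv.Perm (Fin k)) : Prop :=
  ∀ a : Fin k, (σ a : ℕ) = fval k m a

variable {k : ℕ} {σ τ : Equiv.Perm (Fin k)} {x : ℕ → ℝ} {p m m' : ℕ}

lemma occ_iff (hσ : IsPat m σ) (x : ℕ → ℝ) (p : ℕ) :
    OccursAt σ x p ↔ ∀ a b : Fin k, (x (p + a) < x (p + b) ↔ fval k m a < fval k m b) := by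
  unfold OccursAt
  constructor
  · intro h a b; rw [h a b, Fin.lt_def, hσ, hσ]
  · intro h a b; rw [h a b, Fin.lt_def, hσ, hσ]

lemma occ_run (hσ : IsPat m σ) (h : OccursAt σ x p) {a b : ℕ}
    (hab : a < b) (hb : b < k - 1) : x (p + a) < x (p + b) := by
  have hk : b < k := by omega
  have := ((occ_iff hσ x p).1 h ⟨a, by omega⟩ ⟨b, hk⟩).2
  simp only [fval] at this ⊢
  apply this
  split_ifs <;> omega

lemma occ_last_descent (hσ : IsPat m σ) (hm : 1 ≤ m) (hmk : m ≤ k - 1) (hk : 2 ≤ k)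
    (h : OccursAt σ x p) : x (p + (k - 1)) < x (p + (k - 2)) := by
  have := ((occ_iff hσ x p).1 h ⟨k - 1, by omega⟩ ⟨k - 2, by omega⟩).2
  simp only [fval] at this
  apply this
  split_ifs <;> omega

lemma occ_unique (h1 : OccursAt σ x p) (h2 : OccursAt τ x p) : σ = τ := by
  have key : ∀ a b : Fin k, σ a < σ b ↔ τ a < τ b := fun a b => (h1 a b).symm.trans (h2 a b)
  have hv : StrictMono fun c => σ (τ.symm c) := by
    intro c d hcd
    exact (key (τ.symm c) (τ.symm d)).2 (by simpa using hcd)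
  have hrange : Set.range (fun c => σ (τ.symm c)) = Set.range (id : Fin k → Fin k) := by
    rw [Set.range_id]
    exact (τ.symm.trans σ).surjective.range_eq
  haveI : WellFoundedLT (Fin k) := inferInstance
  have hid := (StrictMono.range_inj (β := Fin k) (γ := Fin k) hv (strictMono_id : StrictMono (id : Fin k → Fin k))).1 hrange
  ext a
  have h2 := congrFun hid (τ a)
  simp only [Equiv.symm_apply_apply, id_eq] at h2
  exact congrArg Fin.val h2

lemma pat_zero (hσ : IsPat m σ) (hm : 2 ≤ m) (hk : 0 < k) : σ ⟨0, hk⟩ = ⟨0, hk⟩ := by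
  have := hσ ⟨0, hk⟩
  simp only [fval] at this
  rw [if_pos (by omega)] at this
  exact Fin.ext this

end RhoTie

namespace RhoTie2
open RhoTie

variable {k : ℕ}

def blockPerm (p : ℕ) {k : ℕ} (d : Equiv.Perm (Fin k)) : Equiv.Perm ℕ where
  toFun n := if h : p ≤ n ∧ n < p + k then p + (d ⟨n - p, by omega⟩ : ℕ) else n
  invFun n := if h : p ≤ n ∧ n < p + k then p + (d.symm ⟨n - p, by omega⟩ : ℕ) else n
  left_inv n := by
    dsimp only
    by_cases h : p ≤ n ∧ n < p + k
    · have hlt : n - p < k := by omega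
      rw [dif_pos h]
      have h2 : p ≤ p + ((d ⟨n - p, hlt⟩ : Fin k) : ℕ) ∧
          p + ((d ⟨n - p, hlt⟩ : Fin k) : ℕ) < p + k :=
        ⟨Nat.le_add_right _ _, by have := (d ⟨n - p, hlt⟩).isLt; omega⟩
      rw [dif_pos h2]
      simp only [Nat.add_sub_cancel_left, Fin.eta, Equiv.symm_apply_apply]
      omega
    · rw [dif_neg h, dif_neg h]
  right_inv n := by
    dsimp only
    by_cases h : p ≤ n ∧ n < p + k
    · have hlt : n - p < k := by omega
      rw [dif_pos h]
      have h2 : p ≤ p + ((d.symm ⟨n - p, hlt⟩ : Fin k) : ℕ) ∧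
          p + ((d.symm ⟨n - p, hlt⟩ : Fin k) : ℕ) < p + k :=
        ⟨Nat.le_add_right _ _, by have := (d.symm ⟨n - p, hlt⟩).isLt; omega⟩
      rw [dif_pos h2]
      simp only [Nat.add_sub_cancel_left, Fin.eta, Equiv.apply_symm_apply]
      omega
    · rw [dif_neg h, dif_neg h]

lemma blockPerm_of_lt {p n : ℕ} (d : Equiv.Perm (Fin k)) (hn : n < p) :
    blockPerm p d n = n := dif_neg (by omega)

lemma blockPerm_of_ge {p n : ℕ} (d : Equiv.Perm (Fin k)) (hn : p + k ≤ n) :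
    blockPerm p d n = n := dif_neg (by omega)

lemma blockPerm_add {p : ℕ} (d : Equiv.Perm (Fin k)) (a : Fin k) :
    blockPerm p d (p + a) = p + d a := by
  have h : p ≤ p + (a : ℕ) ∧ p + (a : ℕ) < p + k := ⟨Nat.le_add_right _ _, by have := a.isLt; omega⟩
  show dite _ _ _ = _
  rw [dif_pos h]
  simp only [Nat.add_sub_cancel_left, Fin.eta]

lemma blockPerm_symm {p : ℕ} (d : Equiv.Perm (Fin k)) :
    blockPerm p d.symm = (blockPerm p d).symm := Equiv.ext fun _ => rfl

def swapMap (p : ℕ) {k : ℕ} (d : Equiv.Perm (Fin k)) (x : ℕ → ℝ) : ℕ → ℝ :=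
  fun n => x (blockPerm p d n)

lemma swapMap_swapMap {p : ℕ} (d : Equiv.Perm (Fin k)) (x : ℕ → ℝ) :
    swapMap p d.symm (swapMap p d x) = x := by
  funext n
  show x (blockPerm p d (blockPerm p d.symm n)) = x n
  rw [blockPerm_symm, Equiv.apply_symm_apply]

lemma occ_congr {σ : Equiv.Perm (Fin k)} {x y : ℕ → ℝ} {q : ℕ}
    (h : ∀ a : Fin k, y (q + a) = x (q + a)) : OccursAt σ y q ↔ OccursAt σ x q := by
  constructor <;> intro H a b
  · rw [← h a, ← h b]; exact H a b
  · rw [h a, h b]; exact H a b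

variable {σ τ : Equiv.Perm (Fin k)} {m m' : ℕ}

lemma core (hσ : IsPat m σ) (hτ : IsPat m' τ) (hm : 2 ≤ m) (hmk : m ≤ k - 1)
    (hm' : 2 ≤ m') (hm'k : m' ≤ k - 1) (hk : 2 ≤ k) (hστ : σ ≠ τ)
    (x : ℕ → ℝ) (t : ℕ) (ht : k ≤ t)
    (hocc : OccursAt σ x (t - k))
    (hbefσ : ∀ j, k ≤ j → j < t → ¬ OccursAt σ x (j - k))
    (hbefτ : ∀ j, k ≤ j → j ≤ t → ¬ OccursAt τ x (j - k)) :
    OccursAt τ (swapMap (t - k) (τ.trans σ.symm) x) (t - k) ∧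
    (∀ j, k ≤ j → j < t → ¬ OccursAt τ (swapMap (t - k) (τ.trans σ.symm) x) (j - k)) ∧
    (∀ j, k ≤ j → j ≤ t → ¬ OccursAt σ (swapMap (t - k) (τ.trans σ.symm) x) (j - k)) := by
  set p := t - k with hp
  have hpk : p + k = t := by omega
  set d := τ.trans σ.symm with hd
  set y := swapMap p d x with hy
  have V1 : ∀ a : Fin k, y (p + a) = x (p + (d a : ℕ)) := by
    intro a
    show x (blockPerm p d (p + a)) = _
    rw [blockPerm_add]
  have occ1 : OccursAt τ y p := by
    intro a b
    rw [V1 a, V1 b]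
    have := hocc (d a) (d b)
    simp only [hd, Equiv.trans_apply, Equiv.apply_symm_apply] at this
    exact this
  -- window values of y agree with x below p (inclusive)
  have hy_lt : ∀ n, n < p → y n = x n := fun n hn => by
    show x (blockPerm p d n) = x n; rw [blockPerm_of_lt _ hn]
  have hy_p : y p = x p := by
    have hk0 : 0 < k := by omega
    have h0 : d ⟨0, hk0⟩ = ⟨0, hk0⟩ := by
      have hτ0 := pat_zero hτ hm' hk0
      have hσ0 := pat_zero hσ hm hk0
      simp only [hd, Equiv.trans_apply, hτ0]
      exact (Equiv.symm_apply_eq σ).2 hσ0.symm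
    have := V1 ⟨0, hk0⟩
    simpa [h0] using this
  -- non-occurrence in y for any pattern with parameters, for windows j in [k, t]
  have main : ∀ j, k ≤ j → j ≤ t →
      (j < t → ¬ OccursAt τ y (j - k)) ∧ (¬ OccursAt σ y (j - k)) := by
    intro j hkj hjt
    have hcases : j ≤ p ∨ j = p + 1 ∨ (p + 2 ≤ j ∧ j ≤ p + k - 1) ∨ j = p + k := by omega
    rcases hcases with hc | hc | hc | hc
    · -- window unchanged, all positions < p
      have hw : ∀ a : Fin k, y (j - k + a) = x (j - k + a) := by
        intro a
        apply hy_lt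
        have := a.isLt; omega
      rw [occ_congr hw, occ_congr hw]
      have hjt' : j < t := by omega
      exact ⟨fun _ => hbefτ j hkj (le_of_lt hjt'), hbefσ j hkj hjt'⟩
    · -- window unchanged, positions ≤ p
      have hw : ∀ a : Fin k, y (j - k + a) = x (j - k + a) := by
        intro a
        have ha := a.isLt
        rcases Nat.lt_or_ge (j - k + (a : ℕ)) p with h | h
        · exact hy_lt _ h
        · have : j - k + (a : ℕ) = p := by omega
          rw [this]; exact hy_p
      rw [occ_congr hw, occ_congr hw]
      have hjt' : j < t := by omega
      exact ⟨fun _ => hbefτ j hkj (le_of_lt hjt'), hbefσ j hkj hjt'⟩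
    · -- middle case: run ascent vs needed descent
      have hasc : y (j - 2) < y (j - 1) := by
        have := occ_run hτ occ1 (a := j - 2 - p) (b := j - 1 - p) (by omega) (by omega)
        have e1 : p + (j - 2 - p) = j - 2 := by omega
        have e2 : p + (j - 1 - p) = j - 1 := by omega
        rwa [e1, e2] at this
      constructor
      · intro _ hocc'
        have := occ_last_descent hτ (by omega) hm'k hk hocc'
        have e1 : j - k + (k - 1) = j - 1 := by omega
        have e2 : j - k + (k - 2) = j - 2 := by omega
        rw [e1, e2] at this
        exact absurd hasc (not_lt.2 (le_of_lt this))
      · intro hocc'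
        have := occ_last_descent hσ (by omega) hmk hk hocc'
        have e1 : j - k + (k - 1) = j - 1 := by omega
        have e2 : j - k + (k - 2) = j - 2 := by omega
        rw [e1, e2] at this
        exact absurd hasc (not_lt.2 (le_of_lt this))
    · -- j = t
      refine ⟨fun hlt => absurd hc (by omega), ?_⟩
      intro hocc'
      have : j - k = p := by omega
      rw [this] at hocc'
      exact hστ (occ_unique hocc' occ1)
  refine ⟨occ1, fun j h1 h2 => (main j h1 (le_of_lt h2)).1 h2, fun j h1 h2 => (main j h1 h2).2⟩

end RhoTie2

namespace RhoTie3
open RhoTie RhoTie2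

variable {k : ℕ} {σ τ : Equiv.Perm (Fin k)} {m m' : ℕ}

def Ehit (σ τ : Equiv.Perm (Fin k)) (t : ℕ) : Set (ℕ → ℝ) :=
  {x | (∀ N, ∃ q, N ≤ q ∧ OccursAt σ x q) ∧ (∀ N, ∃ q, N ≤ q ∧ OccursAt τ x q) ∧
      hitTime σ x = t ∧ t < hitTime τ x}

lemma hitTime_def (σ : Equiv.Perm (Fin k)) (x : ℕ → ℝ) :
    hitTime σ x = sInf {j | k ≤ j ∧ OccursAt σ x (j - k)} := rfl

lemma mem_Ehit_map (hσ : IsPat m σ) (hτ : IsPat m' τ) (hm : 2 ≤ m) (hmk : m ≤ k - 1)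
    (hm' : 2 ≤ m') (hm'k : m' ≤ k - 1) (hk : 2 ≤ k) (hστ : σ ≠ τ) {t : ℕ} {x : ℕ → ℝ}
    (hx : x ∈ Ehit σ τ t) : swapMap (t - k) (τ.trans σ.symm) x ∈ Ehit τ σ t := by
  obtain ⟨htailσ, htailτ, hhit, hlt⟩ := hx
  have hSσne : Set.Nonempty {j | k ≤ j ∧ OccursAt σ x (j - k)} := by
    obtain ⟨q, _, hq⟩ := htailσ 0
    exact ⟨q + k, by omega, by simpa using hq⟩
  have hmem : t ∈ {j | k ≤ j ∧ OccursAt σ x (j - k)} := by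
    rw [← hhit, hitTime_def]; exact Nat.sInf_mem hSσne
  obtain ⟨ht, hocc⟩ := hmem
  have hbefσ : ∀ j, k ≤ j → j < t → ¬ OccursAt σ x (j - k) := by
    intro j h1 h2 h3
    have : hitTime σ x ≤ j := Nat.sInf_le ⟨h1, h3⟩
    omega
  have hbefτ : ∀ j, k ≤ j → j ≤ t → ¬ OccursAt τ x (j - k) := by
    intro j h1 h2 h3
    have : hitTime τ x ≤ j := Nat.sInf_le ⟨h1, h3⟩
    omega
  obtain ⟨hocc1, hno_τ, hno_σ⟩ := core hσ hτ hm hmk hm' hm'k hk hστ x t ht hocc hbefσ hbefτ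
  set p := t - k with hp
  set y := swapMap p (τ.trans σ.symm) x with hy
  have hytail : ∀ n, t ≤ n → y n = x n := by
    intro n hn
    show x (blockPerm p (τ.trans σ.symm) n) = x n
    rw [blockPerm_of_ge]
    omega
  have hoccy : ∀ (ξ : Equiv.Perm (Fin k)) (q : ℕ), t ≤ q → OccursAt ξ x q → OccursAt ξ y q := by
    intro ξ q hq hocc'
    rw [occ_congr (fun a => hytail (q + a) (by omega))]
    exact hocc'
  refine ⟨?_, ?_, ?_, ?_⟩
  · intro N
    obtain ⟨q, hq1, hq2⟩ := htailτ (max N t)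
    exact ⟨q, le_trans (le_max_left _ _) hq1, hoccy τ q (le_trans (le_max_right _ _) hq1) hq2⟩
  · intro N
    obtain ⟨q, hq1, hq2⟩ := htailσ (max N t)
    exact ⟨q, le_trans (le_max_left _ _) hq1, hoccy σ q (le_trans (le_max_right _ _) hq1) hq2⟩
  · have htmem : t ∈ {j | k ≤ j ∧ OccursAt τ y (j - k)} := ⟨ht, hocc1⟩
    rw [hitTime_def]
    refine le_antisymm (Nat.sInf_le htmem) ?_
    have hne : Set.Nonempty {j | k ≤ j ∧ OccursAt τ y (j - k)} := ⟨t, htmem⟩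
    have hmem' := Nat.sInf_mem hne
    by_contra hcon
    push_neg at hcon
    exact hno_τ _ hmem'.1 hcon hmem'.2
  · have hne : Set.Nonempty {j | k ≤ j ∧ OccursAt σ y (j - k)} := by
      obtain ⟨q, hq1, hq2⟩ := htailσ t
      exact ⟨q + k, by omega, by simpa using hoccy σ q hq1 hq2⟩
    rw [hitTime_def]
    have hmem' := Nat.sInf_mem hne
    by_contra hcon
    push_neg at hcon
    exact hno_σ _ hmem'.1 hcon hmem'.2

lemma preimage_Ehit (hσ : IsPat m σ) (hτ : IsPat m' τ) (hm : 2 ≤ m) (hmk : m ≤ k - 1)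
    (hm' : 2 ≤ m') (hm'k : m' ≤ k - 1) (hk : 2 ≤ k) (hστ : σ ≠ τ) (t : ℕ) :
    (fun x => swapMap (t - k) (τ.trans σ.symm) x) ⁻¹' (Ehit τ σ t) = Ehit σ τ t := by
  have hdd : σ.trans τ.symm = (τ.trans σ.symm).symm := by
    ext a; simp
  ext x
  simp only [Set.mem_preimage]
  constructor
  · intro h
    have := mem_Ehit_map hτ hσ hm' hm'k hm hmk hk (Ne.symm hστ) h
    rw [hdd, swapMap_swapMap] at this
    exact this
  · intro h
    exact mem_Ehit_map hσ hτ hm hmk hm' hm'k hk hστ h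

end RhoTie3

namespace RhoTie4
open RhoTie RhoTie2 RhoTie3

variable {k : ℕ} {σ τ : Equiv.Perm (Fin k)}

lemma meas_iff_lt {α : Type*} [MeasurableSpace α] {f g : α → ℝ} (hf : Measurable f)
    (hg : Measurable g) (c : Prop) : MeasurableSet {x | f x < g x ↔ c} := by
  by_cases hc : c
  · have : {x | f x < g x ↔ c} = {x | f x < g x} := by ext z; simp [hc]
    rw [this]; exact measurableSet_lt hf hg
  · have : {x | f x < g x ↔ c} = {x | f x < g x}ᶜ := by ext z; simp [hc]
    rw [this]; exact (measurableSet_lt hf hg).compl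

lemma meas_occ (σ : Equiv.Perm (Fin k)) (q : ℕ) : MeasurableSet {x : ℕ → ℝ | OccursAt σ x q} := by
  have : {x : ℕ → ℝ | OccursAt σ x q} =
      ⋂ (a : Fin k) (b : Fin k), {x : ℕ → ℝ | x (q + a) < x (q + b) ↔ σ a < σ b} := by
    ext z; simp [OccursAt, Set.mem_iInter]
  rw [this]
  exact MeasurableSet.iInter fun a => MeasurableSet.iInter fun b =>
    meas_iff_lt (measurable_pi_apply _) (measurable_pi_apply _) _

def winSet (σ : Equiv.Perm (Fin k)) : Set (Fin k → ℝ) :=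
  {z | ∀ a b : Fin k, z a < z b ↔ σ a < σ b}

lemma meas_winSet (σ : Equiv.Perm (Fin k)) : MeasurableSet (winSet σ) := by
  have : winSet σ = ⋂ (a : Fin k) (b : Fin k), {z : Fin k → ℝ | z a < z b ↔ σ a < σ b} := by
    ext z; simp [winSet, Set.mem_iInter]
  rw [this]
  exact MeasurableSet.iInter fun a => MeasurableSet.iInter fun b =>
    meas_iff_lt (measurable_pi_apply _) (measurable_pi_apply _) _

lemma nat_sInf_eq {s : Set ℕ} {n : ℕ} :
    sInf s = n ↔ ((n ∈ s ∧ ∀ m, m < n → m ∉ s) ∨ (n = 0 ∧ ∀ m, m ∉ s)) := by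
  constructor
  · intro h
    by_cases hs : s.Nonempty
    · left
      refine ⟨h ▸ Nat.sInf_mem hs, fun m hm hmem => ?_⟩
      have := Nat.sInf_le hmem
      omega
    · right
      have : s = ∅ := Set.not_nonempty_iff_eq_empty.1 hs
      subst this
      simp only [Nat.sInf_empty] at h
      exact ⟨h.symm, fun m => id⟩
  · rintro (⟨h1, h2⟩ | ⟨h1, h2⟩)
    · refine le_antisymm (Nat.sInf_le h1) ?_
      by_contra hcon
      push_neg at hcon
      have := Nat.sInf_mem ⟨n, h1⟩
      exact h2 _ hcon this
    · have : s = ∅ := Set.eq_empty_iff_forall_notMem.2 h2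
      subst this
      simp [Nat.sInf_empty, h1]

def Mset (σ : Equiv.Perm (Fin k)) (j : ℕ) : Set (ℕ → ℝ) := {x | k ≤ j ∧ OccursAt σ x (j - k)}

lemma meas_Mset (σ : Equiv.Perm (Fin k)) (j : ℕ) : MeasurableSet (Mset σ j) := by
  by_cases h : k ≤ j
  · have : Mset σ j = {x | OccursAt σ x (j - k)} := by ext z; simp [Mset, h]
    rw [this]; exact meas_occ σ _
  · have : Mset σ j = ∅ := by ext z; simp [Mset, h]
    rw [this]; exact MeasurableSet.empty

lemma meas_hit_eq (hk : 1 ≤ k) (σ : Equiv.Perm (Fin k)) (t : ℕ) :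
    MeasurableSet {x : ℕ → ℝ | hitTime σ x = t} := by
  by_cases ht : t = 0
  · subst ht
    have : {x : ℕ → ℝ | hitTime σ x = 0} = ⋂ j, (Mset σ j)ᶜ := by
      ext z
      rw [Set.mem_setOf_eq, hitTime_def, nat_sInf_eq]
      simp only [Set.mem_iInter, Set.mem_compl_iff]
      constructor
      · rintro (⟨h1, _⟩ | ⟨_, h2⟩)
        · exact absurd h1.1 (by omega)
        · exact h2
      · intro h
        exact Or.inr ⟨by trivial, h⟩
    rw [this]
    exact MeasurableSet.iInter fun j => (meas_Mset σ j).compl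
  · have : {x : ℕ → ℝ | hitTime σ x = t} =
        Mset σ t ∩ ⋂ (j : ℕ) (_ : j < t), (Mset σ j)ᶜ := by
      ext z
      rw [Set.mem_setOf_eq, hitTime_def, nat_sInf_eq]
      simp only [Set.mem_inter_iff, Set.mem_iInter, Set.mem_compl_iff]
      constructor
      · rintro (⟨h1, h2⟩ | ⟨h1, _⟩)
        · exact ⟨h1, fun j hj => h2 j hj⟩
        · exact absurd h1 ht
      · rintro ⟨h1, h2⟩
        exact Or.inl ⟨h1, fun m hm => h2 m hm⟩
    rw [this]
    exact (meas_Mset σ t).inter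
      (MeasurableSet.iInter fun j => MeasurableSet.iInter fun _ => (meas_Mset σ j).compl)

lemma meas_hit_gt (hk : 1 ≤ k) (σ : Equiv.Perm (Fin k)) (t : ℕ) :
    MeasurableSet {x : ℕ → ℝ | t < hitTime σ x} := by
  have : {x : ℕ → ℝ | t < hitTime σ x} =
      ⋃ (s : ℕ) (_ : t < s), {x : ℕ → ℝ | hitTime σ x = s} := by
    ext z
    simp only [Set.mem_setOf_eq, Set.mem_iUnion]
    exact ⟨fun h => ⟨hitTime σ z, h, rfl⟩, fun ⟨s, hs, he⟩ => he ▸ hs⟩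
  rw [this]
  exact MeasurableSet.iUnion fun s => MeasurableSet.iUnion fun _ => meas_hit_eq hk σ s

lemma meas_tail (σ : Equiv.Perm (Fin k)) :
    MeasurableSet {x : ℕ → ℝ | ∀ N, ∃ q, N ≤ q ∧ OccursAt σ x q} := by
  have : {x : ℕ → ℝ | ∀ N, ∃ q, N ≤ q ∧ OccursAt σ x q} =
      ⋂ (N : ℕ), ⋃ (q : ℕ) (_ : N ≤ q), {x : ℕ → ℝ | OccursAt σ x q} := by
    ext z
    simp only [Set.mem_setOf_eq, Set.mem_iInter, Set.mem_iUnion]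
    constructor
    · intro h N; obtain ⟨q, h1, h2⟩ := h N; exact ⟨q, h1, h2⟩
    · intro h N; obtain ⟨q, h1, h2⟩ := h N; exact ⟨q, h1, h2⟩
  rw [this]
  exact MeasurableSet.iInter fun N => MeasurableSet.iUnion fun q =>
    MeasurableSet.iUnion fun _ => meas_occ σ q

lemma meas_Ehit (hk : 1 ≤ k) (σ τ : Equiv.Perm (Fin k)) (t : ℕ) :
    MeasurableSet (Ehit σ τ t) := by
  have : Ehit σ τ t = {x : ℕ → ℝ | ∀ N, ∃ q, N ≤ q ∧ OccursAt σ x q} ∩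
      ({x : ℕ → ℝ | ∀ N, ∃ q, N ≤ q ∧ OccursAt τ x q} ∩
      ({x : ℕ → ℝ | hitTime σ x = t} ∩ {x : ℕ → ℝ | t < hitTime τ x})) := by
    ext z; simp [Ehit, Set.mem_inter_iff, and_assoc]
  rw [this]
  exact (meas_tail σ).inter ((meas_tail τ).inter ((meas_hit_eq hk σ t).inter (meas_hit_gt hk τ t)))

lemma meas_W (hk : 1 ≤ k) (σ τ : Equiv.Perm (Fin k)) :
    MeasurableSet {x : ℕ → ℝ | hitTime σ x < hitTime τ x} := by
  have : {x : ℕ → ℝ | hitTime σ x < hitTime τ x} =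
      ⋃ (t : ℕ), ({x : ℕ → ℝ | hitTime σ x = t} ∩ {x : ℕ → ℝ | t < hitTime τ x}) := by
    ext z
    simp only [Set.mem_setOf_eq, Set.mem_iUnion, Set.mem_inter_iff]
    exact ⟨fun h => ⟨hitTime σ z, rfl, h⟩, fun ⟨s, h1, h2⟩ => h1 ▸ h2⟩
  rw [this]
  exact MeasurableSet.iUnion fun t => (meas_hit_eq hk σ t).inter (meas_hit_gt hk τ t)

end RhoTie4

namespace RhoTie5
open RhoTie RhoTie2 RhoTie3 RhoTie4

def unif : Measure ℝ := (volume : Measure ℝ).restrict (Set.Icc 0 1)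

instance : IsProbabilityMeasure unif := by
  constructor
  rw [unif, Measure.restrict_apply MeasurableSet.univ, Set.univ_inter, Real.volume_Icc]
  norm_num

lemma pi_map_eval {n : ℕ} {J : Type*} [Fintype J] (f : J → Fin n) (hf : Function.Injective f) :
    (Measure.pi fun _ : Fin n => unif).map (fun y (j : J) => y (f j)) =
      Measure.pi (fun _ : J => unif) := by
  symm
  apply Measure.pi_eq
  intro s hs
  have hF : Measurable fun (y : Fin n → ℝ) (j : J) => y (f j) :=
    measurable_pi_lambda _ fun j => measurable_pi_apply _
  rw [Measure.map_apply hF (MeasurableSet.univ_pi hs)]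
  set s' : Fin n → Set ℝ := fun j => ⋂ (i : J) (_ : f i = j), s i with hs'
  have hpre : (fun y (j : J) => y (f j)) ⁻¹' (Set.pi Set.univ s) = Set.pi Set.univ s' := by
    ext y
    simp only [Set.mem_preimage, Set.mem_pi, Set.mem_univ, forall_true_left, hs',
      Set.mem_iInter]
    constructor
    · intro h j i hij; subst hij; exact h i
    · intro h i; exact h (f i) i rfl
  have hs'm : ∀ j, MeasurableSet (s' j) :=
    fun j => MeasurableSet.iInter fun i => MeasurableSet.iInter fun _ => hs i
  rw [hpre, Measure.pi_pi]
  have h1 : ∀ i : J, s' (f i) = s i := by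
    intro i
    ext z
    simp only [hs', Set.mem_iInter]
    exact ⟨fun h => h i rfl, fun h i' hi' => (hf hi') ▸ h⟩
  have h2 : ∀ j : Fin n, j ∉ Finset.image f Finset.univ → s' j = Set.univ := by
    intro j hj
    ext z
    simp only [hs', Set.mem_iInter, Set.mem_univ, iff_true]
    intro i hi
    exact absurd (Finset.mem_image.2 ⟨i, Finset.mem_univ i, hi⟩) hj
  rw [← Finset.prod_subset (Finset.subset_univ (Finset.image f Finset.univ))
    (fun j _ hj => by rw [h2 j hj]; exact measure_univ),
    Finset.prod_image (fun i _ i' _ h => hf h)]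
  exact (Finset.prod_congr rfl fun i _ => by rw [h1 i]).symm

variable {μ : Measure (ℕ → ℝ)}

lemma map_eval (hμ : IsIIDUniform μ) (I : Finset ℕ) (g : I → ℕ) (hg : Function.Injective g) :
    μ.map (fun x (i : I) => x (g i)) = Measure.pi (fun _ : I => unif) := by
  set n : ℕ := (Finset.univ.sup fun i : I => g i) + 1 with hn
  have hgn : ∀ i : I, g i < n := by
    intro i
    have := Finset.le_sup (f := fun i : I => g i) (Finset.mem_univ i)
    omega
  have hcomp : (fun x (i : I) => x (g i)) =
      (fun (y : Fin n → ℝ) (i : I) => y ⟨g i, hgn i⟩) ∘ (fun (x : ℕ → ℝ) (j : Fin n) => x j) :=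
    rfl
  have hG : Measurable (fun (y : Fin n → ℝ) (i : I) => y ⟨g i, hgn i⟩) :=
    measurable_pi_lambda _ fun i => measurable_pi_apply _
  have hF : Measurable (fun (x : ℕ → ℝ) (j : Fin n) => x (j : ℕ)) :=
    measurable_pi_lambda _ fun j => measurable_pi_apply _
  rw [hcomp, ← Measure.map_map hG hF, hμ.2 n]
  · exact pi_map_eval (fun i : I => (⟨g i, hgn i⟩ : Fin n))
      (fun i i' h => hg (congrArg Fin.val h))

lemma map_perm (hμ : IsIIDUniform μ) (g : Equiv.Perm ℕ) :
    μ.map (fun x (n : ℕ) => x (g n)) = μ := by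
  haveI : IsProbabilityMeasure μ := hμ.1
  have hS : Measurable (fun (x : ℕ → ℝ) (n : ℕ) => x (g n)) :=
    measurable_pi_lambda _ fun n => measurable_pi_apply _
  haveI : IsProbabilityMeasure (μ.map (fun x (n : ℕ) => x (g n))) :=
    Measure.isProbabilityMeasure_map hS.aemeasurable
  refine ext_of_generate_finite (measurableCylinders (fun _ : ℕ => ℝ)) ?_ isPiSystem_measurableCylinders ?_ ?_
  · exact generateFrom_measurableCylinders.symm
  · rintro s hs
    obtain ⟨I, T, hT, rfl⟩ := (mem_measurableCylinders s).1 hs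
    have hpre : (fun (x : ℕ → ℝ) (n : ℕ) => x (g n)) ⁻¹' cylinder I T
        = (fun (x : ℕ → ℝ) (i : I) => x (g i)) ⁻¹' T := rfl
    have hcyl : cylinder I T = (fun (x : ℕ → ℝ) (i : I) => x (i : ℕ)) ⁻¹' T := rfl
    rw [Measure.map_apply hS (MeasurableSet.cylinder I hT), hpre, hcyl,
      ← Measure.map_apply (measurable_pi_lambda _ fun i => measurable_pi_apply _) hT,
      ← Measure.map_apply (measurable_pi_lambda _ fun i => measurable_pi_apply _) hT,
      map_eval hμ I (fun i => g i) (fun i i' h => Subtype.ext (g.injective h)),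
      map_eval hμ I (fun i => (i : ℕ)) Subtype.val_injective]
  · simp [measure_univ]

lemma Ehit_measure_eq {k m m' : ℕ} {σ τ : Equiv.Perm (Fin k)}
    (hμ : IsIIDUniform μ) (hσ : IsPat m σ) (hτ : IsPat m' τ)
    (hm : 2 ≤ m) (hmk : m ≤ k - 1) (hm' : 2 ≤ m') (hm'k : m' ≤ k - 1) (hk : 2 ≤ k)
    (hστ : σ ≠ τ) (t : ℕ) : μ (Ehit σ τ t) = μ (Ehit τ σ t) := by
  have hS : Measurable (fun (x : ℕ → ℝ) (n : ℕ) => x (blockPerm (t - k) (τ.trans σ.symm) n)) :=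
    measurable_pi_lambda _ fun n => measurable_pi_apply _
  have hpre := preimage_Ehit hσ hτ hm hmk hm' hm'k hk hστ t
  have : (fun x (n : ℕ) => x (blockPerm (t - k) (τ.trans σ.symm) n)) ⁻¹' Ehit τ σ t
      = Ehit σ τ t := hpre
  rw [← this, ← Measure.map_apply hS (meas_Ehit (by omega) τ σ t), map_perm hμ]

end RhoTie5

namespace RhoTie6
open RhoTie RhoTie2 RhoTie3 RhoTie4 RhoTie5

def restr (a : ℕ) : (ℕ → ℝ) → (Fin a → ℝ) := fun x i => x i

lemma measurable_restr (a : ℕ) : Measurable (restr a) :=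
  measurable_pi_lambda _ fun i => measurable_pi_apply _

def splitMap (a k : ℕ) : (Fin (a + k) → ℝ) → (Fin a → ℝ) × (Fin k → ℝ) :=
  fun y => (fun i => y (Fin.castAdd k i), fun j => y (Fin.natAdd a j))

lemma measurable_splitMap (a k : ℕ) : Measurable (splitMap a k) :=
  Measurable.prod (measurable_pi_lambda _ fun i => measurable_pi_apply _)
    (measurable_pi_lambda _ fun j => measurable_pi_apply _)

lemma measurePreserving_splitMap (a k : ℕ) :
    MeasurePreserving (splitMap a k) (Measure.pi fun _ : Fin (a + k) => unif)
      ((Measure.pi fun _ : Fin a => unif).prod (Measure.pi fun _ : Fin k => unif)) := by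
  have mp1 := (MeasureTheory.measurePreserving_piCongrLeft
    (fun _ : Fin (a + k) => unif) finSumFinEquiv).symm
    (MeasurableEquiv.piCongrLeft (fun _ => ℝ) finSumFinEquiv)
  have mp2 := MeasureTheory.measurePreserving_sumPiEquivProdPi
    (fun _ : Fin a ⊕ Fin k => unif)
  have hcomp := mp2.comp mp1
  have heq : splitMap a k = (MeasurableEquiv.sumPiEquivProdPi (fun _ : Fin a ⊕ Fin k => ℝ)) ∘
      (MeasurableEquiv.piCongrLeft (fun _ => ℝ) finSumFinEquiv).symm := by
    funext y
    apply Prod.ext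
    · funext i
      show y (Fin.castAdd k i) =
        ((Equiv.piCongrLeft (fun _ => ℝ) finSumFinEquiv).symm y) (Sum.inl i)
      rw [Equiv.piCongrLeft_symm_apply, finSumFinEquiv_apply_left]
    · funext j
      show y (Fin.natAdd a j) =
        ((Equiv.piCongrLeft (fun _ => ℝ) finSumFinEquiv).symm y) (Sum.inr j)
      rw [Equiv.piCongrLeft_symm_apply, finSumFinEquiv_apply_right]
  rw [heq]
  exact hcomp

end RhoTie6

namespace RhoTie6
open RhoTie RhoTie2 RhoTie3 RhoTie4 RhoTie5

variable {μ : Measure (ℕ → ℝ)} {k : ℕ}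

def avoid (σ : Equiv.Perm (Fin k)) : Set (Fin k → ℝ) := (winSet σ)ᶜ

lemma set_split (σ : Equiv.Perm (Fin k)) (a : ℕ) (T : Set (Fin a → ℝ)) :
    restr a ⁻¹' T ∩ {x : ℕ → ℝ | ¬ OccursAt σ x a}
      = restr (a + k) ⁻¹' (splitMap a k ⁻¹' (T ×ˢ avoid σ)) := by
  ext x
  simp only [Set.mem_inter_iff, Set.mem_preimage, Set.mem_setOf_eq, Set.mem_prod]
  have h1 : (splitMap a k (restr (a + k) x)).1 = restr a x := by
    funext i
    show x ((Fin.castAdd k i : Fin (a + k)) : ℕ) = x i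
    rw [Fin.coe_castAdd]
  have h2 : (splitMap a k (restr (a + k) x)).2 ∈ avoid σ ↔ ¬ OccursAt σ x a := by
    have : (splitMap a k (restr (a + k) x)).2 = fun j : Fin k => x (a + j) := by
      funext j
      show x ((Fin.natAdd a j : Fin (a + k)) : ℕ) = x (a + j)
      rw [Fin.coe_natAdd]
    rw [this]
    simp only [avoid, winSet, Set.mem_compl_iff, Set.mem_setOf_eq]
    exact not_congr (by rfl)
  rw [h1, h2]

lemma step (hμ : IsIIDUniform μ) (σ : Equiv.Perm (Fin k)) (a : ℕ)
    (T : Set (Fin a → ℝ)) (hT : MeasurableSet T) :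
    μ (restr a ⁻¹' T ∩ {x : ℕ → ℝ | ¬ OccursAt σ x a})
      = μ (restr a ⁻¹' T) * (Measure.pi fun _ : Fin k => unif) (avoid σ) := by
  have hmeas_avoid : MeasurableSet (avoid σ) := (meas_winSet σ).compl
  have hμa : μ.map (restr a) = Measure.pi fun _ : Fin a => unif := hμ.2 a
  have hμak : μ.map (restr (a + k)) = Measure.pi fun _ : Fin (a + k) => unif := hμ.2 (a + k)
  rw [set_split σ a T]
  rw [← Measure.map_apply (measurable_restr (a + k))
    ((measurable_splitMap a k) (hT.prod hmeas_avoid)), hμak,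
    (measurePreserving_splitMap a k).measure_preimage
      ((hT.prod hmeas_avoid).nullMeasurableSet),
    Measure.prod_prod]
  congr 1
  rw [← Measure.map_apply (measurable_restr a) hT, hμa]

lemma bound (hμ : IsIIDUniform μ) (σ : Equiv.Perm (Fin k)) (N : ℕ) (M : ℕ) :
    ∃ a, N ≤ a ∧ ∃ T : Set (Fin a → ℝ), MeasurableSet T ∧
      ({x : ℕ → ℝ | ∀ q, N ≤ q → ¬ OccursAt σ x q} ⊆ restr a ⁻¹' T) ∧
      μ (restr a ⁻¹' T) = ((Measure.pi fun _ : Fin k => unif) (avoid σ)) ^ M := by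
  haveI : IsProbabilityMeasure μ := hμ.1
  induction M with
  | zero =>
    refine ⟨N, le_rfl, Set.univ, MeasurableSet.univ, by simp, ?_⟩
    simp [measure_univ]
  | succ M ih =>
    obtain ⟨a, hNa, T, hT, hsub, hmeas⟩ := ih
    refine ⟨a + k, by omega, splitMap a k ⁻¹' (T ×ˢ avoid σ),
      (measurable_splitMap a k) (hT.prod (meas_winSet σ).compl), ?_, ?_⟩
    · rw [← set_split σ a T]
      intro x hx
      exact ⟨hsub hx, hx a hNa⟩
    · rw [← set_split σ a T, step hμ σ a T hT, hmeas, pow_succ]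

lemma winSet_lb (hk : 1 ≤ k) (σ : Equiv.Perm (Fin k)) :
    (ENNReal.ofReal (1 / (k : ℝ))) ^ k ≤ (Measure.pi fun _ : Fin k => unif) (winSet σ) := by
  have hk0 : (0 : ℝ) < k := by exact_mod_cast hk
  set box : Set (Fin k → ℝ) :=
    Set.pi Set.univ fun a : Fin k => Set.Ioo ((σ a : ℝ) / k) (((σ a : ℕ) + 1 : ℝ) / k) with hbox
  have hsub : box ⊆ winSet σ := by
    intro z hz
    intro a b
    have hza := hz a (Set.mem_univ a)
    have hzb := hz b (Set.mem_univ b)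
    simp only [Set.mem_Ioo] at hza hzb
    constructor
    · intro hlt
      by_contra hcon
      rcases Nat.lt_or_ge ((σ b : ℕ)) ((σ a : ℕ)) with h | h
      · have : ((σ b : ℕ) : ℝ) + 1 ≤ ((σ a : ℕ) : ℝ) := by exact_mod_cast h
        have hba : z b < z a := lt_of_lt_of_le hzb.2 (le_trans (by gcongr) hza.1.le)
        exact absurd hlt (not_lt.2 hba.le)
      · have : (σ a : ℕ) = (σ b : ℕ) := by
          have : ¬ ((σ a : ℕ) < (σ b : ℕ)) := fun hh => hcon (Fin.lt_def.2 hh)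
          omega
        have hab : a = b := σ.injective (Fin.ext this)
        subst hab
        exact lt_irrefl _ hlt
    · intro hlt
      have h : (σ a : ℕ) + 1 ≤ (σ b : ℕ) := Fin.lt_def.1 hlt
      have h' : ((σ a : ℕ) : ℝ) + 1 ≤ ((σ b : ℕ) : ℝ) := by exact_mod_cast h
      exact lt_of_lt_of_le hza.2 (le_trans (by gcongr) hzb.1.le)
  refine le_trans (le_of_eq ?_) (measure_mono hsub)
  rw [hbox, Measure.pi_pi]
  have hval : ∀ a : Fin k,
      unif (Set.Ioo ((σ a : ℝ) / k) (((σ a : ℕ) + 1 : ℝ) / k)) = ENNReal.ofReal (1 / (k : ℝ)) := by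
    intro a
    have hIcc : Set.Ioo ((σ a : ℝ) / k) (((σ a : ℕ) + 1 : ℝ) / k) ⊆ Set.Icc (0 : ℝ) 1 := by
      apply Set.Ioo_subset_Icc_self.trans
      apply Set.Icc_subset_Icc
      · positivity
      · rw [div_le_one hk0]
        have : ((σ a : ℕ) : ℝ) + 1 ≤ (k : ℝ) := by exact_mod_cast (σ a).isLt
        exact this
    rw [unif, Measure.restrict_apply measurableSet_Ioo,
      Set.inter_eq_self_of_subset_left hIcc, Real.volume_Ioo]
    congr 1
    field_simp
    ring
  rw [Finset.prod_congr rfl (fun a _ => hval a), Finset.prod_const, Finset.card_univ,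
    Fintype.card_fin]

lemma avoid_null (hμ : IsIIDUniform μ) (hk : 1 ≤ k) (σ : Equiv.Perm (Fin k)) (N : ℕ) :
    μ {x : ℕ → ℝ | ∀ q, N ≤ q → ¬ OccursAt σ x q} = 0 := by
  set c : ENNReal := (ENNReal.ofReal (1 / (k : ℝ))) ^ k with hc
  have hc0 : c ≠ 0 := by
    apply pow_ne_zero
    simp only [ne_eq, ENNReal.ofReal_eq_zero, not_le]
    positivity
  set r : ENNReal := (Measure.pi fun _ : Fin k => unif) (avoid σ) with hr
  have hr1 : r ≤ 1 - c := by
    rw [hr, avoid, measure_compl (meas_winSet σ) (measure_ne_top _ _), measure_univ]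
    exact tsub_le_tsub_left (winSet_lb hk σ) 1
  have hlt : (1 : ENNReal) - c < 1 := ENNReal.sub_lt_self ENNReal.one_ne_top one_ne_zero hc0
  have htend := ENNReal.tendsto_pow_atTop_nhds_zero_of_lt_one hlt
  have hle : ∀ M : ℕ, μ {x : ℕ → ℝ | ∀ q, N ≤ q → ¬ OccursAt σ x q} ≤ (1 - c) ^ M := by
    intro M
    obtain ⟨a, _, T, _, hsub, hmeas⟩ := bound hμ σ N M
    calc μ {x : ℕ → ℝ | ∀ q, N ≤ q → ¬ OccursAt σ x q} ≤ μ (restr a ⁻¹' T) := measure_mono hsub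
    _ = r ^ M := hmeas
    _ ≤ (1 - c) ^ M := pow_le_pow_left₀ (zero_le) hr1 M
  exact le_antisymm (ge_of_tendsto htend (Filter.Eventually.of_forall hle)) (zero_le)

lemma tail_compl_null (hμ : IsIIDUniform μ) (hk : 1 ≤ k) (σ : Equiv.Perm (Fin k)) :
    μ {x : ℕ → ℝ | ∀ N, ∃ q, N ≤ q ∧ OccursAt σ x q}ᶜ = 0 := by
  have : {x : ℕ → ℝ | ∀ N, ∃ q, N ≤ q ∧ OccursAt σ x q}ᶜ
      = ⋃ N : ℕ, {x : ℕ → ℝ | ∀ q, N ≤ q → ¬ OccursAt σ x q} := by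
    ext x
    simp only [Set.mem_compl_iff, Set.mem_setOf_eq, Set.mem_iUnion, not_forall, not_exists]
    constructor
    · rintro ⟨N, hN⟩
      exact ⟨N, fun q hq hocc => (hN q) ⟨hq, hocc⟩⟩
    · rintro ⟨N, hN⟩
      exact ⟨N, fun q ⟨hq, hocc⟩ => hN q hq hocc⟩
  rw [this]
  exact measure_iUnion_null fun N => avoid_null hμ hk σ N

end RhoTie6


open RhoTie RhoTie2 RhoTie3 RhoTie4 RhoTie5 RhoTie6 in
theorem rho_rho'_tie (μ : Measure (ℕ → ℝ)) (hμ : IsIIDUniform μ)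
    (k i i' : ℕ) (hk : 4 ≤ k) (hi : 2 ≤ i) (hii' : i < i') (hi' : i' ≤ k - 1)
    (ρ ρ' : Equiv.Perm (Fin k))
    (hρ : ∀ a : Fin k, (ρ a : ℕ) =
      if (a : ℕ) < i - 1 then (a : ℕ) else if (a : ℕ) < k - 1 then (a : ℕ) + 1 else i - 1)
    (hρ' : ∀ a : Fin k, (ρ' a : ℕ) =
      if (a : ℕ) < i' - 1 then (a : ℕ) else if (a : ℕ) < k - 1 then (a : ℕ) + 1 else i' - 1) :
    μ {x | hitTime ρ x < hitTime ρ' x} = 1 / 2 := by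
  haveI : IsProbabilityMeasure μ := hμ.1
  have hk1 : 1 ≤ k := by omega
  have hk2 : 2 ≤ k := by omega
  have hPatρ : IsPat i ρ := fun a => (hρ a).trans rfl
  have hPatρ' : IsPat i' ρ' := fun a => (hρ' a).trans rfl
  have hik : i ≤ k - 1 := by omega
  have hi'2 : 2 ≤ i' := by omega
  -- ρ ≠ ρ'
  have hne : ρ ≠ ρ' := by
    intro h
    have a0 : Fin k := ⟨i - 1, by omega⟩
    have e1 : (ρ ⟨i - 1, by omega⟩ : ℕ) = (i - 1) + 1 := by
      rw [hρ ⟨i - 1, by omega⟩, if_neg (lt_irrefl _), if_pos (by omega : i - 1 < k - 1)]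
    have e2 : (ρ' ⟨i - 1, by omega⟩ : ℕ) = i - 1 := by
      rw [hρ' ⟨i - 1, by omega⟩, if_pos (by omega : i - 1 < i' - 1)]
    rw [h, e2] at e1
    omega
  set W : Set (ℕ → ℝ) := {x | hitTime ρ x < hitTime ρ' x} with hW
  set W' : Set (ℕ → ℝ) := {x | hitTime ρ' x < hitTime ρ x} with hW'
  set G : Set (ℕ → ℝ) := {x : ℕ → ℝ | ∀ N, ∃ q, N ≤ q ∧ OccursAt ρ x q} ∩
      {x : ℕ → ℝ | ∀ N, ∃ q, N ≤ q ∧ OccursAt ρ' x q} with hG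
  have hGc : μ Gᶜ = 0 := by
    rw [hG, Set.compl_inter]
    exact measure_union_null (tail_compl_null hμ hk1 ρ) (tail_compl_null hμ hk1 ρ')
  have hWmeas : MeasurableSet W := meas_W hk1 ρ ρ'
  have hW'meas : MeasurableSet W' := meas_W hk1 ρ' ρ
  -- decomposition in pieces
  have hWG : W ∩ G = ⋃ t : ℕ, Ehit ρ ρ' t := by
    ext x
    simp only [Set.mem_inter_iff, Set.mem_iUnion, hW, hG, Set.mem_setOf_eq]
    constructor
    · rintro ⟨hlt, h1, h2⟩
      exact ⟨hitTime ρ x, h1, h2, rfl, hlt⟩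
    · rintro ⟨t, h1, h2, h3, h4⟩
      exact ⟨h3 ▸ h4, h1, h2⟩
  have hW'G : W' ∩ G = ⋃ t : ℕ, Ehit ρ' ρ t := by
    ext x
    simp only [Set.mem_inter_iff, Set.mem_iUnion, hW', hG, Set.mem_setOf_eq]
    constructor
    · rintro ⟨hlt, h1, h2⟩
      exact ⟨hitTime ρ' x, h2, h1, rfl, hlt⟩
    · rintro ⟨t, h1, h2, h3, h4⟩
      exact ⟨h3 ▸ h4, h2, h1⟩
  have hinterG : ∀ (S : Set (ℕ → ℝ)), μ (S ∩ G) = μ S := by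
    intro S
    refine le_antisymm (measure_mono Set.inter_subset_left) ?_
    calc μ S = μ (S ∩ G ∪ S ∩ Gᶜ) := by rw [Set.inter_union_compl]
    _ ≤ μ (S ∩ G) + μ (S ∩ Gᶜ) := measure_union_le _ _
    _ ≤ μ (S ∩ G) + 0 := by
        gcongr
        exact le_trans (measure_mono Set.inter_subset_right) (le_of_eq hGc)
    _ = μ (S ∩ G) := by rw [add_zero]
  -- pairwise disjoint
  have hdisjE : ∀ (σ τ : Equiv.Perm (Fin k)), Pairwise (Function.onFun Disjoint
      fun t => Ehit σ τ t) := by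
    intro σ τ t s hts
    rw [Function.onFun, Set.disjoint_left]
    rintro x ⟨_, _, h3, _⟩ ⟨_, _, h3', _⟩
    exact hts (h3.symm.trans h3')
  have hWsum : μ W = ∑' t : ℕ, μ (Ehit ρ ρ' t) := by
    rw [← hinterG W, hWG]
    exact measure_iUnion (hdisjE ρ ρ') (fun t => meas_Ehit hk1 ρ ρ' t)
  have hW'sum : μ W' = ∑' t : ℕ, μ (Ehit ρ' ρ t) := by
    rw [← hinterG W', hW'G]
    exact measure_iUnion (hdisjE ρ' ρ) (fun t => meas_Ehit hk1 ρ' ρ t)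
  have hWW' : μ W = μ W' := by
    rw [hWsum, hW'sum]
    exact tsum_congr fun t =>
      Ehit_measure_eq hμ hPatρ hPatρ' hi hik hi'2 hi' hk2 hne t
  -- the union has full measure
  have hdisj : Disjoint W W' := by
    rw [Set.disjoint_left]
    intro x h1 h2
    rw [hW, Set.mem_setOf_eq] at h1
    rw [hW', Set.mem_setOf_eq] at h2
    omega
  have hcov : Gᶜᶜ ⊆ W ∪ W' := by
    rw [compl_compl]
    intro x hx
    rw [hG, Set.mem_inter_iff, Set.mem_setOf_eq, Set.mem_setOf_eq] at hx
    by_contra hcon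
    simp only [Set.mem_union, hW, hW', Set.mem_setOf_eq] at hcon
    push_neg at hcon
    have heq : hitTime ρ x = hitTime ρ' x := by omega
    have hne1 : Set.Nonempty {j | k ≤ j ∧ OccursAt ρ x (j - k)} := by
      obtain ⟨q, _, hq⟩ := hx.1 0
      exact ⟨q + k, by omega, by simpa using hq⟩
    have hne2 : Set.Nonempty {j | k ≤ j ∧ OccursAt ρ' x (j - k)} := by
      obtain ⟨q, _, hq⟩ := hx.2 0
      exact ⟨q + k, by omega, by simpa using hq⟩
    have hm1 := Nat.sInf_mem hne1
    have hm2 := Nat.sInf_mem hne2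
    rw [← hitTime_def] at hm1 hm2
    rw [← heq] at hm2
    exact hne (occ_unique hm1.2 hm2.2)
  have hfull : μ (W ∪ W') = 1 := by
    rw [← prob_compl_eq_zero_iff (hWmeas.union hW'meas)]
    rw [compl_compl] at hcov
    have hsub : (W ∪ W')ᶜ ⊆ Gᶜ := fun x hx hxG => hx (hcov hxG)
    exact measure_mono_null hsub hGc
  have hadd : μ W + μ W' = 1 := by
    rw [← measure_union hdisj hW'meas, hfull]
  rw [← hWW'] at hadd
  rw [ENNReal.eq_div_iff (by norm_num : (2 : ENNReal) ≠ 0) (by norm_num : (2 : ENNReal) ≠ ⊤),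
    two_mul]
  exact hadd


end
end
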